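/- arXiv:math/0111140 — 5 statements merged into one kernel-verified Lean document; each statement's English description precedes it below -/
import Mathlib

section
/- If μ is e-regular and has length at most k, then μ⁺ (obtained by inserting an empty runner into its e-abacus with k beads) is (e+1)-regular. -/
open Finset

/-- A partition: a weakly decreasing, eventually-zero sequence of naturals.
`parts i` is the `(i+1)`-st part (0-indexed). -/
structure AbacusPartition where
  parts : ℕ → ℕ
  antitone : ∀ ⦃i j : ℕ⦄, i ≤ j → parts j ≤ parts i
  eventually_zero : ∃ N, ∀ i, N ≤ i → parts i = 0

namespace AbacusPartition

/-- The length of a partition: the number of nonzero parts. -/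
noncomputable def length (l : AbacusPartition) : ℕ :=
  sInf {N | ∀ i, N ≤ i → l.parts i = 0}

/-- The size `|λ|` of a partition: the sum of its parts. -/
noncomputable def size (l : AbacusPartition) : ℕ :=
  ∑ i ∈ Finset.range l.length, l.parts i

/-- The beta-numbers of `l` with respect to `k` beads: `λ_i + k - i` for `i = 1, …, k`
(here 0-indexed: bead for row `i+1` sits at `parts i + (k - 1 - i)`). -/
def betaSet (l : AbacusPartition) (k : ℕ) : Finset ℕ :=
  (Finset.range k).image fun i => l.parts i + (k - 1 - i)

/-- Dominance order: `l ⊵ m`. -/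
def Dominates (l m : AbacusPartition) : Prop :=
  ∀ j, ∑ i ∈ Finset.range j, m.parts i ≤ ∑ i ∈ Finset.range j, l.parts i

/-- Inserting an empty runner before runner `α` into an `e`-abacus: a bead at
position `m*e + r` moves to `m*(e+1) + r` if `r < α` and to `m*(e+1) + r + 1` otherwise. -/
def insRunner (e α p : ℕ) : ℕ :=
  (p / e) * (e + 1) + p % e + (if p % e < α then 0 else 1)

/-- `lp` is the partition `λ⁺` obtained from `l` by inserting an empty runner at
position `α` into its `e`-abacus with `k` beads. -/
def IsPlus (e α k : ℕ) (l lp : AbacusPartition) : Prop :=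
  lp.length ≤ k ∧ lp.betaSet k = (l.betaSet k).image (insRunner e α)

/-- A partition is `d`-regular if no `d` of its nonzero parts are equal. -/
def Regular (d : ℕ) (l : AbacusPartition) : Prop :=
  ¬ ∃ i, l.parts i ≠ 0 ∧ l.parts (i + (d - 1)) = l.parts i

/-- The Young diagram of a partition, as a set of (row, column) cells, 0-indexed. -/
def cells (l : AbacusPartition) : Set (ℕ × ℕ) := {x | x.2 < l.parts x.1}

/-- `c 0, c 1, …, c (e-1)` are the successive cells of a ribbon: each next cell is
directly below, or directly to the left of, the previous cell. -/
def RibbonSteps (e : ℕ) (c : ℕ → ℕ × ℕ) : Prop :=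
  ∀ i, i + 1 < e →
    (c (i + 1) = ((c i).1 + 1, (c i).2)) ∨
    ((c i).2 = (c (i + 1)).2 + 1 ∧ (c (i + 1)).1 = (c i).1)

/-- `R` is an `e`-ribbon with cell enumeration `c` (head `c 0`). -/
def IsRibbonC (e : ℕ) (c : ℕ → ℕ × ℕ) (R : Set (ℕ × ℕ)) : Prop :=
  R = c '' (Set.Iio e) ∧ Set.InjOn c (Set.Iio e) ∧ RibbonSteps e c

/-- The spin of an `e`-ribbon: the number of vertical steps. -/
def spinOf (e : ℕ) (c : ℕ → ℕ × ℕ) : ℕ :=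
  ((Finset.range (e - 1)).filter fun i => (c (i + 1)).1 = (c i).1 + 1).card

/-- The head of the ribbon lies in row 1 or directly below a cell of `l`. -/
def HeadOK (l : AbacusPartition) (c : ℕ → ℕ × ℕ) : Prop :=
  (c 0).1 = 0 ∨ ((c 0).1 - 1, (c 0).2) ∈ cells l

/-- `l` is obtained from `n` by removing a single rim hook (ribbon) of length `e`. -/
def RemoveRibbon (e : ℕ) (n l : AbacusPartition) : Prop :=
  cells l ⊆ cells n ∧ ∃ c, IsRibbonC e c (cells n \ cells l)

/-- `κ` is the `e`-core of `l`: obtained by repeatedly removing `e`-rim-hooks,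
and no further `e`-rim-hook can be removed. -/
def IsECoreOf (e : ℕ) (κ l : AbacusPartition) : Prop :=
  Relation.ReflTransGen (RemoveRibbon e) l κ ∧ ¬ ∃ m, RemoveRibbon e κ m

/-- `l` has `e`-weight `w`: `|l| = |e-core of l| + w * e`. -/
def EWeight (e : ℕ) (l : AbacusPartition) (w : ℕ) : Prop :=
  ∃ κ, IsECoreOf e κ l ∧ l.size = κ.size + w * e

/-- `λ →_{m:e} ν` with total spin `s`: `[ν] \ [λ]` is a disjoint union of `m`
`e`-ribbons, each of whose heads lies in row 1 or directly below a cell of `λ`,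
the sum of whose spins is `s`. -/
def HAddSpin (e m s : ℕ) (l n : AbacusPartition) : Prop :=
  cells l ⊆ cells n ∧
  ∃ (R : Fin m → Set (ℕ × ℕ)) (c : Fin m → ℕ → ℕ × ℕ),
    ((cells n \ cells l) = ⋃ i, R i) ∧
    (Pairwise fun i j => Disjoint (R i) (R j)) ∧
    (∀ i, IsRibbonC e (c i) (R i) ∧ HeadOK l (c i)) ∧
    s = ∑ i, spinOf e (c i)

/-- `λ →_{m:e} ν`. -/
def HAdd (e m : ℕ) (l n : AbacusPartition) : Prop := ∃ s, HAddSpin e m s l n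

/-- `x` is an addable node of `l`. -/
def Addable (l : AbacusPartition) (x : ℕ × ℕ) : Prop :=
  x ∉ cells l ∧ ∃ n : AbacusPartition, cells n = insert x (cells l)

/-- `x` is a removable node of `l`. -/
def Removable (l : AbacusPartition) (x : ℕ × ℕ) : Prop :=
  x ∈ cells l ∧ ∃ n : AbacusPartition, cells n = cells l \ {x}

/-- The `e`-residue of a node `(c,d)`: `d - c mod e`. -/
def res (e : ℕ) (x : ℕ × ℕ) : ZMod e := (x.2 : ZMod e) - (x.1 : ZMod e)

/-- `N_i(λ,ν) = #{addable i-nodes of λ above x} - #{removable i-nodes of λ above x}`,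
where `i = res e x` and `y` is above `x` iff `y.1 < x.1`. -/
noncomputable def Nnum (e : ℕ) (l : AbacusPartition) (x : ℕ × ℕ) : ℤ :=
  ({y | Addable l y ∧ res e y = res e x ∧ y.1 < x.1}.ncard : ℤ) -
  ({y | Removable l y ∧ res e y = res e x ∧ y.1 < x.1}.ncard : ℤ)

end AbacusPartition

open AbacusPartition

/-!
Inserting runner `α` leaves it empty: no beta-number of `μ⁺` is `≡ α (mod e + 1)`.
On the other hand, `e + 1` equal nonzero parts `λᵢ = ⋯ = λᵢ₊ₑ` of a partition with at most `k`
parts give `e + 1` consecutive beta-numbers, and one of them is `≡ α (mod e + 1)`.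
-/

namespace AbacusPartition

theorem parts_eq_zero_of_length_le (l : AbacusPartition) {i : ℕ} (hi : l.length ≤ i) :
    l.parts i = 0 := by
  obtain ⟨N, hN⟩ := l.eventually_zero
  exact Nat.sInf_mem (s := {N | ∀ i, N ≤ i → l.parts i = 0}) ⟨N, hN⟩ i hi

theorem exists_consecutive_mem_betaSet_of_not_regular {l : AbacusPartition} {d k : ℕ}
    (hk : l.length ≤ k) (hl : ¬ l.Regular (d + 1)) :
    ∃ a, ∀ t ≤ d, a + t ∈ l.betaSet k := by
  obtain ⟨i, hne, heq⟩ := not_not.mp hl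
  rw [Nat.add_sub_cancel] at heq
  have hconst : ∀ j ≤ d, l.parts (i + j) = l.parts i := fun j hj =>
    le_antisymm (l.antitone (by omega)) (heq ▸ l.antitone (by omega))
  have hik : i + d < k := by
    by_contra! h
    exact hne (heq ▸ l.parts_eq_zero_of_length_le (by omega))
  refine ⟨l.parts i + (k - 1 - (i + d)), fun t ht => ?_⟩
  refine mem_image.mpr ⟨i + (d - t), mem_range.mpr (by omega), ?_⟩
  rw [hconst (d - t) (by omega)]
  omega

end AbacusPartition

theorem Nat.exists_lt_add_mod_eq (a : ℕ) {n r : ℕ} (hr : r < n) :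
    ∃ t < n, (a + t) % n = r := by
  refine ⟨(r + (n - a % n)) % n, Nat.mod_lt _ (by omega), ?_⟩
  have hsum : a + (r + (n - a % n)) = r + n * (a / n + 1) := by
    have := Nat.mod_add_div a n
    have := Nat.mod_lt a (show 0 < n by omega)
    rw [Nat.mul_succ]
    omega
  rw [Nat.add_mod_mod, hsum, Nat.add_mul_mod_self_left, Nat.mod_eq_of_lt hr]

theorem insRunner_mod_ne {e : ℕ} (he : 0 < e) (α p : ℕ) :
    insRunner e α p % (e + 1) ≠ α := by
  have hp : p % e < e := Nat.mod_lt _ he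
  unfold insRunner
  rw [Nat.add_assoc, Nat.mul_add_mod']
  split_ifs with h <;> rw [Nat.mod_eq_of_lt (by omega)] <;> omega

theorem plus_regular_of_regular_general (e α k : ℕ) (he : 2 ≤ e) (hα : α ≤ e)
    (m mp : AbacusPartition) (hmp : IsPlus e α k m mp) :
    mp.Regular (e + 1) := by
  by_contra hnreg
  obtain ⟨a, ha⟩ :=
    exists_consecutive_mem_betaSet_of_not_regular hmp.1 hnreg
  obtain ⟨t, ht, hres⟩ := Nat.exists_lt_add_mod_eq a (Nat.lt_succ_of_le hα)
  have hmem := ha t (Nat.le_of_lt_succ ht)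
  rw [hmp.2] at hmem
  obtain ⟨p, -, hp⟩ := mem_image.mp hmem
  exact insRunner_mod_ne (by omega) α p (hp ▸ hres)

/-- if `μ` is `e`-regular then `μ⁺` is `(e+1)`-regular. -/
theorem plus_regular_of_regular (e α k : ℕ) (he : 2 ≤ e) (hα : α ≤ e)
    (m mp : AbacusPartition) (hm : m.length ≤ k) (hreg : m.Regular e)
    (hmp : IsPlus e α k m mp) :
    mp.Regular (e + 1) :=
  plus_regular_of_regular_general e α k he hα m mp hmp
end

section
/- Let λ and μ be partitions of n of length at most k. Then λ and μ have the same e-core if and only if λ⁺ and μ⁺ have the same (e+1)-core. -/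
open Finset

/-- A partition: a weakly decreasing, eventually-zero sequence of naturals.
`parts i` is the `(i+1)`-st part (0-indexed). -/
structure PartitionSeq where
  parts : ℕ → ℕ
  antitone : ∀ ⦃i j : ℕ⦄, i ≤ j → parts j ≤ parts i
  eventually_zero : ∃ N, ∀ i, N ≤ i → parts i = 0

namespace PartitionSeq

/-- The length of a partition: the number of nonzero parts. -/
noncomputable def length (l : PartitionSeq) : ℕ :=
  sInf {N | ∀ i, N ≤ i → l.parts i = 0}

/-- The size `|λ|` of a partition: the sum of its parts. -/
noncomputable def size (l : PartitionSeq) : ℕ :=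
  ∑ i ∈ Finset.range l.length, l.parts i

/-- The beta-numbers of `l` with respect to `k` beads: `λ_i + k - i` for `i = 1, …, k`
(here 0-indexed: bead for row `i+1` sits at `parts i + (k - 1 - i)`). -/
def betaSet (l : PartitionSeq) (k : ℕ) : Finset ℕ :=
  (Finset.range k).image fun i => l.parts i + (k - 1 - i)

/-- Dominance order: `l ⊵ m`. -/
def Dominates (l m : PartitionSeq) : Prop :=
  ∀ j, ∑ i ∈ Finset.range j, m.parts i ≤ ∑ i ∈ Finset.range j, l.parts i

/-- Inserting an empty runner before runner `α` into an `e`-abacus: a bead at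
position `m*e + r` moves to `m*(e+1) + r` if `r < α` and to `m*(e+1) + r + 1` otherwise. -/
def insRunner (e α p : ℕ) : ℕ :=
  (p / e) * (e + 1) + p % e + (if p % e < α then 0 else 1)

/-- `lp` is the partition `λ⁺` obtained from `l` by inserting an empty runner at
position `α` into its `e`-abacus with `k` beads. -/
def IsPlus (e α k : ℕ) (l lp : PartitionSeq) : Prop :=
  lp.length ≤ k ∧ lp.betaSet k = (l.betaSet k).image (insRunner e α)

/-- A partition is `d`-regular if no `d` of its nonzero parts are equal. -/
def Regular (d : ℕ) (l : PartitionSeq) : Prop :=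
  ¬ ∃ i, l.parts i ≠ 0 ∧ l.parts (i + (d - 1)) = l.parts i

/-- The Young diagram of a partition, as a set of (row, column) cells, 0-indexed. -/
def cells (l : PartitionSeq) : Set (ℕ × ℕ) := {x | x.2 < l.parts x.1}

/-- `c 0, c 1, …, c (e-1)` are the successive cells of a ribbon: each next cell is
directly below, or directly to the left of, the previous cell. -/
def RibbonSteps (e : ℕ) (c : ℕ → ℕ × ℕ) : Prop :=
  ∀ i, i + 1 < e →
    (c (i + 1) = ((c i).1 + 1, (c i).2)) ∨
    ((c i).2 = (c (i + 1)).2 + 1 ∧ (c (i + 1)).1 = (c i).1)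

/-- `R` is an `e`-ribbon with cell enumeration `c` (head `c 0`). -/
def IsRibbonC (e : ℕ) (c : ℕ → ℕ × ℕ) (R : Set (ℕ × ℕ)) : Prop :=
  R = c '' (Set.Iio e) ∧ Set.InjOn c (Set.Iio e) ∧ RibbonSteps e c

/-- The spin of an `e`-ribbon: the number of vertical steps. -/
def spinOf (e : ℕ) (c : ℕ → ℕ × ℕ) : ℕ :=
  ((Finset.range (e - 1)).filter fun i => (c (i + 1)).1 = (c i).1 + 1).card

/-- The head of the ribbon lies in row 1 or directly below a cell of `l`. -/
def HeadOK (l : PartitionSeq) (c : ℕ → ℕ × ℕ) : Prop :=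
  (c 0).1 = 0 ∨ ((c 0).1 - 1, (c 0).2) ∈ cells l

/-- `l` is obtained from `n` by removing a single rim hook (ribbon) of length `e`. -/
def RemoveRibbon (e : ℕ) (n l : PartitionSeq) : Prop :=
  cells l ⊆ cells n ∧ ∃ c, IsRibbonC e c (cells n \ cells l)

/-- `κ` is the `e`-core of `l`: obtained by repeatedly removing `e`-rim-hooks,
and no further `e`-rim-hook can be removed. -/
def IsECoreOf (e : ℕ) (κ l : PartitionSeq) : Prop :=
  Relation.ReflTransGen (RemoveRibbon e) l κ ∧ ¬ ∃ m, RemoveRibbon e κ m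

/-- `l` has `e`-weight `w`: `|l| = |e-core of l| + w * e`. -/
def EWeight (e : ℕ) (l : PartitionSeq) (w : ℕ) : Prop :=
  ∃ κ, IsECoreOf e κ l ∧ l.size = κ.size + w * e

/-- `λ →_{m:e} ν` with total spin `s`: `[ν] \ [λ]` is a disjoint union of `m`
`e`-ribbons, each of whose heads lies in row 1 or directly below a cell of `λ`,
the sum of whose spins is `s`. -/
def HAddSpin (e m s : ℕ) (l n : PartitionSeq) : Prop :=
  cells l ⊆ cells n ∧
  ∃ (R : Fin m → Set (ℕ × ℕ)) (c : Fin m → ℕ → ℕ × ℕ),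
    ((cells n \ cells l) = ⋃ i, R i) ∧
    (Pairwise fun i j => Disjoint (R i) (R j)) ∧
    (∀ i, IsRibbonC e (c i) (R i) ∧ HeadOK l (c i)) ∧
    s = ∑ i, spinOf e (c i)

/-- `λ →_{m:e} ν`. -/
def HAdd (e m : ℕ) (l n : PartitionSeq) : Prop := ∃ s, HAddSpin e m s l n

/-- `x` is an addable node of `l`. -/
def Addable (l : PartitionSeq) (x : ℕ × ℕ) : Prop :=
  x ∉ cells l ∧ ∃ n : PartitionSeq, cells n = insert x (cells l)

/-- `x` is a removable node of `l`. -/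
def Removable (l : PartitionSeq) (x : ℕ × ℕ) : Prop :=
  x ∈ cells l ∧ ∃ n : PartitionSeq, cells n = cells l \ {x}

/-- The `e`-residue of a node `(c,d)`: `d - c mod e`. -/
def res (e : ℕ) (x : ℕ × ℕ) : ZMod e := (x.2 : ZMod e) - (x.1 : ZMod e)

/-- `N_i(λ,ν) = #{addable i-nodes of λ above x} - #{removable i-nodes of λ above x}`,
where `i = res e x` and `y` is above `x` iff `y.1 < x.1`. -/
noncomputable def Nnum (e : ℕ) (l : PartitionSeq) (x : ℕ × ℕ) : ℤ :=
  ({y | Addable l y ∧ res e y = res e x ∧ y.1 < x.1}.ncard : ℤ) -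
  ({y | Removable l y ∧ res e y = res e x ∧ y.1 < x.1}.ncard : ℤ)

end PartitionSeq

open PartitionSeq

/-!
Removing a rim hook of length `e` from a partition moves one bead of its `k`-bead abacus one
position up its `e`-runner, and conversely; the `e`-core is reached exactly when every bead is
slid up as far as possible. Hence two partitions have the same `e`-core iff their abaci carry the
same number of beads on each runner. Inserting an empty runner at `α` keeps these numbers on the
runners `r < α` and moves them to `r + 1` for `r ≥ α`, an injective relabelling, so equality of
the bead counts is preserved and reflected.
-/

namespace PartitionSeq

theorem ext {l m : PartitionSeq} (h : ∀ i, l.parts i = m.parts i) : l = m := by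
  cases l; cases m; simp only [mk.injEq]; exact funext h

theorem parts_eq_zero_of_length_le {l : PartitionSeq} {i : ℕ} (h : l.length ≤ i) :
    l.parts i = 0 :=
  Nat.sInf_mem l.eventually_zero i h

theorem lt_length_of_parts_ne_zero {l : PartitionSeq} {i : ℕ} (h : l.parts i ≠ 0) :
    i < l.length :=
  not_le.1 fun hi => h (parts_eq_zero_of_length_le hi)

theorem length_le_of_parts_le {l n : PartitionSeq} {k : ℕ} (h : ∀ i, l.parts i ≤ n.parts i)
    (hk : n.length ≤ k) : l.length ≤ k :=
  Nat.sInf_le fun i hi => Nat.eq_zero_of_le_zero <|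
    (h i).trans (parts_eq_zero_of_length_le (hk.trans hi)).le

theorem mem_cells_diff {l n : PartitionSeq} {x : ℕ × ℕ} :
    x ∈ cells n \ cells l ↔ l.parts x.1 ≤ x.2 ∧ x.2 < n.parts x.1 := by
  simp only [cells, Set.mem_sdiff, Set.mem_ofPred_eq, not_lt]; tauto

theorem parts_le_of_cells_subset {l n : PartitionSeq} (h : cells l ⊆ cells n) (i : ℕ) :
    l.parts i ≤ n.parts i :=
  not_lt.1 fun hi => lt_irrefl (n.parts i) (h (show (i, n.parts i) ∈ cells l from hi))

/-! ### Beta numbers -/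

/-- The position of the bead of row `i` on the abacus with `k` beads. -/
def beta (l : PartitionSeq) (k i : ℕ) : ℕ := l.parts i + (k - 1 - i)

theorem betaSet_eq_image (l : PartitionSeq) (k : ℕ) :
    l.betaSet k = (range k).image (l.beta k) := rfl

theorem beta_lt_beta (l : PartitionSeq) {k i j : ℕ} (hij : i < j) (hj : j < k) :
    l.beta k j < l.beta k i := by
  have := l.antitone hij.le
  unfold beta; omega

theorem beta_injOn (l : PartitionSeq) (k : ℕ) : Set.InjOn (l.beta k) (range k) := by
  intro i hi j hj hij
  simp only [coe_range, Set.mem_Iio] at hi hj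
  rcases lt_trichotomy i j with h | h | h
  · exact absurd hij (l.beta_lt_beta h hj).ne'
  · exact h
  · exact absurd hij (l.beta_lt_beta h hi).ne

theorem mem_betaSet {l : PartitionSeq} {k x : ℕ} :
    x ∈ l.betaSet k ↔ ∃ i < k, l.beta k i = x := by
  simp [betaSet_eq_image]

theorem card_filter_beta_lt (l : PartitionSeq) {k i : ℕ} (hi : i < k) :
    ((l.betaSet k).filter (l.beta k i < ·)).card = i := by
  have : (l.betaSet k).filter (l.beta k i < ·) = (range i).image (l.beta k) := by
    ext x
    simp only [betaSet_eq_image, mem_filter, mem_image, mem_range]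
    constructor
    · rintro ⟨⟨j, hj, rfl⟩, hlt⟩
      refine ⟨j, not_le.1 fun hij => ?_, rfl⟩
      rcases hij.eq_or_lt with rfl | hij
      · exact lt_irrefl _ hlt
      · exact lt_asymm hlt (l.beta_lt_beta hij hj)
    · rintro ⟨j, hj, rfl⟩
      exact ⟨⟨j, by omega, rfl⟩, l.beta_lt_beta hj hi⟩
  rw [this, card_image_of_injOn ((l.beta_injOn k).mono (by simp; omega)), card_range]

theorem beta_le_of_betaSet_eq {k : ℕ} {l m : PartitionSeq} (h : l.betaSet k = m.betaSet k)
    {i : ℕ} (hi : i < k) : l.beta k i ≤ m.beta k i := by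
  by_contra! hlt
  have hsub : insert (l.beta k i) ((l.betaSet k).filter (l.beta k i < ·)) ⊆
      (l.betaSet k).filter (m.beta k i < ·) := by
    intro x hx
    simp only [mem_insert, mem_filter] at hx ⊢
    rcases hx with rfl | ⟨hx, hlt'⟩
    · exact ⟨mem_betaSet.2 ⟨i, hi, rfl⟩, hlt⟩
    · exact ⟨hx, hlt.trans hlt'⟩
  have := card_le_card hsub
  rw [card_insert_of_notMem (by simp), l.card_filter_beta_lt hi, h,
    m.card_filter_beta_lt hi] at this
  omega

theorem betaSet_injective {k : ℕ} {l m : PartitionSeq} (hl : l.length ≤ k) (hm : m.length ≤ k)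
    (h : l.betaSet k = m.betaSet k) : l = m := by
  refine ext fun i => ?_
  rcases lt_or_ge i k with hi | hi
  · have h₁ := beta_le_of_betaSet_eq h hi
    have h₂ := beta_le_of_betaSet_eq h.symm hi
    unfold beta at h₁ h₂
    omega
  · rw [parts_eq_zero_of_length_le (hl.trans hi), parts_eq_zero_of_length_le (hm.trans hi)]

theorem add_sub_le_of_succ_lt {k : ℕ} {b : ℕ → ℕ} (hb : ∀ i, i + 1 < k → b (i + 1) < b i)
    {i j : ℕ} (hij : i ≤ j) (hj : j < k) : b j + (j - i) ≤ b i := by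
  induction j, hij using Nat.le_induction with
  | base => simp
  | succ j hij ih => have := ih (by omega); have := hb j hj; omega

def ofBeta (k : ℕ) (b : ℕ → ℕ) (hb : ∀ i, i + 1 < k → b (i + 1) < b i) : PartitionSeq where
  parts i := if i < k then b i - (k - 1 - i) else 0
  antitone i j hij := by
    split_ifs with hj hi hi
    · have := add_sub_le_of_succ_lt hb hij hj
      have := add_sub_le_of_succ_lt hb (show j ≤ k - 1 by omega) (by omega)
      omega
    · omega
    · omega
    · exact le_rfl
  eventually_zero := ⟨k, fun _ hi => if_neg (not_lt.2 hi)⟩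

theorem length_ofBeta_le {k : ℕ} {b : ℕ → ℕ} (hb : ∀ i, i + 1 < k → b (i + 1) < b i) :
    (ofBeta k b hb).length ≤ k :=
  Nat.sInf_le fun _ hi => if_neg (not_lt.2 hi)

theorem beta_ofBeta {k : ℕ} {b : ℕ → ℕ} (hb : ∀ i, i + 1 < k → b (i + 1) < b i) {i : ℕ}
    (hi : i < k) : (ofBeta k b hb).beta k i = b i := by
  have := add_sub_le_of_succ_lt hb (show i ≤ k - 1 by omega) (by omega)
  simp only [beta, ofBeta, if_pos hi]
  omega

/-! ### Rim hooks -/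

/-- Row-by-row description of the removal of a rim hook of length `e` from `n`, leaving `l`:
the hook occupies rows `r₁, …, r₂`, and consecutive rows of it overlap in exactly one column. -/
structure IsRimHook (e : ℕ) (n l : PartitionSeq) (r₁ r₂ : ℕ) : Prop where
  head_le_tail : r₁ ≤ r₂
  parts_eq_of_lt_head : ∀ i < r₁, l.parts i = n.parts i
  parts_eq_of_tail_lt : ∀ i, r₂ < i → l.parts i = n.parts i
  parts_add_one : ∀ i, r₁ ≤ i → i < r₂ → l.parts i + 1 = n.parts (i + 1)
  parts_tail_lt : l.parts r₂ < n.parts r₂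
  parts_tail_add : l.parts r₂ + e = n.parts r₁ + (r₂ - r₁)

def rimStep (l : PartitionSeq) (p : ℕ × ℕ) : ℕ × ℕ :=
  if p.2 = l.parts p.1 then (p.1 + 1, p.2) else (p.1, p.2 - 1)

namespace IsRimHook

variable {e k r₁ r₂ : ℕ} {n l : PartitionSeq}

theorem parts_lt (h : IsRimHook e n l r₁ r₂) {i : ℕ} (h₁ : r₁ ≤ i) (h₂ : i ≤ r₂) :
    l.parts i < n.parts i := by
  rcases h₂.eq_or_lt with rfl | h₂
  · exact h.parts_tail_lt
  · have := h.parts_add_one i h₁ h₂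
    have := n.antitone (show i ≤ i + 1 by omega)
    omega

theorem parts_le (h : IsRimHook e n l r₁ r₂) (i : ℕ) : l.parts i ≤ n.parts i := by
  by_cases h₁ : i < r₁
  · exact (h.parts_eq_of_lt_head i h₁).le
  by_cases h₂ : r₂ < i
  · exact (h.parts_eq_of_tail_lt i h₂).le
  · exact (h.parts_lt (not_lt.1 h₁) (not_lt.1 h₂)).le

theorem rows_of_mem (h : IsRimHook e n l r₁ r₂) {x : ℕ × ℕ} (hx : x ∈ cells n \ cells l) :
    r₁ ≤ x.1 ∧ x.1 ≤ r₂ := by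
  rw [mem_cells_diff] at hx
  constructor
  · by_contra! hlt; have := h.parts_eq_of_lt_head x.1 hlt; omega
  · by_contra! hlt; have := h.parts_eq_of_tail_lt x.1 hlt; omega

theorem col_le_of_row_lt (h : IsRimHook e n l r₁ r₂) {x y : ℕ × ℕ}
    (hx : x ∈ cells n \ cells l) (hy : y ∈ cells n \ cells l) (hxy : x.1 < y.1) : y.2 ≤ x.2 := by
  have hxr := h.rows_of_mem hx
  have hyr := h.rows_of_mem hy
  have hrow := h.parts_add_one (y.1 - 1) (by omega) (by omega)
  rw [Nat.sub_add_cancel (by omega)] at hrow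
  have := l.antitone (Nat.le_sub_one_of_lt hxy)
  rw [mem_cells_diff] at hx hy
  omega

theorem eq_of_diag_eq (h : IsRimHook e n l r₁ r₂) {x y : ℕ × ℕ}
    (hx : x ∈ cells n \ cells l) (hy : y ∈ cells n \ cells l) (hd : x.1 + y.2 = y.1 + x.2) :
    x = y := by
  rcases lt_trichotomy x.1 y.1 with hxy | hxy | hxy
  · have := h.col_le_of_row_lt hx hy hxy; omega
  · exact Prod.ext hxy (by omega)
  · have := h.col_le_of_row_lt hy hx hxy; omega

theorem rimStep_mem (h : IsRimHook e n l r₁ r₂) {p : ℕ × ℕ} {j : ℕ}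
    (hp : p ∈ cells n \ cells l) (hj : j + 1 < e) (hd : p.1 + n.parts r₁ = r₁ + p.2 + j + 1) :
    rimStep l p ∈ cells n \ cells l ∧
      (rimStep l p).1 + n.parts r₁ = r₁ + (rimStep l p).2 + (j + 1) + 1 := by
  have hrows := h.rows_of_mem hp
  rw [mem_cells_diff] at hp
  rw [rimStep, mem_cells_diff]
  split_ifs with hc
  · have hlt : p.1 < r₂ := by
      -- a step down from row `r₂` would take the walk past the `e` cells of the hook
      refine hrows.2.lt_of_ne fun hr => ?_
      have := h.parts_tail_add
      rw [← hr] at this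
      omega
    have := h.parts_add_one p.1 hrows.1 hlt
    have := l.antitone (Nat.le_add_right p.1 1)
    simp only
    omega
  · simp only
    omega

theorem rimStep_iterate_mem (h : IsRimHook e n l r₁ r₂) {j : ℕ} (hj : j < e) :
    (rimStep l)^[j] (r₁, n.parts r₁ - 1) ∈ cells n \ cells l ∧
      ((rimStep l)^[j] (r₁, n.parts r₁ - 1)).1 + n.parts r₁ =
        r₁ + ((rimStep l)^[j] (r₁, n.parts r₁ - 1)).2 + j + 1 := by
  induction j with
  | zero =>
    have := h.parts_lt le_rfl h.head_le_tail
    simp only [Function.iterate_zero, id, mem_cells_diff]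
    omega
  | succ j ih =>
    obtain ⟨hmem, hd⟩ := ih (by omega)
    rw [Function.iterate_succ_apply']
    exact h.rimStep_mem hmem hj hd

theorem removeRibbon (h : IsRimHook e n l r₁ r₂) : RemoveRibbon e n l := by
  refine ⟨fun x hx => lt_of_lt_of_le hx (h.parts_le x.1),
    fun j => (rimStep l)^[j] (r₁, n.parts r₁ - 1), ?_, ?_, ?_⟩
  · ext x
    refine ⟨fun hx => ?_, ?_⟩
    · have hx' := hx
      have hr := h.rows_of_mem hx
      rw [mem_cells_diff] at hx'
      have := n.antitone hr.1
      have := l.antitone hr.2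
      have := h.parts_tail_add
      -- `x` lies on the diagonal visited after `j` steps, and the hook meets it only once
      have hj : x.1 + n.parts r₁ - (r₁ + x.2 + 1) < e := by omega
      obtain ⟨hmem, hdiag⟩ := h.rimStep_iterate_mem hj
      have := h.eq_of_diag_eq hmem hx (by omega)
      exact ⟨_, hj, this⟩
    · rintro ⟨j, hj, rfl⟩
      exact (h.rimStep_iterate_mem hj).1
  · intro j hj j' hj' hjj
    have := (h.rimStep_iterate_mem hj).2
    have := (h.rimStep_iterate_mem hj').2
    simp only at hjj
    rw [hjj] at *
    omega
  · intro j hj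
    simp only [Function.iterate_succ_apply', rimStep]
    split_ifs with hc
    · exact Or.inl rfl
    · have := (h.rimStep_iterate_mem (j := j) (by omega)).1
      rw [mem_cells_diff] at this
      exact Or.inr ⟨by simp only; omega, rfl⟩

theorem tail_lt (h : IsRimHook e n l r₁ r₂) (hn : n.length ≤ k) : r₂ < k :=
  (lt_length_of_parts_ne_zero (by have := h.parts_tail_lt; omega)).trans_le hn

theorem sum_parts_lt (h : IsRimHook e n l r₁ r₂) (hn : n.length ≤ k) :
    ∑ i ∈ range k, l.parts i < ∑ i ∈ range k, n.parts i :=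
  sum_lt_sum (fun i _ => h.parts_le i)
    ⟨r₂, mem_range.2 (h.tail_lt hn), h.parts_lt h.head_le_tail le_rfl⟩

theorem beta_tail_add (h : IsRimHook e n l r₁ r₂) (hk : r₂ < k) :
    l.beta k r₂ + e = n.beta k r₁ := by
  have := h.parts_tail_add
  have := h.head_le_tail
  unfold beta; omega

theorem beta_eq_beta_succ (h : IsRimHook e n l r₁ r₂) (hk : r₂ < k) {i : ℕ} (h₁ : r₁ ≤ i)
    (h₂ : i < r₂) : l.beta k i = n.beta k (i + 1) := by
  have := h.parts_add_one i h₁ h₂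
  unfold beta; omega

theorem beta_eq_beta (h : IsRimHook e n l r₁ r₂) {i : ℕ} (hi : i < r₁ ∨ r₂ < i) :
    l.beta k i = n.beta k i := by
  unfold beta
  rcases hi with hi | hi
  · rw [h.parts_eq_of_lt_head i hi]
  · rw [h.parts_eq_of_tail_lt i hi]

end IsRimHook

theorem isRimHook_of_beta {e k r₁ r₂ : ℕ} {n l : PartitionSeq} (hn : n.length ≤ k)
    (hl : l.length ≤ k) (h₁₂ : r₁ ≤ r₂) (h₂ : r₂ < k)
    (hlow : ∀ i < r₁, l.beta k i = n.beta k i)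
    (hhigh : ∀ i, r₂ < i → i < k → l.beta k i = n.beta k i)
    (hmid : ∀ i, r₁ ≤ i → i < r₂ → l.beta k i = n.beta k (i + 1))
    (htail_lt : l.beta k r₂ < n.beta k r₂) (htail : l.beta k r₂ + e = n.beta k r₁) :
    IsRimHook e n l r₁ r₂ := by
  unfold beta at *
  refine ⟨h₁₂, fun i hi => ?_, fun i hi => ?_, fun i h₁ h₂ => ?_, by omega, by omega⟩
  · have := hlow i hi; omega
  · rcases lt_or_ge i k with hik | hik
    · have := hhigh i hi hik; omega
    · rw [parts_eq_zero_of_length_le (hl.trans hik), parts_eq_zero_of_length_le (hn.trans hik)]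
  · have := hmid i h₁ h₂; omega

namespace RibbonSteps

variable {e : ℕ} {c : ℕ → ℕ × ℕ}

theorem fst_le_fst (hs : RibbonSteps e c) {i j : ℕ} (hij : i ≤ j) (hj : j < e) :
    (c i).1 ≤ (c j).1 := by
  induction j, hij using Nat.le_induction with
  | base => exact le_rfl
  | succ j hij ih =>
    have := ih (by omega)
    rcases hs j hj with hd | hl
    · rw [hd]; exact this.trans (Nat.le_succ _)
    · omega

theorem fst_add_snd_zero (hs : RibbonSteps e c) {j : ℕ} (hj : j < e) :
    (c j).1 + (c 0).2 = (c 0).1 + (c j).2 + j := by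
  induction j with
  | zero => omega
  | succ j ih =>
    have := ih (by omega)
    rcases hs j hj with hd | hl
    · rw [hd]; simp only; omega
    · omega

theorem exists_down_step (hs : RibbonSteps e c) {i m : ℕ} (hm : m < e) (h₀ : (c 0).1 ≤ i)
    (hi : i < (c m).1) : ∃ j, j + 1 < e ∧ (c j).1 = i ∧ c (j + 1) = (i + 1, (c j).2) := by
  induction m with
  | zero => omega
  | succ m ih =>
    by_cases him : i < (c m).1
    · obtain ⟨j, hj, h⟩ := ih (by omega) him
      exact ⟨j, hj, h⟩
    · rcases hs m hm with hd | hl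
      · rw [hd] at hi
        have hrow : (c m).1 = i := by simp only at hi; omega
        exact ⟨m, hm, hrow, hrow ▸ hd⟩
      · omega

end RibbonSteps

section RibbonRemoval

variable {e : ℕ} {n l : PartitionSeq} {c : ℕ → ℕ × ℕ}

theorem exists_index_of_mem_ribbon (hc : cells n \ cells l = c '' Set.Iio e)
    (hs : RibbonSteps e c) {x : ℕ × ℕ} (hx : x ∈ cells n \ cells l) :
    ∃ j < e, c j = x ∧ x.1 + (c 0).2 = (c 0).1 + x.2 + j := by
  rw [hc] at hx
  obtain ⟨j, hj, rfl⟩ := hx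
  exact ⟨j, hj, rfl, hs.fst_add_snd_zero hj⟩

theorem rows_of_mem_ribbon (hc : cells n \ cells l = c '' Set.Iio e)
    (hs : RibbonSteps e c) {x : ℕ × ℕ} (hx : x ∈ cells n \ cells l) :
    (c 0).1 ≤ x.1 ∧ x.1 ≤ (c (e - 1)).1 := by
  obtain ⟨j, hj, rfl, -⟩ := exists_index_of_mem_ribbon hc hs hx
  exact ⟨hs.fst_le_fst (Nat.zero_le j) hj, hs.fst_le_fst (by omega) (by omega)⟩

theorem head_add_one_of_ribbon (he : 0 < e) (hc : cells n \ cells l = c '' Set.Iio e)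
    (hs : RibbonSteps e c) : (c 0).2 + 1 = n.parts (c 0).1 := by
  have h₀ : c 0 ∈ cells n \ cells l := hc ▸ ⟨0, he, rfl⟩
  rw [mem_cells_diff] at h₀
  refine (Nat.succ_le_of_lt h₀.2).antisymm (not_lt.1 fun hlt => ?_)
  obtain ⟨j, -, -, hd⟩ := exists_index_of_mem_ribbon hc hs (x := ((c 0).1, (c 0).2 + 1))
    (mem_cells_diff.2 ⟨by simp only; omega, hlt⟩)
  simp only at hd
  omega

theorem tail_eq_of_ribbon (he : 0 < e) (hc : cells n \ cells l = c '' Set.Iio e)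
    (hs : RibbonSteps e c) : (c (e - 1)).2 = l.parts (c (e - 1)).1 := by
  have h₁ : c (e - 1) ∈ cells n \ cells l := hc ▸ ⟨e - 1, by simp only [Set.mem_Iio]; omega, rfl⟩
  rw [mem_cells_diff] at h₁
  refine (h₁.1.eq_or_lt.resolve_right fun hlt => ?_).symm
  obtain ⟨j, hj, -, hd⟩ :=
    exists_index_of_mem_ribbon hc hs (x := ((c (e - 1)).1, (c (e - 1)).2 - 1))
    (mem_cells_diff.2 ⟨by simp only; omega, by simp only; omega⟩)
  have := hs.fst_add_snd_zero (j := e - 1) (by omega)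
  simp only at hd
  omega

/-- Where the ribbon passes from row `i` to row `i + 1`, it goes down from the first column
outside `l` in row `i` to the last column of `n` in row `i + 1`. -/
theorem parts_add_one_of_ribbon (he : 0 < e) (hc : cells n \ cells l = c '' Set.Iio e)
    (hs : RibbonSteps e c) {i : ℕ} (h₁ : (c 0).1 ≤ i) (h₂ : i < (c (e - 1)).1) :
    l.parts i + 1 = n.parts (i + 1) := by
  obtain ⟨j, hj, hrow, hdown⟩ := hs.exists_down_step (by omega) h₁ h₂
  have hmem : ∀ j < e, c j ∈ cells n \ cells l := fun j hj => hc ▸ ⟨j, hj, rfl⟩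
  have hj₀ := mem_cells_diff.1 (hmem j (by omega))
  have hj₁ := mem_cells_diff.1 (hmem (j + 1) hj)
  have hdj := hs.fst_add_snd_zero (j := j) (by omega)
  rw [hdown] at hj₁
  rw [hrow] at hj₀ hdj
  simp only at hj₁
  have hleft : (c j).2 = l.parts i := by
    refine (hj₀.1.eq_or_lt.resolve_right fun hlt => ?_).symm
    obtain ⟨j', -, hcj', hd⟩ := exists_index_of_mem_ribbon hc hs (x := (i, (c j).2 - 1))
      (mem_cells_diff.2 ⟨by simp only; omega, by simp only; omega⟩)
    simp only at hd
    have : j' = j + 1 := by omega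
    rw [this, hdown, Prod.mk.injEq] at hcj'
    omega
  have hright : (c j).2 + 1 = n.parts (i + 1) := by
    refine (Nat.succ_le_of_lt hj₁.2).antisymm (not_lt.1 fun hlt => ?_)
    have := l.antitone (Nat.le_succ i)
    obtain ⟨j', -, hcj', hd⟩ := exists_index_of_mem_ribbon hc hs (x := (i + 1, (c j).2 + 1))
      (mem_cells_diff.2 ⟨by simp only; omega, hlt⟩)
    simp only at hd
    have : j' = j := by omega
    rw [this] at hcj'
    rw [hcj'] at hrow
    omega
  omega

theorem RemoveRibbon.exists_isRimHook (he : 0 < e) (h : RemoveRibbon e n l) :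
    ∃ r₁ r₂, IsRimHook e n l r₁ r₂ := by
  obtain ⟨hsub, c, hc, -, hs⟩ := h
  have hle := parts_le_of_cells_subset hsub
  have hrows : ∀ i, l.parts i ≠ n.parts i → (c 0).1 ≤ i ∧ i ≤ (c (e - 1)).1 := fun i hi =>
    rows_of_mem_ribbon hc hs (x := (i, l.parts i))
      (mem_cells_diff.2 ⟨le_rfl, (hle i).lt_of_ne hi⟩)
  have htail : c (e - 1) ∈ cells n \ cells l := hc ▸ ⟨e - 1, by simp only [Set.mem_Iio]; omega, rfl⟩
  have hhead := head_add_one_of_ribbon he hc hs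
  have hdiag := hs.fst_add_snd_zero (j := e - 1) (by omega)
  have := tail_eq_of_ribbon he hc hs
  have hr := hs.fst_le_fst (Nat.zero_le (e - 1)) (by omega)
  refine ⟨(c 0).1, (c (e - 1)).1, ⟨hr, ?_, ?_, fun i => parts_add_one_of_ribbon he hc hs,
    by have := mem_cells_diff.1 htail; omega, by omega⟩⟩
  · intro i hi; by_contra hne; have := hrows i hne; omega
  · intro i hi; by_contra hne; have := hrows i hne; omega

end RibbonRemoval

/-! ### Cores on the abacus -/

/-- The runners (residues mod `e`) of the beads of the `k`-bead `e`-abacus of `l`, with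
multiplicity. -/
def runners (e k : ℕ) (l : PartitionSeq) : Multiset ℕ := (l.betaSet k).val.map (· % e)

theorem runners_eq_map_range (e k : ℕ) (l : PartitionSeq) :
    runners e k l = (Multiset.range k).map (fun i => l.beta k i % e) := by
  rw [runners, betaSet_eq_image, image_val_of_injOn (l.beta_injOn k), Multiset.map_map,
    range_val]
  rfl

/-- Removing a rim hook cycles the beads of rows `r₁, …, r₂` and moves the bead of row `r₁`
up its runner by one position. -/
theorem IsRimHook.runners_eq {e k r₁ r₂ : ℕ} {n l : PartitionSeq} (h : IsRimHook e n l r₁ r₂)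
    (hn : n.length ≤ k) : runners e k l = runners e k n := by
  have hk := h.tail_lt hn
  have h₁₂ := h.head_le_tail
  set σ : ℕ → ℕ := fun i => if r₁ ≤ i ∧ i < r₂ then i + 1 else if i = r₂ then r₁ else i
  have hσ : Function.Injective σ := by
    intro i j hij
    simp only [σ] at hij
    split_ifs at hij <;> omega
  have hσrange : (Multiset.range k).map σ = Multiset.range k := by
    have : (range k).image σ = range k := by
      refine eq_of_subset_of_card_le (fun x hx => ?_) (card_image_of_injective _ hσ).ge
      simp only [σ, mem_image, mem_range] at hx ⊢
      obtain ⟨i, hi, rfl⟩ := hx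
      split_ifs <;> omega
    rw [← range_val, ← image_val_of_injOn hσ.injOn, this]
  have hbeta : ∀ i, l.beta k i % e = n.beta k (σ i) % e := by
    intro i
    simp only [σ]
    split_ifs with hmid htail
    · rw [h.beta_eq_beta_succ hk hmid.1 hmid.2]
    · rw [htail, ← h.beta_tail_add hk, Nat.add_mod_right]
    · rw [h.beta_eq_beta (by omega)]
  calc runners e k l = (Multiset.range k).map (fun i => n.beta k (σ i) % e) := by
        simp only [runners_eq_map_range, hbeta]
    _ = ((Multiset.range k).map σ).map (fun i => n.beta k i % e) := by
      rw [Multiset.map_map]; rfl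
    _ = runners e k n := by rw [hσrange, runners_eq_map_range]

theorem runners_eq_of_reflTransGen {e k : ℕ} {l κ : PartitionSeq} (he : 0 < e)
    (h : Relation.ReflTransGen (RemoveRibbon e) l κ) (hl : l.length ≤ k) :
    κ.length ≤ k ∧ runners e k κ = runners e k l := by
  induction h with
  | refl => exact ⟨hl, rfl⟩
  | tail _ hstep ih =>
    obtain ⟨r₁, r₂, hhook⟩ := hstep.exists_isRimHook he
    exact ⟨length_le_of_parts_le hhook.parts_le ih.1, (hhook.runners_eq ih.1).trans ih.2⟩

def BeadsSlidUp (e k : ℕ) (l : PartitionSeq) : Prop :=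
  ∀ p ∈ l.betaSet k, e ≤ p → p - e ∈ l.betaSet k

theorem BeadsSlidUp.not_removeRibbon {e k : ℕ} {κ : PartitionSeq} (he : 0 < e)
    (hκ : κ.length ≤ k) (h : BeadsSlidUp e k κ) : ¬ ∃ m, RemoveRibbon e κ m := by
  rintro ⟨m, hm⟩
  obtain ⟨r₁, r₂, hhook⟩ := hm.exists_isRimHook he
  have hk := hhook.tail_lt hκ
  have htail := hhook.beta_tail_add hk
  have hr₁ : κ.beta k r₁ ∈ κ.betaSet k := mem_betaSet.2 ⟨r₁, hhook.head_le_tail.trans_lt hk, rfl⟩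
  -- The hook moves this bead to `m.beta k r₂`, which therefore has to be occupied in `κ` too.
  obtain ⟨j, hj, hbj⟩ := mem_betaSet.1 (h _ hr₁ (by omega))
  have hlt : m.beta k r₂ < κ.beta k r₂ := by
    have := hhook.parts_tail_lt
    unfold beta; omega
  rcases le_or_gt j r₂ with hjr | hjr
  · rcases hjr.eq_or_lt with rfl | hjr
    · omega
    · have := κ.beta_lt_beta hjr hk; omega
  · have := m.beta_lt_beta hjr hj
    rw [hhook.beta_eq_beta (Or.inr hjr)] at this
    omega

theorem exists_last_beta_gt {κ : PartitionSeq} {k r₁ q : ℕ} (hr₁ : r₁ < k)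
    (hq : q < κ.beta k r₁) (hqB : q ∉ κ.betaSet k) :
    ∃ r₂, r₁ ≤ r₂ ∧ r₂ < k ∧ q < κ.beta k r₂ ∧ (r₂ + 1 < k → κ.beta k (r₂ + 1) < q) := by
  set S := (range k).filter (q < κ.beta k ·)
  have hr₁S : r₁ ∈ S := mem_filter.2 ⟨mem_range.2 hr₁, hq⟩
  obtain ⟨hr₂k, hqr₂⟩ := mem_filter.1 (S.max'_mem ⟨r₁, hr₁S⟩)
  refine ⟨S.max' ⟨r₁, hr₁S⟩, S.le_max' r₁ hr₁S, mem_range.1 hr₂k, hqr₂, fun hk => ?_⟩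
  have hnS : S.max' ⟨r₁, hr₁S⟩ + 1 ∉ S := fun hS => by have := S.le_max' _ hS; omega
  simp only [S, mem_filter, mem_range, not_and, not_lt] at hnS
  exact (hnS hk).lt_of_ne fun heq => hqB (heq ▸ mem_betaSet.2 ⟨_, hk, rfl⟩)

theorem exists_isRimHook_of_not_beadsSlidUp {e k : ℕ} {κ : PartitionSeq} (hκ : κ.length ≤ k)
    (h : ¬ BeadsSlidUp e k κ) : ∃ m r₁ r₂, IsRimHook e κ m r₁ r₂ := by
  simp only [BeadsSlidUp, not_forall] at h
  obtain ⟨p, hp, hep, hq⟩ := h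
  obtain ⟨r₁, hr₁, rfl⟩ := mem_betaSet.1 hp
  have hqp : κ.beta k r₁ - e < κ.beta k r₁ := (Nat.sub_le _ _).lt_of_ne fun heq => hq (by rwa [heq])
  obtain ⟨r₂, h₁₂, hr₂k, hqr₂, hnext⟩ := exists_last_beta_gt hr₁ hqp hq
  -- Slide the bead of row `r₁` up to the free position `κ.beta k r₁ - e`; the beads of the rows
  -- `r₁ + 1, …, r₂`, which lie between the two positions, move up one row.
  set b : ℕ → ℕ := fun i =>
    if i < r₁ ∨ r₂ < i then κ.beta k i else if i < r₂ then κ.beta k (i + 1) else κ.beta k r₁ - e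
  have hb : ∀ i, i + 1 < k → b (i + 1) < b i := by
    intro i hi
    have h₀ := κ.beta_lt_beta (show i < i + 1 by omega) hi
    have h₁ : i + 1 + 1 < k → κ.beta k (i + 1 + 1) < κ.beta k (i + 1) :=
      κ.beta_lt_beta (show i + 1 < i + 1 + 1 by omega)
    have h₂ : i + 1 = r₁ → κ.beta k (i + 1) = κ.beta k r₁ := fun h => h ▸ rfl
    have h₃ : i + 1 = r₂ → κ.beta k r₁ - e < κ.beta k (i + 1) := fun h => h ▸ hqr₂
    have h₄ : i = r₂ → κ.beta k (i + 1) < κ.beta k r₁ - e := fun h => h ▸ hnext (h ▸ hi)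
    simp only [b]
    split_ifs <;> omega
  have hbeta : ∀ i < k, (ofBeta k b hb).beta k i = b i := fun i hi => beta_ofBeta hb hi
  refine ⟨ofBeta k b hb, r₁, r₂, isRimHook_of_beta hκ (length_ofBeta_le hb) h₁₂ hr₂k
    (fun i hi => ?_) (fun i hi hik => ?_) (fun i h₁ h₂ => ?_) ?_ ?_⟩
  · rw [hbeta i (by omega)]; simp only [b]; split_ifs <;> omega
  · rw [hbeta i hik]; simp only [b]; split_ifs <;> omega
  · rw [hbeta i (by omega)]; simp only [b]; split_ifs <;> omega
  all_goals rw [hbeta r₂ hr₂k]; simp only [b]; split_ifs <;> omega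

theorem exists_reflTransGen_beadsSlidUp {e k : ℕ} {l : PartitionSeq}
    (hl : l.length ≤ k) :
    ∃ κ, Relation.ReflTransGen (RemoveRibbon e) l κ ∧ BeadsSlidUp e k κ := by
  induction hs : ∑ i ∈ range k, l.parts i using Nat.strong_induction_on generalizing l with
  | _ s ih =>
    by_cases h : BeadsSlidUp e k l
    · exact ⟨l, .refl, h⟩
    obtain ⟨m, r₁, r₂, hhook⟩ := exists_isRimHook_of_not_beadsSlidUp hl h
    obtain ⟨κ, hmκ, hκ⟩ := ih _ (hs ▸ hhook.sum_parts_lt hl)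
      (length_le_of_parts_le hhook.parts_le hl) rfl
    exact ⟨κ, .head hhook.removeRibbon hmκ, hκ⟩

theorem BeadsSlidUp.mem_of_le {e k : ℕ} {l : PartitionSeq} (he : 0 < e)
    (h : BeadsSlidUp e k l) {x y : ℕ} (hy : y ∈ l.betaSet k) (hxy : x ≤ y)
    (hmod : x % e = y % e) : x ∈ l.betaSet k := by
  induction y using Nat.strong_induction_on with
  | _ y ih =>
    rcases hxy.eq_or_lt with rfl | hlt
    · exact hy
    have hdvd : e ∣ y - x := (Nat.modEq_iff_dvd' hxy).1 hmod
    have hey : e ≤ y - x := Nat.le_of_dvd (by omega) hdvd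
    exact ih (y - e) (by omega) (h y hy (by omega)) (by omega)
      (by rw [hmod, ← Nat.add_mod_right (y - e) e, Nat.sub_add_cancel (by omega)])

/-- On a runner whose beads are all slid up, the beads occupy exactly the top positions. -/
theorem BeadsSlidUp.mem_betaSet_iff {e k : ℕ} {l : PartitionSeq} (he : 0 < e)
    (h : BeadsSlidUp e k l) {x : ℕ} :
    x ∈ l.betaSet k ↔ x / e < (runners e k l).count (x % e) := by
  rw [runners, Multiset.count_map, ← filter_val, ← card_def]
  have hxe := Nat.div_add_mod x e
  constructor
  · intro hx
    have hsub : (range (x / e + 1)).image (fun j => x % e + e * j) ⊆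
        (l.betaSet k).filter (fun y => x % e = y % e) := by
      intro y hy
      simp only [mem_image, mem_range] at hy
      obtain ⟨j, hj, rfl⟩ := hy
      have hres : (x % e + e * j) % e = x % e := by rw [Nat.add_mul_mod_self_left, Nat.mod_mod]
      have := Nat.mul_le_mul_left e (show j ≤ x / e by omega)
      exact mem_filter.2 ⟨h.mem_of_le he hx (by omega) hres, hres.symm⟩
    have := card_le_card hsub
    rwa [card_image_of_injective _ fun a b hab => Nat.eq_of_mul_eq_mul_left he (by simpa using hab),
      card_range, Nat.succ_le_iff] at this
  · intro hlt
    by_contra hx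
    have hinj := card_le_card_of_injOn (s := (l.betaSet k).filter (fun y => x % e = y % e))
      (t := range (x / e)) (· / e) (fun y hy => ?_)
      (fun y hy y' hy' hyy => ?_)
    · rw [card_range] at hinj
      omega
    · obtain ⟨hyB, hyr⟩ := mem_filter.1 (mem_coe.1 hy)
      have hyx : y < x := not_le.1 fun hxy => hx (h.mem_of_le he hyB hxy hyr)
      have := Nat.div_add_mod y e
      rw [coe_range, Set.mem_Iio]
      exact Nat.lt_of_mul_lt_mul_left (a := e) (b := y / e) (by omega)
    · rw [mem_coe, mem_filter] at hy hy'
      have := Nat.div_add_mod y e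
      have := Nat.div_add_mod y' e
      simp only at hyy
      rw [hyy] at *
      omega

theorem BeadsSlidUp.eq_of_runners_eq {e k : ℕ} {l m : PartitionSeq} (he : 0 < e)
    (hl : l.length ≤ k) (hm : m.length ≤ k) (hl' : BeadsSlidUp e k l) (hm' : BeadsSlidUp e k m)
    (h : runners e k l = runners e k m) : l = m :=
  betaSet_injective hl hm <| Finset.ext fun _ => by
    rw [hl'.mem_betaSet_iff he, hm'.mem_betaSet_iff he, h]

theorem same_core_iff_runners_eq {e k : ℕ} {l m : PartitionSeq} (he : 0 < e)
    (hl : l.length ≤ k) (hm : m.length ≤ k) :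
    (∃ κ, IsECoreOf e κ l ∧ IsECoreOf e κ m) ↔ runners e k l = runners e k m := by
  constructor
  · rintro ⟨κ, ⟨hlκ, -⟩, ⟨hmκ, -⟩⟩
    exact ((runners_eq_of_reflTransGen he hlκ hl).2).symm.trans
      (runners_eq_of_reflTransGen he hmκ hm).2
  · intro h
    obtain ⟨κl, hlκ, hκl⟩ := exists_reflTransGen_beadsSlidUp hl
    obtain ⟨κm, hmκ, hκm⟩ := exists_reflTransGen_beadsSlidUp hm
    obtain ⟨hκl_len, hκl_run⟩ := runners_eq_of_reflTransGen he hlκ hl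
    obtain ⟨hκm_len, hκm_run⟩ := runners_eq_of_reflTransGen he hmκ hm
    obtain rfl := hκl.eq_of_runners_eq he hκl_len hκm_len hκm (by rw [hκl_run, hκm_run, h])
    exact ⟨κl, ⟨hlκ, hκl.not_removeRibbon he hκl_len⟩, ⟨hmκ, hκl.not_removeRibbon he hκl_len⟩⟩

/-! ### Inserting a runner -/

section InsRunner

variable {e : ℕ} (α : ℕ)

theorem insRunner_eq (p : ℕ) :
    insRunner e α p = (e + 1) * (p / e) + (if p % e < α then p % e else p % e + 1) := by
  unfold insRunner
  split_ifs <;> ring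

theorem insRunner_div (he : 0 < e) (p : ℕ) : insRunner e α p / (e + 1) = p / e := by
  have := Nat.mod_lt p he
  have hlt : (if p % e < α then p % e else p % e + 1) < e + 1 := by split_ifs <;> omega
  rw [insRunner_eq α, Nat.mul_add_div (by omega), Nat.div_eq_of_lt hlt, add_zero]

theorem insRunner_mod (he : 0 < e) (p : ℕ) :
    insRunner e α p % (e + 1) = if p % e < α then p % e else p % e + 1 := by
  have := Nat.mod_lt p he
  rw [insRunner_eq α, Nat.mul_add_mod, Nat.mod_eq_of_lt (by split_ifs <;> omega)]

theorem injective_ite_lt_succ : Function.Injective fun r : ℕ => if r < α then r else r + 1 := by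
  intro a b hab
  simp only at hab
  split_ifs at hab <;> omega

theorem insRunner_injective (he : 0 < e) : Function.Injective (insRunner e α) := by
  intro p q hpq
  have hdiv := insRunner_div α he p
  have hmod := insRunner_mod α he p
  rw [hpq, insRunner_div α he, insRunner_mod α he] at *
  rw [← Nat.div_add_mod p e, ← Nat.div_add_mod q e, hdiv, injective_ite_lt_succ α hmod]

end InsRunner

theorem runners_of_isPlus {e α k : ℕ} {l lp : PartitionSeq} (he : 0 < e) (h : IsPlus e α k l lp) :
    runners (e + 1) k lp = (runners e k l).map fun r => if r < α then r else r + 1 := by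
  rw [runners, h.2, image_val_of_injOn (insRunner_injective α he).injOn, Multiset.map_map,
    runners, Multiset.map_map]
  exact Multiset.map_congr rfl fun p _ => insRunner_mod α he p

end PartitionSeq

theorem same_core_iff_plus_same_core_general (e α k : ℕ) (he : 2 ≤ e)
    (l m lp mp : PartitionSeq) (hl : l.length ≤ k) (hm : m.length ≤ k)
    (hlp : IsPlus e α k l lp) (hmp : IsPlus e α k m mp) :
    (∃ κ, IsECoreOf e κ l ∧ IsECoreOf e κ m) ↔
      (∃ κ, IsECoreOf (e + 1) κ lp ∧ IsECoreOf (e + 1) κ mp) := by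
  rw [same_core_iff_runners_eq (by omega) hl hm, same_core_iff_runners_eq (by omega) hlp.1 hmp.1,
    runners_of_isPlus (by omega) hlp, runners_of_isPlus (by omega) hmp,
    (Multiset.map_injective (injective_ite_lt_succ α)).eq_iff]

/-- `λ` and `μ` have the same `e`-core iff `λ⁺` and `μ⁺` have the
same `(e+1)`-core. -/
theorem same_core_iff_plus_same_core (e α k n : ℕ) (he : 2 ≤ e) (hα : α ≤ e)
    (l m lp mp : PartitionSeq) (hl : l.length ≤ k) (hm : m.length ≤ k)
    (hln : l.size = n) (hmn : m.size = n)
    (hlp : IsPlus e α k l lp) (hmp : IsPlus e α k m mp) :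
    (∃ κ, IsECoreOf e κ l ∧ IsECoreOf e κ m) ↔
      (∃ κ, IsECoreOf (e + 1) κ lp ∧ IsECoreOf (e + 1) κ mp) :=
  same_core_iff_plus_same_core_general e α k he l m lp mp hl hm hlp hmp
end

section
/- The e-weight of a partition λ, represented on an e-abacus with k beads, equals the sum over all beads β of the number of empty bead positions that lie above β on the same runner. -/
open Finset

/-- A partition: a weakly decreasing, eventually-zero sequence of naturals.
`parts i` is the `(i+1)`-st part (0-indexed). -/
structure AbPartition where
  parts : ℕ → ℕ
  antitone : ∀ ⦃i j : ℕ⦄, i ≤ j → parts j ≤ parts i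
  eventually_zero : ∃ N, ∀ i, N ≤ i → parts i = 0

namespace AbPartition

/-- The length of a partition: the number of nonzero parts. -/
noncomputable def length (l : AbPartition) : ℕ :=
  sInf {N | ∀ i, N ≤ i → l.parts i = 0}

/-- The size `|λ|` of a partition: the sum of its parts. -/
noncomputable def size (l : AbPartition) : ℕ :=
  ∑ i ∈ Finset.range l.length, l.parts i

/-- The beta-numbers of `l` with respect to `k` beads: `λ_i + k - i` for `i = 1, …, k`
(here 0-indexed: bead for row `i+1` sits at `parts i + (k - 1 - i)`). -/
def betaSet (l : AbPartition) (k : ℕ) : Finset ℕ :=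
  (Finset.range k).image fun i => l.parts i + (k - 1 - i)

/-- Dominance order: `l ⊵ m`. -/
def Dominates (l m : AbPartition) : Prop :=
  ∀ j, ∑ i ∈ Finset.range j, m.parts i ≤ ∑ i ∈ Finset.range j, l.parts i

/-- Inserting an empty runner before runner `α` into an `e`-abacus: a bead at
position `m*e + r` moves to `m*(e+1) + r` if `r < α` and to `m*(e+1) + r + 1` otherwise. -/
def insRunner (e α p : ℕ) : ℕ :=
  (p / e) * (e + 1) + p % e + (if p % e < α then 0 else 1)

/-- `lp` is the partition `λ⁺` obtained from `l` by inserting an empty runner at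
position `α` into its `e`-abacus with `k` beads. -/
def IsPlus (e α k : ℕ) (l lp : AbPartition) : Prop :=
  lp.length ≤ k ∧ lp.betaSet k = (l.betaSet k).image (insRunner e α)

/-- A partition is `d`-regular if no `d` of its nonzero parts are equal. -/
def Regular (d : ℕ) (l : AbPartition) : Prop :=
  ¬ ∃ i, l.parts i ≠ 0 ∧ l.parts (i + (d - 1)) = l.parts i

/-- The Young diagram of a partition, as a set of (row, column) cells, 0-indexed. -/
def cells (l : AbPartition) : Set (ℕ × ℕ) := {x | x.2 < l.parts x.1}

/-- `c 0, c 1, …, c (e-1)` are the successive cells of a ribbon: each next cell is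
directly below, or directly to the left of, the previous cell. -/
def RibbonSteps (e : ℕ) (c : ℕ → ℕ × ℕ) : Prop :=
  ∀ i, i + 1 < e →
    (c (i + 1) = ((c i).1 + 1, (c i).2)) ∨
    ((c i).2 = (c (i + 1)).2 + 1 ∧ (c (i + 1)).1 = (c i).1)

/-- `R` is an `e`-ribbon with cell enumeration `c` (head `c 0`). -/
def IsRibbonC (e : ℕ) (c : ℕ → ℕ × ℕ) (R : Set (ℕ × ℕ)) : Prop :=
  R = c '' (Set.Iio e) ∧ Set.InjOn c (Set.Iio e) ∧ RibbonSteps e c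

/-- The spin of an `e`-ribbon: the number of vertical steps. -/
def spinOf (e : ℕ) (c : ℕ → ℕ × ℕ) : ℕ :=
  ((Finset.range (e - 1)).filter fun i => (c (i + 1)).1 = (c i).1 + 1).card

/-- The head of the ribbon lies in row 1 or directly below a cell of `l`. -/
def HeadOK (l : AbPartition) (c : ℕ → ℕ × ℕ) : Prop :=
  (c 0).1 = 0 ∨ ((c 0).1 - 1, (c 0).2) ∈ cells l

/-- `l` is obtained from `n` by removing a single rim hook (ribbon) of length `e`. -/
def RemoveRibbon (e : ℕ) (n l : AbPartition) : Prop :=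
  cells l ⊆ cells n ∧ ∃ c, IsRibbonC e c (cells n \ cells l)

/-- `κ` is the `e`-core of `l`: obtained by repeatedly removing `e`-rim-hooks,
and no further `e`-rim-hook can be removed. -/
def IsECoreOf (e : ℕ) (κ l : AbPartition) : Prop :=
  Relation.ReflTransGen (RemoveRibbon e) l κ ∧ ¬ ∃ m, RemoveRibbon e κ m

/-- `l` has `e`-weight `w`: `|l| = |e-core of l| + w * e`. -/
def EWeight (e : ℕ) (l : AbPartition) (w : ℕ) : Prop :=
  ∃ κ, IsECoreOf e κ l ∧ l.size = κ.size + w * e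

/-- `λ →_{m:e} ν` with total spin `s`: `[ν] \ [λ]` is a disjoint union of `m`
`e`-ribbons, each of whose heads lies in row 1 or directly below a cell of `λ`,
the sum of whose spins is `s`. -/
def HAddSpin (e m s : ℕ) (l n : AbPartition) : Prop :=
  cells l ⊆ cells n ∧
  ∃ (R : Fin m → Set (ℕ × ℕ)) (c : Fin m → ℕ → ℕ × ℕ),
    ((cells n \ cells l) = ⋃ i, R i) ∧
    (Pairwise fun i j => Disjoint (R i) (R j)) ∧
    (∀ i, IsRibbonC e (c i) (R i) ∧ HeadOK l (c i)) ∧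
    s = ∑ i, spinOf e (c i)

/-- `λ →_{m:e} ν`. -/
def HAdd (e m : ℕ) (l n : AbPartition) : Prop := ∃ s, HAddSpin e m s l n

/-- `x` is an addable node of `l`. -/
def Addable (l : AbPartition) (x : ℕ × ℕ) : Prop :=
  x ∉ cells l ∧ ∃ n : AbPartition, cells n = insert x (cells l)

/-- `x` is a removable node of `l`. -/
def Removable (l : AbPartition) (x : ℕ × ℕ) : Prop :=
  x ∈ cells l ∧ ∃ n : AbPartition, cells n = cells l \ {x}

/-- The `e`-residue of a node `(c,d)`: `d - c mod e`. -/
def res (e : ℕ) (x : ℕ × ℕ) : ZMod e := (x.2 : ZMod e) - (x.1 : ZMod e)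

/-- `N_i(λ,ν) = #{addable i-nodes of λ above x} - #{removable i-nodes of λ above x}`,
where `i = res e x` and `y` is above `x` iff `y.1 < x.1`. -/
noncomputable def Nnum (e : ℕ) (l : AbPartition) (x : ℕ × ℕ) : ℤ :=
  ({y | Addable l y ∧ res e y = res e x ∧ y.1 < x.1}.ncard : ℤ) -
  ({y | Removable l y ∧ res e y = res e x ∧ y.1 < x.1}.ncard : ℤ)

end AbPartition

/-!
On the `e`-abacus, sliding a bead from position `b` up its runner into the empty position
`b - e` removes an `e`-rim hook (the beads strictly between `b - e` and `b` each move up one row),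
and it lowers by exactly one the number of pairs (bead, empty position above it on its runner).
Conversely, a removable `e`-rim hook always yields such a slide, so the count vanishes exactly on
`e`-cores, and sliding beads until none can move removes one rim hook per unit of the count.
-/

def gapsAbove (e : ℕ) (B : Finset ℕ) (p : ℕ) : Finset ℕ :=
  (range p).filter fun q => q % e = p % e ∧ q ∉ B

def gapCount (e : ℕ) (B : Finset ℕ) : ℕ :=
  ∑ p ∈ B, (gapsAbove e B p).card

section Abacus

variable {e b : ℕ} {B : Finset ℕ}

theorem mem_gapsAbove {p q : ℕ} :
    q ∈ gapsAbove e B p ↔ q < p ∧ q % e = p % e ∧ q ∉ B := by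
  simp [gapsAbove]

theorem gapsAbove_slide_self (hb : b ∈ B) (heb : e ≤ b) (hgap : b - e ∉ B) :
    gapsAbove e B b = insert (b - e) (gapsAbove e (insert (b - e) (B.erase b)) (b - e)) := by
  have hmod : (b - e) % e = b % e := (Nat.mod_eq_sub_mod heb).symm
  have he : 0 < e := Nat.pos_of_ne_zero fun h => hgap (by simpa [h] using hb)
  ext q
  simp only [mem_gapsAbove, mem_insert, mem_erase, hmod, not_or, not_and_or, not_not]
  constructor
  · rintro ⟨hqb, hqmod, hqB⟩
    have := Nat.ModEq.add_le_of_lt hqmod hqb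
    by_cases hq : q = b - e
    · exact Or.inl hq
    · exact Or.inr ⟨by omega, hqmod, hq, Or.inr hqB⟩
  · rintro (rfl | ⟨hqb, hqmod, hq, rfl | hqB⟩)
    · exact ⟨by omega, hmod, hgap⟩
    · omega
    · exact ⟨by omega, hqmod, hqB⟩

theorem card_gapsAbove_slide_of_ne (hb : b ∈ B) (heb : e ≤ b) (hgap : b - e ∉ B) {p : ℕ}
    (hpb : p ≠ b) :
    (gapsAbove e (insert (b - e) (B.erase b)) p).card = (gapsAbove e B p).card := by
  have hmod : (b - e) % e = b % e := (Nat.mod_eq_sub_mod heb).symm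
  have he : 0 < e := Nat.pos_of_ne_zero fun h => hgap (by simpa [h] using hb)
  by_cases hbelow : p % e = b % e ∧ b < p
  · -- the gap at `b - e` above `p` is traded for the gap at `b`
    have hbe : b - e ∈ gapsAbove e B p := mem_gapsAbove.2 ⟨by omega, by omega, hgap⟩
    have hswap : gapsAbove e (insert (b - e) (B.erase b)) p =
        insert b ((gapsAbove e B p).erase (b - e)) := by
      ext q
      simp only [mem_gapsAbove, mem_insert, mem_erase]
      constructor
      · rintro ⟨hqp, hqmod, hqB⟩
        by_cases hq : q = b
        · exact Or.inl hq
        · exact Or.inr ⟨fun h => hqB (Or.inl h), hqp, hqmod, fun h => hqB (Or.inr ⟨hq, h⟩)⟩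
      · rintro (rfl | ⟨hq, hqp, hqmod, hqB⟩)
        · exact ⟨hbelow.2, hbelow.1.symm, by rintro (h | ⟨h, -⟩) <;> omega⟩
        · exact ⟨hqp, hqmod, by rintro (h | ⟨-, h⟩) <;> contradiction⟩
    have hbnot : b ∉ (gapsAbove e B p).erase (b - e) := fun h =>
      (mem_gapsAbove.1 (mem_of_mem_erase h)).2.2 hb
    rw [hswap, card_insert_of_notMem hbnot, card_erase_of_mem hbe,
      Nat.sub_add_cancel (card_pos.2 ⟨_, hbe⟩)]
  · -- neither `b` nor `b - e` lies above `p` on its runner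
    congr 1
    refine filter_congr fun q hq => ?_
    rw [mem_range] at hq
    simp only [mem_insert, mem_erase, not_or, not_and_or, not_not]
    refine and_congr_right fun hqmod => ?_
    have hpb' : p + e ≤ b ∨ p % e ≠ b % e := by
      by_cases hpe : p % e = b % e
      · exact Or.inl (Nat.ModEq.add_le_of_lt hpe (by omega))
      · exact Or.inr hpe
    constructor
    · rintro ⟨-, rfl | h⟩ <;> omega
    · intro h
      refine ⟨?_, Or.inr h⟩
      rintro rfl
      omega

theorem gapCount_slide (hb : b ∈ B) (heb : e ≤ b) (hgap : b - e ∉ B) :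
    gapCount e (insert (b - e) (B.erase b)) + 1 = gapCount e B := by
  have hnotmem : b - e ∉ B.erase b := fun h => hgap (mem_of_mem_erase h)
  rw [gapCount, gapCount, sum_insert hnotmem, ← add_sum_erase B _ hb,
    gapsAbove_slide_self hb heb hgap, card_insert_of_notMem (by simp [mem_gapsAbove]),
    sum_congr rfl fun p hp => card_gapsAbove_slide_of_ne hb heb hgap (ne_of_mem_erase hp)]
  ring

theorem exists_slide_of_mem_gapsAbove {p q : ℕ} (hp : p ∈ B) (hq : q ∈ gapsAbove e B p) :
    ∃ b ∈ B, e ≤ b ∧ b - e ∉ B := by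
  induction p using Nat.strong_induction_on with
  | _ p ih =>
    obtain ⟨hqp, hqmod, hqB⟩ := mem_gapsAbove.1 hq
    have hqe := Nat.ModEq.add_le_of_lt hqmod hqp
    by_cases hpe : p - e ∈ B
    · have he : 0 < e := Nat.pos_of_ne_zero fun h => by simp [h] at hqmod; omega
      have hq' : q ∈ gapsAbove e B (p - e) := by
        refine mem_gapsAbove.2 ⟨?_, hqmod.trans (Nat.mod_eq_sub_mod (by omega)), hqB⟩
        rcases (Nat.le_sub_of_add_le hqe).lt_or_eq with h | h
        · exact h
        · exact absurd (h ▸ hpe) hqB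
      exact ih (p - e) (by omega) hpe hq'
    · exact ⟨p, hp, by omega, hpe⟩

theorem exists_slide_of_gapCount_ne_zero (h : gapCount e B ≠ 0) :
    ∃ b ∈ B, e ≤ b ∧ b - e ∉ B := by
  obtain ⟨p, hp, hcard⟩ := exists_ne_zero_of_sum_ne_zero h
  obtain ⟨q, hq⟩ := card_ne_zero.1 hcard
  exact exists_slide_of_mem_gapsAbove hp hq

end Abacus

namespace AbPartition

theorem parts_eq_zero_of_length_le (l : AbPartition) {i : ℕ} (h : l.length ≤ i) :
    l.parts i = 0 :=
  Nat.sInf_mem (s := {N | ∀ i, N ≤ i → l.parts i = 0}) l.eventually_zero i h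

theorem length_le_of_forall (l : AbPartition) {N : ℕ} (h : ∀ i, N ≤ i → l.parts i = 0) :
    l.length ≤ N :=
  Nat.sInf_le h

theorem size_eq_sum_range (l : AbPartition) {k : ℕ} (h : l.length ≤ k) :
    l.size = ∑ i ∈ range k, l.parts i :=
  sum_subset (range_subset_range.2 h) fun _ _ hi =>
    l.parts_eq_zero_of_length_le (by simpa using hi)

theorem beta_lt_beta (l : AbPartition) {k i j : ℕ} (hij : i < j) (hj : j < k) :
    l.parts j + (k - 1 - j) < l.parts i + (k - 1 - i) := by
  have := l.antitone hij.le
  omega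

theorem beta_injOn (l : AbPartition) (k : ℕ) :
    Set.InjOn (fun i => l.parts i + (k - 1 - i)) (range k) := by
  intro i hi j hj h
  simp only [coe_range, Set.mem_Iio] at hi hj
  rcases lt_trichotomy i j with hij | rfl | hij
  · exact absurd h (l.beta_lt_beta hij hj).ne'
  · rfl
  · exact absurd h (l.beta_lt_beta hij hi).ne

theorem mem_betaSet {l : AbPartition} {k b : ℕ} :
    b ∈ l.betaSet k ↔ ∃ i < k, l.parts i + (k - 1 - i) = b := by
  simp [betaSet]

theorem sum_betaSet (l : AbPartition) {k : ℕ} (h : l.length ≤ k) :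
    ∑ b ∈ l.betaSet k, b = l.size + ∑ i ∈ range k, (k - 1 - i) := by
  rw [betaSet, sum_image (l.beta_injOn k), sum_add_distrib, l.size_eq_sum_range h]

theorem size_add_eq_of_betaSet_eq {l l' : AbPartition} {k b p : ℕ} (hl : l.length ≤ k)
    (hl' : l'.length ≤ k) (hb : b ∈ l.betaSet k) (hp : p ∉ l.betaSet k)
    (h : l'.betaSet k = insert p ((l.betaSet k).erase b)) :
    l'.size + b = l.size + p := by
  have hsum := l'.sum_betaSet hl'
  rw [h, sum_insert fun h' => hp (mem_of_mem_erase h')] at hsum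
  have := sum_erase_add _ (fun x => x) hb
  have := l.sum_betaSet hl
  omega

theorem parts_le_of_cells_subset {m κ : AbPartition} (h : cells m ⊆ cells κ) (i : ℕ) :
    m.parts i ≤ κ.parts i := by
  by_contra! hlt
  have : (i, κ.parts i) ∈ cells κ := h (show κ.parts i < m.parts i from hlt)
  exact lt_irrefl _ (show κ.parts i < κ.parts i from this)

theorem RibbonSteps.fst_le_and_snd_le_and_eq {e : ℕ} {c : ℕ → ℕ × ℕ} (hc : RibbonSteps e c)
    {i j : ℕ} (hij : i ≤ j) (hj : j < e) :
    (c i).1 ≤ (c j).1 ∧ (c j).2 ≤ (c i).2 ∧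
      (c j).1 + (c i).2 = (c i).1 + (c j).2 + (j - i) := by
  induction j, hij using Nat.le_induction with
  | base => omega
  | succ j hij ih =>
    have := ih (by omega)
    rcases hc j (by omega) with h | h
    · rw [h]; dsimp only; omega
    · omega

/-- A removed `e`-rim hook runs from the end of row `r` of `κ` down to column `m.parts t` of
row `t`, and leaves row `t + 1` untouched. -/
theorem RemoveRibbon.exists_rows {e : ℕ} (he : 0 < e) {κ m : AbPartition}
    (h : RemoveRibbon e κ m) :
    ∃ r t, r ≤ t ∧ κ.parts r + t = m.parts t + r + e ∧ m.parts t < κ.parts t ∧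
      κ.parts (t + 1) = m.parts (t + 1) := by
  obtain ⟨hsub, c, him, -, hsteps⟩ := h
  have hmem : ∀ i j, m.parts i ≤ j ∧ j < κ.parts i ↔ ∃ n < e, c n = (i, j) := by
    intro i j
    have := Set.ext_iff.1 him (i, j)
    simpa [cells, and_comm] using this
  have hcell j (hj : j < e) := (hmem (c j).1 (c j).2).2 ⟨j, hj, rfl⟩
  have hlast := hcell (e - 1) (by omega)
  obtain ⟨j, hj, hcj⟩ := (hmem (c 0).1 (κ.parts (c 0).1 - 1)).1 (by have := hcell 0 he; omega)
  have hhead : (c 0).2 + 1 = κ.parts (c 0).1 := by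
    have := (hsteps.fst_le_and_snd_le_and_eq (Nat.zero_le j) hj).2.1
    rw [hcj] at this
    have := hcell 0 he
    omega
  obtain ⟨j', hj', hcj'⟩ :=
    (hmem (c (e - 1)).1 (m.parts (c (e - 1)).1)).1 (by omega)
  have htail : (c (e - 1)).2 = m.parts (c (e - 1)).1 := by
    have := (hsteps.fst_le_and_snd_le_and_eq (Nat.le_sub_one_of_lt hj') (by omega)).2.1
    rw [hcj'] at this
    dsimp only at this
    omega
  have hbelow : κ.parts ((c (e - 1)).1 + 1) = m.parts ((c (e - 1)).1 + 1) := by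
    refine le_antisymm ?_ (parts_le_of_cells_subset hsub _)
    by_contra! hlt
    obtain ⟨i, hi, hci⟩ :=
      (hmem ((c (e - 1)).1 + 1) (m.parts ((c (e - 1)).1 + 1))).1 ⟨le_rfl, hlt⟩
    have := (hsteps.fst_le_and_snd_le_and_eq (Nat.le_sub_one_of_lt hi) (by omega)).1
    rw [hci] at this
    dsimp only at this
    omega
  have hchain := hsteps.fst_le_and_snd_le_and_eq (Nat.zero_le (e - 1)) (by omega)
  exact ⟨(c 0).1, (c (e - 1)).1, hchain.1, by omega, htail ▸ hlast.2, hbelow⟩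

theorem exists_slide_of_removeRibbon {e k : ℕ} (he : 0 < e) {κ m : AbPartition}
    (hκ : κ.length ≤ k) (h : RemoveRibbon e κ m) :
    ∃ b ∈ κ.betaSet k, e ≤ b ∧ b - e ∉ κ.betaSet k := by
  obtain ⟨r, t, hrt, hsize, htail, hbelow⟩ := h.exists_rows he
  have htk : t < k := by
    by_contra! hkt
    have := κ.parts_eq_zero_of_length_le (hκ.trans hkt)
    omega
  refine ⟨κ.parts r + (k - 1 - r), mem_betaSet.2 ⟨r, by omega, rfl⟩, by omega, ?_⟩
  rintro hmem
  obtain ⟨j, hj, hbj⟩ := mem_betaSet.1 hmem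
  rcases le_or_gt j t with hjt | htj
  · have := κ.antitone hjt
    omega
  · have := κ.antitone (show t + 1 ≤ j by omega)
    have := m.antitone (Nat.le_add_right t 1)
    omega

theorem not_removeRibbon_of_gapCount_eq_zero {e k : ℕ} (he : 0 < e) {κ : AbPartition}
    (hκ : κ.length ≤ k) (h : gapCount e (κ.betaSet k) = 0) :
    ¬ ∃ m, RemoveRibbon e κ m := by
  rintro ⟨m, hm⟩
  obtain ⟨b, hb, heb, hgap⟩ := exists_slide_of_removeRibbon he hκ hm
  have := gapCount_slide hb heb hgap
  omega

theorem isRibbonC_singleton (x : ℕ × ℕ) : IsRibbonC 1 (fun _ => x) {x} := by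
  refine ⟨?_, fun i hi j hj _ => ?_, fun i hi => by omega⟩
  · ext y
    simp [eq_comm]
  · simp only [Set.mem_Iio, Nat.lt_one_iff] at hi hj
    rw [hi, hj]

theorem IsRibbonC.cons {e : ℕ} {c : ℕ → ℕ × ℕ} {S : Set (ℕ × ℕ)} (h : IsRibbonC e c S)
    {x : ℕ × ℕ} (hx : x ∉ S)
    (hstep : c 0 = (x.1 + 1, x.2) ∨ (x.2 = (c 0).2 + 1 ∧ (c 0).1 = x.1)) :
    ∃ c' : ℕ → ℕ × ℕ, c' 0 = x ∧ IsRibbonC (e + 1) c' (insert x S) := by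
  obtain ⟨rfl, hinj, hsteps⟩ := h
  refine ⟨fun n => match n with | 0 => x | n + 1 => c n, rfl, ?_, ?_, ?_⟩
  · ext y
    simp only [Set.mem_insert_iff, Set.mem_image, Set.mem_Iio]
    constructor
    · rintro (rfl | ⟨i, hi, rfl⟩)
      · exact ⟨0, by omega, rfl⟩
      · exact ⟨i + 1, by simpa using hi, rfl⟩
    · rintro ⟨_ | i, hi, rfl⟩
      · exact Or.inl rfl
      · exact Or.inr ⟨i, by omega, rfl⟩
  · rintro (_ | i) hi (_ | j) hj hij
    · rfl
    · exact absurd ⟨j, by simp only [Set.mem_Iio] at hj ⊢; omega, hij.symm⟩ hx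
    · exact absurd ⟨i, by simp only [Set.mem_Iio] at hi ⊢; omega, hij⟩ hx
    · simp only [Set.mem_Iio] at hi hj
      rw [hinj (show i < e by omega) (show j < e by omega) hij]
  · rintro (_ | i) hi
    · exact hstep
    · exact hsteps i (by omega)

def skewStrip (r t : ℕ) (lo hi : ℕ → ℕ) : Set (ℕ × ℕ) :=
  {x | r ≤ x.1 ∧ x.1 ≤ t ∧ lo x.1 ≤ x.2 ∧ x.2 < hi x.1}

section SkewStrip

variable {r t : ℕ} {lo hi : ℕ → ℕ}

theorem skewStrip_eq_insert_update (hrt : r ≤ t) (hr : lo r + 1 < hi r) :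
    skewStrip r t lo hi =
      insert (r, hi r - 1) (skewStrip r t lo (Function.update hi r (hi r - 1))) := by
  ext ⟨i, j⟩
  simp only [skewStrip, Set.mem_ofPred_eq, Set.mem_insert_iff, Prod.mk.injEq]
  rcases eq_or_ne i r with rfl | hir
  · simp only [Function.update_self, le_refl, true_and]
    omega
  · simp only [Function.update_of_ne hir]
    omega

theorem skewStrip_eq_insert_add_one (hrt : r < t) (hr : lo r + 1 = hi r) :
    skewStrip r t lo hi = insert (r, hi r - 1) (skewStrip (r + 1) t lo hi) := by
  ext ⟨i, j⟩
  simp only [skewStrip, Set.mem_ofPred_eq, Set.mem_insert_iff, Prod.mk.injEq]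
  rcases eq_or_ne i r with rfl | hir <;> omega

theorem skewStrip_self (hr : lo r + 1 = hi r) : skewStrip r r lo hi = {(r, hi r - 1)} := by
  ext ⟨i, j⟩
  simp only [skewStrip, Set.mem_ofPred_eq, Set.mem_singleton_iff, Prod.mk.injEq]
  constructor
  · rintro ⟨h1, h2, h3, h4⟩
    obtain rfl : i = r := le_antisymm h2 h1
    omega
  · rintro ⟨rfl, rfl⟩
    omega

/-- If each row `i + 1` ends directly below the first cell of row `i`, the rows `r, …, t` of the
skew shape form a ribbon, traversed from the last cell of row `r`. -/
theorem exists_isRibbonC_skewStrip (hrt : r ≤ t)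
    (hstep : ∀ i, r ≤ i → i < t → lo i + 1 = hi (i + 1)) (hlt : ∀ i, r ≤ i → i ≤ t → lo i < hi i)
    {e : ℕ} (hsum : ∑ i ∈ Icc r t, (hi i - lo i) = e) :
    ∃ c : ℕ → ℕ × ℕ, c 0 = (r, hi r - 1) ∧ IsRibbonC e c (skewStrip r t lo hi) := by
  induction e generalizing r hi with
  | zero =>
    have := sum_eq_zero_iff.1 hsum r (by simp [hrt])
    have := hlt r le_rfl hrt
    omega
  | succ e ih =>
    rcases (show lo r + 1 ≤ hi r from hlt r le_rfl hrt).lt_or_eq with hlong | hshort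
    · -- peel off the last cell of row `r`
      have hsum' : ∑ i ∈ Icc r t, (Function.update hi r (hi r - 1) i - lo i) = e := by
        rw [← add_sum_erase _ _ (by simp [hrt] : r ∈ Icc r t)] at hsum ⊢
        rw [sum_congr rfl fun i hi => by rw [Function.update_of_ne (ne_of_mem_erase hi)],
          Function.update_self]
        omega
      obtain ⟨c, hc0, hc⟩ := ih hrt
        (fun i h1 h2 => by rw [Function.update_of_ne (by omega)]; exact hstep i h1 h2)
        (fun i h1 h2 => by
          rcases h1.lt_or_eq with h1 | rfl
          · rw [Function.update_of_ne (by omega)]; exact hlt i h1.le h2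
          · rw [Function.update_self]; omega)
        hsum'
      rw [skewStrip_eq_insert_update hrt hlong]
      refine hc.cons (by simp [skewStrip]) (Or.inr ?_)
      simp only [hc0, Function.update_self, and_true]
      omega
    · rcases hrt.lt_or_eq with hrt | rfl
      · -- row `r` is a single cell: step down into row `r + 1`
        rw [← insert_Icc_add_one_left_eq_Icc hrt.le, sum_insert (by simp)] at hsum
        obtain ⟨c, hc0, hc⟩ := ih (r := r + 1) hrt (fun i h1 h2 => hstep i (by omega) h2)
          (fun i h1 h2 => hlt i (by omega) h2) (by omega)
        rw [skewStrip_eq_insert_add_one hrt hshort]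
        refine hc.cons (by simp [skewStrip]) (Or.inl ?_)
        rw [hc0, ← hstep r le_rfl hrt, Prod.mk.injEq]
        omega
      · obtain rfl : e = 0 := by simp at hsum; omega
        exact ⟨fun _ => (r, hi r - 1), rfl, skewStrip_self hshort ▸ isRibbonC_singleton _⟩

end SkewStrip

structure IsSplit (l : AbPartition) (k p s : ℕ) : Prop where
  le : s ≤ k
  lt_beta : ∀ j < s, p < l.parts j + (k - 1 - j)
  beta_lt : ∀ j, s ≤ j → j < k → l.parts j + (k - 1 - j) < p

theorem exists_isSplit (l : AbPartition) {k p : ℕ} (hp : p ∉ l.betaSet k) :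
    ∃ s, l.IsSplit k p s := by
  classical
  have hex : ∃ j, k ≤ j ∨ l.parts j + (k - 1 - j) < p := ⟨k, Or.inl le_rfl⟩
  refine ⟨Nat.find hex, Nat.find_min' hex (Or.inl le_rfl), fun j hj => ?_, fun j hj hjk => ?_⟩
  · have := Nat.find_min hex hj
    have hne : l.parts j + (k - 1 - j) ≠ p := fun h => hp (mem_betaSet.2 ⟨j, by omega, h⟩)
    omega
  · rcases Nat.find_spec hex with h | h
    · omega
    · rcases hj.lt_or_eq with hj | hj
      · have := l.beta_lt_beta hj hjk
        omega
      · rw [← hj]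
        exact h

theorem parts_pos_of_lt_beta (l : AbPartition) {k p j : ℕ} (hp : p ∉ l.betaSet k)
    (hj : p < l.parts j + (k - 1 - j)) : 0 < l.parts j := by
  by_contra! h0
  have := l.antitone (show j ≤ k - 1 - p by omega)
  exact hp (mem_betaSet.2 ⟨k - 1 - p, by omega, by omega⟩)

/-- Moving the bead of row `r` to the empty position `p`, where `s` is as in `IsSplit`: the
beads of rows `r + 1, …, s - 1` move up one row, and the bead at `p` becomes row `s - 1`. -/
def slideParts (l : AbPartition) (k r s p i : ℕ) : ℕ :=
  if i < r then l.parts i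
  else if i + 1 < s then l.parts (i + 1) - 1
  else if i + 1 = s then p - (k - s)
  else l.parts i

section Slide

variable {l : AbPartition} {k r s p i : ℕ}

theorem slideParts_succ_le (hl : l.length ≤ k) (hs : l.IsSplit k p s) (i : ℕ) :
    l.slideParts k r s p (i + 1) ≤ l.slideParts k r s p i := by
  have h₁ := l.antitone (Nat.le_add_right i 1)
  have h₂ := l.antitone (Nat.le_add_right (i + 1) 1)
  have hsk : l.parts s ≤ p - (k - s) := by
    rcases hs.le.lt_or_eq with hsk | rfl
    · have := hs.beta_lt s le_rfl hsk
      omega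
    · rw [l.parts_eq_zero_of_length_le hl]
      exact Nat.zero_le _
  have hi : i < s → p < l.parts i + (k - 1 - i) := hs.lt_beta i
  have hi1 : i + 1 < s → p < l.parts (i + 1) + (k - 1 - (i + 1)) := hs.lt_beta (i + 1)
  unfold slideParts
  split_ifs <;> first | omega | (subst s; omega)

theorem slideParts_of_lt (hi : i < r) : l.slideParts k r s p i = l.parts i := by
  simp [slideParts, hi]

theorem slideParts_of_le (hrs : r < s) (hi : s ≤ i) : l.slideParts k r s p i = l.parts i := by
  unfold slideParts
  split_ifs <;> omega

theorem slideParts_add_one (hs : l.IsSplit k p s) (hp : p ∉ l.betaSet k) (hri : r ≤ i)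
    (hi : i + 1 < s) : l.slideParts k r s p i + 1 = l.parts (i + 1) := by
  have := l.parts_pos_of_lt_beta hp (hs.lt_beta (i + 1) hi)
  unfold slideParts
  split_ifs <;> omega

theorem slideParts_lt (hs : l.IsSplit k p s) (hp : p ∉ l.betaSet k) (hri : r ≤ i)
    (hi : i < s) : l.slideParts k r s p i < l.parts i := by
  rcases (Nat.succ_le_of_lt hi).lt_or_eq with hi | hi
  · have := slideParts_add_one hs hp hri hi
    have := l.antitone (Nat.le_add_right i 1)
    omega
  · have := l.parts_pos_of_lt_beta hp (hs.lt_beta i (by omega))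
    have := hs.lt_beta i (by omega)
    unfold slideParts
    split_ifs <;> omega

theorem beta_slideParts (hs : l.IsSplit k p s) (hp : p ∉ l.betaSet k) (hi : i < k) :
    l.slideParts k r s p i + (k - 1 - i) =
      if i < r then l.parts i + (k - 1 - i)
      else if i + 1 < s then l.parts (i + 1) + (k - 1 - (i + 1))
      else if i + 1 = s then p
      else l.parts i + (k - 1 - i) := by
  have hpk : k - s ≤ p := by
    rcases hs.le.lt_or_eq with hsk | rfl
    · have := hs.beta_lt s le_rfl hsk
      omega
    · omega
  have := hs.le
  unfold slideParts
  split_ifs with h₁ h₂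
  · rfl
  · have := l.parts_pos_of_lt_beta hp (hs.lt_beta (i + 1) h₂)
    omega
  all_goals omega

theorem slideParts_eq_zero (hl : l.length ≤ k) (hs : l.IsSplit k p s) (hi : k ≤ i) :
    l.slideParts k r s p i = 0 := by
  have := hs.le
  unfold slideParts
  split_ifs <;> first | omega | exact l.parts_eq_zero_of_length_le (by omega)

def slide (l : AbPartition) (hl : l.length ≤ k) (hs : l.IsSplit k p s) (r : ℕ) :
    AbPartition where
  parts := l.slideParts k r s p
  antitone := antitone_nat_of_succ_le (slideParts_succ_le hl hs)
  eventually_zero := ⟨k, fun _ hi => slideParts_eq_zero hl hs hi⟩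

theorem slide_parts (hl : l.length ≤ k) (hs : l.IsSplit k p s) :
    (l.slide hl hs r).parts = l.slideParts k r s p :=
  rfl

theorem length_slide_le (hl : l.length ≤ k) (hs : l.IsSplit k p s) :
    (l.slide hl hs r).length ≤ k :=
  length_le_of_forall _ fun _ hi => slideParts_eq_zero hl hs hi

theorem betaSet_slide (hl : l.length ≤ k) (hs : l.IsSplit k p s) (hp : p ∉ l.betaSet k)
    (hrs : r < s) :
    (l.slide hl hs r).betaSet k = insert p ((l.betaSet k).erase (l.parts r + (k - 1 - r))) := by
  have hne {i j : ℕ} (hi : i < k) (hj : j < k) (hij : i ≠ j) :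
      l.parts i + (k - 1 - i) ≠ l.parts j + (k - 1 - j) :=
    (l.beta_injOn k).ne (by simpa using hi) (by simpa using hj) hij
  have := hs.le
  ext x
  simp only [mem_insert, mem_erase, mem_betaSet, slide_parts]
  constructor
  · rintro ⟨i, hik, hx⟩
    rw [beta_slideParts hs hp hik] at hx
    split_ifs at hx with h₁ h₂ h₃ <;> subst hx
    · exact Or.inr ⟨hne hik (by omega) (by omega), i, hik, rfl⟩
    · exact Or.inr ⟨hne (by omega) (by omega) (by omega), i + 1, by omega, rfl⟩
    · exact Or.inl rfl
    · exact Or.inr ⟨hne hik (by omega) (by omega), i, hik, rfl⟩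
  · rintro (hx | ⟨hx, j, hjk, rfl⟩)
    · refine ⟨s - 1, by omega, ?_⟩
      rw [beta_slideParts hs hp (by omega), if_neg (by omega), if_neg (by omega),
        if_pos (by omega), hx]
    · rcases lt_trichotomy j r with hjr | rfl | hrj
      · refine ⟨j, hjk, ?_⟩
        rw [beta_slideParts hs hp hjk, if_pos hjr]
      · exact absurd rfl hx
      · rcases lt_or_ge j s with hjs | hsj
        · refine ⟨j - 1, by omega, ?_⟩
          rw [beta_slideParts hs hp (by omega), if_neg (by omega), if_pos (by omega),
            Nat.sub_add_cancel (by omega)]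
        · refine ⟨j, hjk, ?_⟩
          rw [beta_slideParts hs hp hjk, if_neg (by omega), if_neg (by omega), if_neg (by omega)]

theorem slideParts_le (hs : l.IsSplit k p s) (hp : p ∉ l.betaSet k) (hrs : r < s) (i : ℕ) :
    l.slideParts k r s p i ≤ l.parts i := by
  rcases lt_or_ge i r with hir | hri
  · exact (slideParts_of_lt hir).le
  rcases lt_or_ge i s with his | hsi
  · exact (slideParts_lt hs hp hri his).le
  · exact (slideParts_of_le hrs hsi).le

theorem cells_sdiff_slide (hl : l.length ≤ k) (hs : l.IsSplit k p s) (hrs : r < s) :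
    cells l \ cells (l.slide hl hs r) = skewStrip r (s - 1) (l.slideParts k r s p) l.parts := by
  ext ⟨i, j⟩
  change j < l.parts i ∧ ¬ j < l.slideParts k r s p i ↔
    r ≤ i ∧ i ≤ s - 1 ∧ l.slideParts k r s p i ≤ j ∧ j < l.parts i
  rcases lt_or_ge i r with hir | hri
  · rw [slideParts_of_lt hir]
    omega
  rcases lt_or_ge i s with his | hsi
  · omega
  · rw [slideParts_of_le hrs hsi]
    omega

theorem sum_Icc_sub_slideParts (hl : l.length ≤ k) (hs : l.IsSplit k p s)
    (hp : p ∉ l.betaSet k) (hrs : r < s) :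
    ∑ i ∈ Icc r (s - 1), (l.parts i - l.slideParts k r s p i) =
      l.parts r + (k - 1 - r) - p := by
  have hsize := size_add_eq_of_betaSet_eq hl (length_slide_le hl hs)
    (mem_betaSet.2 ⟨r, by have := hs.le; omega, rfl⟩) hp (betaSet_slide hl hs hp hrs)
  rw [l.size_eq_sum_range hl, (l.slide hl hs r).size_eq_sum_range (length_slide_le hl hs)]
    at hsize
  have hsub : ∑ i ∈ range k, (l.parts i - l.slideParts k r s p i) =
      ∑ i ∈ range k, l.parts i - ∑ i ∈ range k, l.slideParts k r s p i :=
    sum_tsub_distrib _ fun i _ => slideParts_le hs hp hrs i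
  have hIcc : ∑ i ∈ Icc r (s - 1), (l.parts i - l.slideParts k r s p i) =
      ∑ i ∈ range k, (l.parts i - l.slideParts k r s p i) := by
    refine sum_subset (fun i hi => ?_) fun i _ hi => ?_
    · have := hs.le
      simp only [mem_Icc, mem_range] at hi ⊢
      omega
    · simp only [mem_Icc, not_and_or, not_le] at hi
      rw [Nat.sub_eq_zero_iff_le]
      rcases hi with hir | hsi
      · exact (slideParts_of_lt hir).ge
      · exact (slideParts_of_le hrs (by omega)).ge
  rw [slide_parts] at hsize
  omega

theorem removeRibbon_slide (hl : l.length ≤ k) (hs : l.IsSplit k p s) (hp : p ∉ l.betaSet k)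
    (hrs : r < s) : RemoveRibbon (l.parts r + (k - 1 - r) - p) l (l.slide hl hs r) := by
  refine ⟨fun x hx => lt_of_lt_of_le hx (slideParts_le hs hp hrs x.1), ?_⟩
  obtain ⟨c, -, hc⟩ := exists_isRibbonC_skewStrip (lo := l.slideParts k r s p) (hi := l.parts)
    (show r ≤ s - 1 by omega) (fun i hri hi => slideParts_add_one hs hp hri (by omega))
    (fun i hri hi => slideParts_lt hs hp hri (by omega)) (sum_Icc_sub_slideParts hl hs hp hrs)
  exact ⟨c, cells_sdiff_slide hl hs hrs ▸ hc⟩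

end Slide

theorem exists_removeRibbon_of_slide {l : AbPartition} {k b p : ℕ} (hl : l.length ≤ k)
    (hb : b ∈ l.betaSet k) (hpb : p < b) (hp : p ∉ l.betaSet k) :
    ∃ l' : AbPartition, RemoveRibbon (b - p) l l' ∧ l'.length ≤ k ∧
      l'.betaSet k = insert p ((l.betaSet k).erase b) := by
  obtain ⟨r, hrk, rfl⟩ := mem_betaSet.1 hb
  obtain ⟨s, hs⟩ := l.exists_isSplit hp
  have hrs : r < s := by
    by_contra! hsr
    have := hs.beta_lt r hsr hrk
    omega
  exact ⟨l.slide hl hs r, removeRibbon_slide hl hs hp hrs, length_slide_le hl hs,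
    betaSet_slide hl hs hp hrs⟩

theorem eWeight_gapCount_betaSet {e k : ℕ} (he : 0 < e) {l : AbPartition}
    (hl : l.length ≤ k) : EWeight e l (gapCount e (l.betaSet k)) := by
  induction hn : gapCount e (l.betaSet k) generalizing l with
  | zero => exact ⟨l, ⟨.refl, not_removeRibbon_of_gapCount_eq_zero he hl hn⟩, by simp⟩
  | succ n ih =>
    obtain ⟨b, hb, heb, hgap⟩ :=
      exists_slide_of_gapCount_ne_zero (e := e) (B := l.betaSet k) (by omega)
    obtain ⟨l', hll', hl', hβ⟩ := exists_removeRibbon_of_slide hl hb (by omega) hgap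
    have hn' : gapCount e (l'.betaSet k) = n := by
      have := gapCount_slide hb heb hgap
      rw [← hβ] at this
      omega
    obtain ⟨κ, ⟨hchain, hcore⟩, hκ⟩ := ih hl' hn'
    have hsize := size_add_eq_of_betaSet_eq hl hl' hb hgap hβ
    refine ⟨κ, ⟨.head (Nat.sub_sub_self heb ▸ hll') hchain, hcore⟩, ?_⟩
    rw [add_mul, one_mul]
    omega

end AbPartition

open AbPartition

/-- the `e`-weight of `λ` equals the sum, over the beads of its
`e`-abacus with `k` beads, of the number of empty positions above each bead on
its runner. -/
theorem eweight_eq_gap_count (e k : ℕ) (he : 2 ≤ e)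
    (l : AbPartition) (hl : l.length ≤ k) :
    EWeight e l
      (∑ p ∈ l.betaSet k,
        ((Finset.range p).filter fun q => q % e = p % e ∧ q ∉ l.betaSet k).card) :=
  eWeight_gapCount_betaSet (by omega) hl
end

section
/- Removing a rim hook of length e from a partition ν, yielding a partition λ, corresponds on the e-abacus (with k beads, k ≥ ℓ(ν)) to moving a single bead from an occupied position p with p ≥ e to the empty position p − e on the same runner; conversely, every such bead move corresponds to removing an e-rim-hook. Moreover the leg length of the removed rim hook equals the number of beads at positions strictly between p − e and p. -/
open Finset

/-- A partition: a weakly decreasing, eventually-zero sequence of naturals.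
`parts i` is the `(i+1)`-st part (0-indexed). -/
structure NPartition where
  parts : ℕ → ℕ
  antitone : ∀ ⦃i j : ℕ⦄, i ≤ j → parts j ≤ parts i
  eventually_zero : ∃ N, ∀ i, N ≤ i → parts i = 0

namespace NPartition

/-- The length of a partition: the number of nonzero parts. -/
noncomputable def length (l : NPartition) : ℕ :=
  sInf {N | ∀ i, N ≤ i → l.parts i = 0}

/-- The size `|λ|` of a partition: the sum of its parts. -/
noncomputable def size (l : NPartition) : ℕ :=
  ∑ i ∈ Finset.range l.length, l.parts i

/-- The beta-numbers of `l` with respect to `k` beads: `λ_i + k - i` for `i = 1, …, k`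
(here 0-indexed: bead for row `i+1` sits at `parts i + (k - 1 - i)`). -/
def betaSet (l : NPartition) (k : ℕ) : Finset ℕ :=
  (Finset.range k).image fun i => l.parts i + (k - 1 - i)

/-- Dominance order: `l ⊵ m`. -/
def Dominates (l m : NPartition) : Prop :=
  ∀ j, ∑ i ∈ Finset.range j, m.parts i ≤ ∑ i ∈ Finset.range j, l.parts i

/-- Inserting an empty runner before runner `α` into an `e`-abacus: a bead at
position `m*e + r` moves to `m*(e+1) + r` if `r < α` and to `m*(e+1) + r + 1` otherwise. -/
def insRunner (e α p : ℕ) : ℕ :=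
  (p / e) * (e + 1) + p % e + (if p % e < α then 0 else 1)

/-- `lp` is the partition `λ⁺` obtained from `l` by inserting an empty runner at
position `α` into its `e`-abacus with `k` beads. -/
def IsPlus (e α k : ℕ) (l lp : NPartition) : Prop :=
  lp.length ≤ k ∧ lp.betaSet k = (l.betaSet k).image (insRunner e α)

/-- A partition is `d`-regular if no `d` of its nonzero parts are equal. -/
def Regular (d : ℕ) (l : NPartition) : Prop :=
  ¬ ∃ i, l.parts i ≠ 0 ∧ l.parts (i + (d - 1)) = l.parts i

/-- The Young diagram of a partition, as a set of (row, column) cells, 0-indexed. -/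
def cells (l : NPartition) : Set (ℕ × ℕ) := {x | x.2 < l.parts x.1}

/-- `c 0, c 1, …, c (e-1)` are the successive cells of a ribbon: each next cell is
directly below, or directly to the left of, the previous cell. -/
def RibbonSteps (e : ℕ) (c : ℕ → ℕ × ℕ) : Prop :=
  ∀ i, i + 1 < e →
    (c (i + 1) = ((c i).1 + 1, (c i).2)) ∨
    ((c i).2 = (c (i + 1)).2 + 1 ∧ (c (i + 1)).1 = (c i).1)

/-- `R` is an `e`-ribbon with cell enumeration `c` (head `c 0`). -/
def IsRibbonC (e : ℕ) (c : ℕ → ℕ × ℕ) (R : Set (ℕ × ℕ)) : Prop :=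
  R = c '' (Set.Iio e) ∧ Set.InjOn c (Set.Iio e) ∧ RibbonSteps e c

/-- The spin of an `e`-ribbon: the number of vertical steps. -/
def spinOf (e : ℕ) (c : ℕ → ℕ × ℕ) : ℕ :=
  ((Finset.range (e - 1)).filter fun i => (c (i + 1)).1 = (c i).1 + 1).card

/-- The head of the ribbon lies in row 1 or directly below a cell of `l`. -/
def HeadOK (l : NPartition) (c : ℕ → ℕ × ℕ) : Prop :=
  (c 0).1 = 0 ∨ ((c 0).1 - 1, (c 0).2) ∈ cells l

/-- `l` is obtained from `n` by removing a single rim hook (ribbon) of length `e`. -/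
def RemoveRibbon (e : ℕ) (n l : NPartition) : Prop :=
  cells l ⊆ cells n ∧ ∃ c, IsRibbonC e c (cells n \ cells l)

/-- `κ` is the `e`-core of `l`: obtained by repeatedly removing `e`-rim-hooks,
and no further `e`-rim-hook can be removed. -/
def IsECoreOf (e : ℕ) (κ l : NPartition) : Prop :=
  Relation.ReflTransGen (RemoveRibbon e) l κ ∧ ¬ ∃ m, RemoveRibbon e κ m

/-- `l` has `e`-weight `w`: `|l| = |e-core of l| + w * e`. -/
def EWeight (e : ℕ) (l : NPartition) (w : ℕ) : Prop :=
  ∃ κ, IsECoreOf e κ l ∧ l.size = κ.size + w * e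

/-- `λ →_{m:e} ν` with total spin `s`: `[ν] \ [λ]` is a disjoint union of `m`
`e`-ribbons, each of whose heads lies in row 1 or directly below a cell of `λ`,
the sum of whose spins is `s`. -/
def HAddSpin (e m s : ℕ) (l n : NPartition) : Prop :=
  cells l ⊆ cells n ∧
  ∃ (R : Fin m → Set (ℕ × ℕ)) (c : Fin m → ℕ → ℕ × ℕ),
    ((cells n \ cells l) = ⋃ i, R i) ∧
    (Pairwise fun i j => Disjoint (R i) (R j)) ∧
    (∀ i, IsRibbonC e (c i) (R i) ∧ HeadOK l (c i)) ∧
    s = ∑ i, spinOf e (c i)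

/-- `λ →_{m:e} ν`. -/
def HAdd (e m : ℕ) (l n : NPartition) : Prop := ∃ s, HAddSpin e m s l n

/-- `x` is an addable node of `l`. -/
def Addable (l : NPartition) (x : ℕ × ℕ) : Prop :=
  x ∉ cells l ∧ ∃ n : NPartition, cells n = insert x (cells l)

/-- `x` is a removable node of `l`. -/
def Removable (l : NPartition) (x : ℕ × ℕ) : Prop :=
  x ∈ cells l ∧ ∃ n : NPartition, cells n = cells l \ {x}

/-- The `e`-residue of a node `(c,d)`: `d - c mod e`. -/
def res (e : ℕ) (x : ℕ × ℕ) : ZMod e := (x.2 : ZMod e) - (x.1 : ZMod e)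

/-- `N_i(λ,ν) = #{addable i-nodes of λ above x} - #{removable i-nodes of λ above x}`,
where `i = res e x` and `y` is above `x` iff `y.1 < x.1`. -/
noncomputable def Nnum (e : ℕ) (l : NPartition) (x : ℕ × ℕ) : ℤ :=
  ({y | Addable l y ∧ res e y = res e x ∧ y.1 < x.1}.ncard : ℤ) -
  ({y | Removable l y ∧ res e y = res e x ∧ y.1 < x.1}.ncard : ℤ)

end NPartition

/-!
Both sides are governed by the same data: the rows `r, …, s` that the rim hook occupies,
where consecutive rows of `n / l` overlap in exactly one column (`IsRimHookOn`). A ribbon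
has this shape because its enumeration can leave a row only at the row's leftmost cell and
enter the next row only at that row's rightmost cell. On the abacus the shape says that the
bead of row `r`, at `p = n_r + k - 1 - r`, drops by `e` (the total length of the rows of the
hook) into slot `s`, while the beads of rows `r + 1, …, s` each move up one slot; these
`s - r` beads are exactly those strictly between `p - e` and `p`. Conversely, the
beta-sequence of `l` is forced by its set of beta-numbers, since a finite set has only one
strictly decreasing enumeration, so the bead move determines `l` row by row.
-/

section Sequences

variable {α : Type*} {f g : ℕ → α} {k r s : ℕ} {x : α}

theorem Finset.eq_insert_erase_of_subset [DecidableEq α] {X Y : Finset α} {p : α} (hp : p ∈ X)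
    (hcard : X.card ≤ Y.card) (h : Y ⊆ insert x (X.erase p)) : Y = insert x (X.erase p) := by
  refine eq_of_subset_of_card_le h ?_
  calc (insert x (X.erase p)).card ≤ (X.erase p).card + 1 := card_insert_le _ _
    _ = X.card := card_erase_add_one hp
    _ ≤ Y.card := hcard

theorem Finset.notMem_of_eq_insert_erase [DecidableEq α] {X Y : Finset α} {p : α} (hp : p ∈ X)
    (hxp : x ≠ p) (hcard : Y.card = X.card) (h : Y = insert x (X.erase p)) : x ∉ X := by
  intro hx
  rw [insert_eq_of_mem (mem_erase.2 ⟨hxp, hx⟩)] at h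
  rw [h, card_erase_of_mem hp] at hcard
  have := card_pos.2 ⟨p, hp⟩
  omega

theorem eqOn_of_strictAntiOn_of_image_eq [LinearOrder α] (hf : StrictAntiOn f (Set.Iio k))
    (hg : StrictAntiOn g (Set.Iio k)) (h : (range k).image f = (range k).image g) :
    Set.EqOn f g (Set.Iio k) := by
  have hrange (φ : ℕ → α) : Set.range (fun i : Fin k => φ i) = ↑((range k).image φ) := by
    rw [coe_image, coe_range, ← Fin.range_val, ← Set.range_comp]
    rfl
  have hfg := (StrictAnti.range_inj (f := fun i : Fin k => f i) (g := fun i : Fin k => g i)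
    (fun i j hij => hf i.2 j.2 hij) (fun i j hij => hg i.2 j.2 hij)).1
    (by rw [hrange, hrange, h])
  exact fun i hi => congrFun hfg ⟨i, hi⟩

theorem strictAntiOn_Iio_of_succ_lt [Preorder α] (h : ∀ i, i + 1 < k → f (i + 1) < f i) :
    StrictAntiOn f (Set.Iio k) :=
  (strictAntiOn_Iic_of_succ_lt (n := k - 1) fun i hi => h i (by omega)).mono
    fun i hi => by simp only [Set.mem_Iio, Set.mem_Iic] at hi ⊢; omega

theorem exists_last_index_lt_apply [LinearOrder α] (hrk : r < k) (hxr : x < f r)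
    (hx : ∀ j < k, f j ≠ x) :
    ∃ s, r ≤ s ∧ s < k ∧ x < f s ∧ ∀ j, s < j → j < k → f j < x := by
  refine ⟨Nat.findGreatest (fun j => x < f j) (k - 1), Nat.le_findGreatest (by omega) hxr,
    by have := Nat.findGreatest_le (P := fun j => x < f j) (k - 1); omega,
    Nat.findGreatest_spec (P := fun j => x < f j) (by omega : r ≤ k - 1) hxr,
    fun j hsj hjk => ?_⟩
  exact lt_of_le_of_ne (not_lt.1 (Nat.findGreatest_is_greatest hsj (by omega))) (hx j hjk)

theorem StrictAntiOn.card_filter_image_Ioo [LinearOrder α] (hf : StrictAntiOn f (Set.Iio k))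
    (hrs : r ≤ s) (hsk : s < k) (hxs : x < f s) (hsx : ∀ j, s < j → j < k → f j < x) :
    (((range k).image f).filter fun q => x < q ∧ q < f r).card = s - r := by
  have hmem : ∀ {j}, j < k → j ∈ Set.Iio k := id
  have hsub : ((range k).image f).filter (fun q => x < q ∧ q < f r) = (Ioc r s).image f := by
    ext q
    simp only [mem_filter, mem_image, mem_range, mem_Ioc]
    constructor
    · rintro ⟨⟨j, hj, rfl⟩, hxj, hjr⟩
      refine ⟨j, ⟨(hf.lt_iff_gt (hmem hj) (hmem (by omega))).1 hjr, ?_⟩, rfl⟩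
      exact le_of_not_gt fun hsj => lt_asymm (hsx j hsj hj) hxj
    · rintro ⟨j, ⟨hrj, hjs⟩, rfl⟩
      refine ⟨⟨j, by omega, rfl⟩, ?_, hf (hmem (by omega)) (hmem (by omega)) hrj⟩
      exact hxs.trans_le (hf.antitoneOn (hmem (by omega)) (hmem hsk) hjs)
  rw [hsub, card_image_of_injOn (hf.injOn.mono fun j hj => by simp at hj ⊢; omega),
    Nat.card_Ioc]

/-- Delete the entry `f r` of a decreasing sequence and insert `x` as the entry in slot
`s ≥ r`: this is the beta-sequence after moving the bead at `f r` to `x`. -/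
def moveSeq (f : ℕ → α) (r s : ℕ) (x : α) (i : ℕ) : α :=
  if i < r then f i else if i < s then f (i + 1) else if i = s then x else f i

theorem moveSeq_self (hrs : r ≤ s) : moveSeq f r s x s = x := by
  simp [moveSeq, show ¬ s < r by omega]

theorem image_moveSeq_subset [DecidableEq α] (hf : Set.InjOn f (Set.Iio k)) (hrs : r ≤ s)
    (hsk : s < k) :
    (range k).image (moveSeq f r s x) ⊆ insert x (((range k).image f).erase (f r)) := by
  have hother : ∀ j < k, j ≠ r → f j ∈ insert x (((range k).image f).erase (f r)) :=
    fun j hj hjr => mem_insert_of_mem (mem_erase.2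
      ⟨fun h => hjr (hf hj (show r < k by omega) h), mem_image_of_mem f (mem_range.2 hj)⟩)
  intro q hq
  obtain ⟨i, hi, rfl⟩ := mem_image.1 hq
  rw [mem_range] at hi
  unfold moveSeq
  split_ifs
  · exact hother i hi (by omega)
  · exact hother (i + 1) (by omega) (by omega)
  · exact mem_insert_self x _
  · exact hother i hi (by omega)

theorem moveSeq_strictAntiOn [LinearOrder α] (hf : StrictAntiOn f (Set.Iio k)) (hrs : r ≤ s)
    (hsk : s < k) (hxs : x < f s) (hsx : ∀ j, s < j → j < k → f j < x) :
    StrictAntiOn (moveSeq f r s x) (Set.Iio k) := by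
  have hlt : ∀ a b, a < b → b < k → f b < f a := fun a b hab hb =>
    hf (show a < k by omega) (show b < k from hb) hab
  have hxlt : ∀ i ≤ s, x < f i := fun i hi =>
    hxs.trans_le (hf.antitoneOn (show i < k by omega) (show s < k from hsk) hi)
  refine strictAntiOn_Iio_of_succ_lt fun i hi => ?_
  unfold moveSeq
  split_ifs <;> first
    | omega
    | exact hlt _ _ (by omega) (by omega)
    | exact hxlt _ (by omega)
    | exact hsx _ (by omega) (by omega)

end Sequences

namespace NPartition

variable {n l : NPartition} {e k r s : ℕ} {c : ℕ → ℕ × ℕ}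

theorem parts_eq_zero_of_length_le (l : NPartition) {i : ℕ} (h : l.length ≤ i) :
    l.parts i = 0 :=
  Nat.sInf_mem (s := {N | ∀ j, N ≤ j → l.parts j = 0}) l.eventually_zero i h

theorem lt_length_of_parts_ne_zero (l : NPartition) {i : ℕ} (h : l.parts i ≠ 0) :
    i < l.length :=
  Nat.lt_of_not_le fun hi => h (l.parts_eq_zero_of_length_le hi)

theorem parts_le_of_cells_subset (h : cells l ⊆ cells n) (t : ℕ) : l.parts t ≤ n.parts t := by
  by_contra! hlt
  exact lt_irrefl (n.parts t) (h (show (t, n.parts t) ∈ cells l from hlt))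

theorem mem_cells_diff {d : ℕ × ℕ} :
    d ∈ cells n \ cells l ↔ l.parts d.1 ≤ d.2 ∧ d.2 < n.parts d.1 := by
  simp only [cells, Set.mem_sdiff, Set.mem_ofPred_eq, not_lt]
  tauto

theorem mk_mem_cells_diff {t x : ℕ} (hl : l.parts t ≤ x) (hn : x < n.parts t) :
    (t, x) ∈ cells n \ cells l :=
  mem_cells_diff.2 ⟨hl, hn⟩

def beta (n : NPartition) (k i : ℕ) : ℕ := n.parts i + (k - 1 - i)

theorem betaSet_eq_image_beta (n : NPartition) (k : ℕ) :
    n.betaSet k = (Finset.range k).image (n.beta k) := rfl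

theorem beta_strictAntiOn (n : NPartition) (k : ℕ) : StrictAntiOn (n.beta k) (Set.Iio k) := by
  intro i _ j hj hij
  have := n.antitone hij.le
  simp only [Set.mem_Iio] at hj
  unfold beta
  omega

theorem mem_betaSet {q : ℕ} : q ∈ n.betaSet k ↔ ∃ i < k, n.beta k i = q := by
  simp [betaSet_eq_image_beta]

theorem card_betaSet (n : NPartition) (k : ℕ) : (n.betaSet k).card = k := by
  have hinj : Set.InjOn (n.beta k) ↑(range k) := by
    rw [coe_range]
    exact (n.beta_strictAntiOn k).injOn
  rw [betaSet_eq_image_beta, card_image_of_injOn hinj, card_range]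

theorem beta_eq_sum_add_beta (hsk : s < k)
    (hsucc : ∀ i, r ≤ i → i < s → l.parts i + 1 = n.parts (i + 1))
    (hlt : ∀ i, r ≤ i → i ≤ s → l.parts i < n.parts i) :
    ∀ t, r ≤ t → t ≤ s →
      n.beta k r = ∑ i ∈ Icc r t, (n.parts i - l.parts i) + l.beta k t := by
  intro t hrt
  induction t, hrt using Nat.le_induction with
  | base =>
    intro hrs
    have := hlt r le_rfl hrs
    rw [Icc_self, sum_singleton]
    unfold beta
    omega
  | succ t hrt ih =>
    intro hts
    have := hsucc t hrt (by omega)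
    have := hlt (t + 1) (by omega) hts
    rw [ih (by omega), sum_Icc_succ_top (by omega)]
    unfold beta
    omega

/-- `n / l` is an `e`-rim hook occupying rows `r, …, s`: consecutive rows of it overlap in
exactly one column. -/
structure IsRimHookOn (e r s : ℕ) (n l : NPartition) : Prop where
  le : r ≤ s
  parts_eq : ∀ i, i < r ∨ s < i → l.parts i = n.parts i
  parts_lt : ∀ i, r ≤ i → i ≤ s → l.parts i < n.parts i
  parts_succ : ∀ i, r ≤ i → i < s → l.parts i + 1 = n.parts (i + 1)
  sum_eq : ∑ i ∈ Icc r s, (n.parts i - l.parts i) = e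

namespace IsRimHookOn

theorem parts_lt_iff (h : IsRimHookOn e r s n l) {t : ℕ} :
    l.parts t < n.parts t ↔ r ≤ t ∧ t ≤ s := by
  refine ⟨fun hlt => ?_, fun ht => h.parts_lt t ht.1 ht.2⟩
  by_contra hc
  have := h.parts_eq t (by omega)
  omega

theorem parts_le (h : IsRimHookOn e r s n l) (t : ℕ) : l.parts t ≤ n.parts t := by
  by_cases ht : r ≤ t ∧ t ≤ s
  · exact (h.parts_lt t ht.1 ht.2).le
  · exact (h.parts_eq t (by omega)).le

theorem cells_subset (h : IsRimHookOn e r s n l) : cells l ⊆ cells n :=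
  fun d hd => lt_of_lt_of_le hd (h.parts_le d.1)

theorem pos (h : IsRimHookOn e r s n l) : 0 < e := by
  have := h.parts_lt s h.le le_rfl
  rw [← h.sum_eq]
  exact sum_pos (fun i hi => by have := h.parts_lt i (mem_Icc.1 hi).1 (mem_Icc.1 hi).2; omega)
    ⟨s, mem_Icc.2 ⟨h.le, le_rfl⟩⟩

theorem lt_of_length_le (h : IsRimHookOn e r s n l) (hn : n.length ≤ k) : s < k :=
  (n.lt_length_of_parts_ne_zero (h.parts_lt s h.le le_rfl).ne_bot).trans_le hn

theorem beta_eq_moveSeq (h : IsRimHookOn e r s n l) (hsk : s < k) :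
    l.beta k = moveSeq (n.beta k) r s (n.beta k r - e) := by
  have htel := beta_eq_sum_add_beta hsk h.parts_succ h.parts_lt s h.le le_rfl
  rw [h.sum_eq] at htel
  funext i
  unfold moveSeq
  split_ifs with h1 h2 h3
  · rw [beta, beta, h.parts_eq i (Or.inl h1)]
  · have := h.parts_succ i (by omega) h2
    unfold beta
    omega
  · subst h3
    omega
  · rw [beta, beta, h.parts_eq i (Or.inr (by omega))]

theorem exists_bead_move (h : IsRimHookOn e r s n l) (hn : n.length ≤ k) :
    ∃ p ∈ n.betaSet k, e ≤ p ∧ (p - e) ∉ n.betaSet k ∧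
      l.betaSet k = insert (p - e) ((n.betaSet k).erase p) := by
  have hsk := h.lt_of_length_le hn
  have hp : n.beta k r ∈ n.betaSet k := mem_betaSet.2 ⟨r, h.le.trans_lt hsk, rfl⟩
  have htel := beta_eq_sum_add_beta hsk h.parts_succ h.parts_lt s h.le le_rfl
  rw [h.sum_eq] at htel
  have hmove : l.betaSet k = insert (n.beta k r - e) ((n.betaSet k).erase (n.beta k r)) := by
    refine eq_insert_erase_of_subset hp (by rw [card_betaSet, card_betaSet]) ?_
    rw [betaSet_eq_image_beta l, h.beta_eq_moveSeq hsk]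
    exact image_moveSeq_subset (n.beta_strictAntiOn k).injOn h.le hsk
  have := h.pos
  exact ⟨_, hp, by omega,
    notMem_of_eq_insert_erase hp (by omega) (by rw [card_betaSet, card_betaSet]) hmove, hmove⟩

end IsRimHookOn

theorem isRimHookOn_of_beta_eqOn (hl : l.length ≤ k) (hn : n.length ≤ k) (hrs : r ≤ s)
    (hsk : s < k) (hep : e ≤ n.beta k r) (hxs : n.beta k r - e < n.beta k s)
    (hbet : Set.EqOn (l.beta k) (moveSeq (n.beta k) r s (n.beta k r - e)) (Set.Iio k)) :
    IsRimHookOn e r s n l := by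
  have hrow : ∀ i < k, l.beta k i = moveSeq (n.beta k) r s (n.beta k r - e) i := fun i hi => hbet hi
  have hsucc : ∀ i, r ≤ i → i < s → l.parts i + 1 = n.parts (i + 1) := by
    intro i hri his
    have := hrow i (by omega)
    simp only [moveSeq, if_neg (show ¬ i < r by omega), if_pos his, beta] at this
    omega
  have hlt : ∀ i, r ≤ i → i ≤ s → l.parts i < n.parts i := by
    intro i hri his
    rcases his.lt_or_eq with his | rfl
    · have := hsucc i hri his
      have := n.antitone (Nat.le_add_right i 1)
      omega
    · have := hrow i hsk
      rw [moveSeq_self hri] at this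
      simp only [beta] at this hxs
      omega
  refine ⟨hrs, fun i hi => ?_, hlt, hsucc, ?_⟩
  · by_cases hik : i < k
    · have := hrow i hik
      simp only [moveSeq, beta] at this
      split_ifs at this <;> omega
    · rw [n.parts_eq_zero_of_length_le (by omega), l.parts_eq_zero_of_length_le (by omega)]
  · have htel := beta_eq_sum_add_beta hsk hsucc hlt s hrs le_rfl
    have := hrow s hsk
    rw [moveSeq_self hrs] at this
    omega

theorem exists_isRimHookOn_of_bead_move (hn : n.length ≤ k) (hl : l.length ≤ k) {p : ℕ}
    (hp : p ∈ n.betaSet k) (hep : e ≤ p) (hpe : p - e ∉ n.betaSet k)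
    (hmove : l.betaSet k = insert (p - e) ((n.betaSet k).erase p)) :
    ∃ r s, IsRimHookOn e r s n l ∧
      ((n.betaSet k).filter fun q => p - e < q ∧ q < p).card = s - r := by
  have he : e ≠ 0 := fun he => hpe (by simpa [he] using hp)
  obtain ⟨r, hrk, rfl⟩ := mem_betaSet.1 hp
  have hf := n.beta_strictAntiOn k
  obtain ⟨s, hrs, hsk, hxs, hsx⟩ :=
    exists_last_index_lt_apply (f := n.beta k) (x := n.beta k r - e) hrk (by omega)
      fun j hj hje => hpe (mem_betaSet.2 ⟨j, hj, hje⟩)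
  have hg := moveSeq_strictAntiOn hf hrs hsk hxs hsx
  have hbet := eqOn_of_strictAntiOn_of_image_eq (l.beta_strictAntiOn k) hg (by
    rw [← betaSet_eq_image_beta, hmove]
    refine (eq_insert_erase_of_subset hp ?_ (image_moveSeq_subset hf.injOn hrs hsk)).symm
    rw [card_betaSet, card_image_of_injOn (by rw [coe_range]; exact hg.injOn), card_range])
  exact ⟨r, s, isRimHookOn_of_beta_eqOn hl hn hrs hsk hep hxs hbet,
    hf.card_filter_image_Ioo hrs hsk hxs hsx⟩

def skewCells (n l : NPartition) (r s : ℕ) : Finset (ℕ × ℕ) :=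
  (Icc r s).biUnion fun t => (Ico (l.parts t) (n.parts t)).image (Prod.mk t)

theorem card_skewCells :
    (skewCells n l r s).card = ∑ t ∈ Icc r s, (n.parts t - l.parts t) := by
  rw [skewCells, card_biUnion]
  · exact sum_congr rfl fun t _ => by
      rw [card_image_of_injective _ (Prod.mk_right_injective t), Nat.card_Ico]
  · intro a _ b _ hab
    simp only [Function.onFun, disjoint_left, mem_image]
    rintro _ ⟨x, -, rfl⟩ ⟨y, -, hy⟩
    exact hab (congrArg Prod.fst hy).symm

theorem cells_diff_eq_skewCells (hout : ∀ t, t < r ∨ s < t → n.parts t ≤ l.parts t) :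
    cells n \ cells l = ↑(skewCells n l r s) := by
  ext ⟨t, x⟩
  simp only [mem_cells_diff, skewCells, coe_biUnion, coe_image, coe_Ico, Set.mem_iUnion,
    Set.mem_image, Set.mem_Ico, Prod.mk.injEq, coe_Icc, Set.mem_Icc, exists_prop]
  constructor
  · intro hx
    have := hout t
    exact ⟨t, by omega, x, hx, rfl, rfl⟩
  · rintro ⟨t, -, x, hx, rfl, rfl⟩
    exact hx

theorem IsRimHookOn.cells_diff_eq_skewCells (h : IsRimHookOn e r s n l) :
    cells n \ cells l = ↑(skewCells n l r s) :=
  NPartition.cells_diff_eq_skewCells fun t ht => (h.parts_eq t ht).ge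

namespace RibbonSteps

theorem mono (hc : RibbonSteps e c) {i j : ℕ} (hij : i ≤ j) (hj : j < e) :
    (c i).1 ≤ (c j).1 ∧ (c j).2 ≤ (c i).2 := by
  induction j, hij using Nat.le_induction with
  | base => exact ⟨le_rfl, le_rfl⟩
  | succ j hij ih =>
    have := ih (by omega)
    rcases hc j hj with hdown | hleft
    · rw [hdown]
      exact ⟨by simp only; omega, this.2⟩
    · omega

theorem lt_of_fst_lt_or_snd_lt (hc : RibbonSteps e c) {i j : ℕ} (hi : i < e)
    (h : (c i).1 < (c j).1 ∨ (c j).2 < (c i).2) : i < j := by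
  by_contra hji
  have := hc.mono (not_lt.1 hji) hi
  omega

theorem exists_down_step (hc : RibbonSteps e c) {j t : ℕ} (hj : j < e) (h0 : (c 0).1 ≤ t)
    (ht : t < (c j).1) : ∃ i < j, (c i).1 = t ∧ c (i + 1) = (t + 1, (c i).2) := by
  induction j with
  | zero => omega
  | succ j ih =>
    by_cases htj : t < (c j).1
    · obtain ⟨i, hi, h⟩ := ih (by omega) htj
      exact ⟨i, by omega, h⟩
    · rcases hc j hj with hdown | hleft
      · rw [hdown] at ht
        have hjt : (c j).1 = t := by simp only at ht; omega
        exact ⟨j, by omega, hjt, by rw [hdown, hjt]⟩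
      · omega

end RibbonSteps

namespace IsRibbonC

variable {R : Set (ℕ × ℕ)}

theorem mem (hc : IsRibbonC e c R) {i : ℕ} (hi : i < e) : c i ∈ R :=
  hc.1 ▸ Set.mem_image_of_mem c hi

theorem exists_eq (hc : IsRibbonC e c R) {d : ℕ × ℕ} (hd : d ∈ R) : ∃ i < e, c i = d := by
  rw [hc.1] at hd
  exact hd

theorem down_step_eq (hc : IsRibbonC e c (cells n \ cells l)) {i : ℕ} (hi : i + 1 < e)
    (hdown : c (i + 1) = ((c i).1 + 1, (c i).2)) :
    (c i).2 = l.parts (c i).1 ∧ (c i).2 + 1 = n.parts ((c i).1 + 1) := by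
  have hci := mem_cells_diff.1 (hc.mem (i := i) (by omega))
  have hci1 := mem_cells_diff.1 (hc.mem hi)
  rw [hdown] at hci1
  simp only at hci1
  -- A cell of `n / l` left of `c i`, or right of `c (i + 1)`, would have to be visited both
  -- after `c i` and before `c (i + 1)`.
  constructor
  · by_contra hne
    obtain ⟨m, hm, hcm⟩ := hc.exists_eq (mk_mem_cells_diff (t := (c i).1) (x := (c i).2 - 1)
      (by omega) (by omega))
    have := hc.2.2.lt_of_fst_lt_or_snd_lt (i := i) (j := m) (by omega)
      (Or.inr (by rw [hcm]; dsimp only; omega))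
    have := hc.2.2.lt_of_fst_lt_or_snd_lt (j := i + 1) hm
      (Or.inl (by rw [hcm, hdown]; dsimp only; omega))
    omega
  · by_contra hne
    obtain ⟨m, hm, hcm⟩ := hc.exists_eq (mk_mem_cells_diff (t := (c i).1 + 1) (x := (c i).2 + 1)
      (by omega) (by omega))
    have := hc.2.2.lt_of_fst_lt_or_snd_lt (i := i) (j := m) (by omega)
      (Or.inl (by rw [hcm]; dsimp only; omega))
    have := hc.2.2.lt_of_fst_lt_or_snd_lt (j := i + 1) hm
      (Or.inr (by rw [hcm, hdown]; dsimp only; omega))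
    omega

end IsRibbonC

theorem isRimHookOn_of_ribbon (he : 0 < e) (hsub : cells l ⊆ cells n)
    (hc : IsRibbonC e c (cells n \ cells l)) : IsRimHookOn e (c 0).1 (c (e - 1)).1 n l := by
  have hle := parts_le_of_cells_subset hsub
  have hrows : ∀ t, l.parts t < n.parts t → (c 0).1 ≤ t ∧ t ≤ (c (e - 1)).1 := by
    intro t ht
    obtain ⟨i, hi, hci⟩ := hc.exists_eq (mk_mem_cells_diff le_rfl ht)
    have h0 := (hc.2.2.mono (Nat.zero_le i) hi).1
    have hs := (hc.2.2.mono (Nat.le_sub_one_of_lt hi) (by omega)).1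
    rw [hci] at h0 hs
    exact ⟨h0, hs⟩
  have hout : ∀ t, t < (c 0).1 ∨ (c (e - 1)).1 < t → l.parts t = n.parts t := by
    intro t ht
    by_contra hne
    have := hrows t (lt_of_le_of_ne (hle t) hne)
    omega
  have hlt : ∀ t, (c 0).1 ≤ t → t ≤ (c (e - 1)).1 → l.parts t < n.parts t := by
    intro t h0 hs
    rcases hs.lt_or_eq with hs | rfl
    · obtain ⟨i, hi, rfl, -⟩ := hc.2.2.exists_down_step (by omega) h0 hs
      have := mem_cells_diff.1 (hc.mem (i := i) (by omega))
      omega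
    · have := mem_cells_diff.1 (hc.mem (i := e - 1) (by omega))
      omega
  have hsucc : ∀ t, (c 0).1 ≤ t → t < (c (e - 1)).1 → l.parts t + 1 = n.parts (t + 1) := by
    intro t h0 hs
    obtain ⟨i, hi, rfl, hdown⟩ := hc.2.2.exists_down_step (by omega) h0 hs
    have := hc.down_step_eq (by omega) hdown
    omega
  refine ⟨(hc.2.2.mono (Nat.zero_le _) (by omega)).1, hout, hlt, hsucc, ?_⟩
  have himage : (range e).image c = skewCells n l (c 0).1 (c (e - 1)).1 := by
    apply coe_injective
    rw [← cells_diff_eq_skewCells fun t ht => (hout t ht).ge, hc.1, coe_image, coe_range]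
  rw [← card_skewCells, ← himage, card_image_of_injOn (by rw [coe_range]; exact hc.2.1),
    card_range]

/-- The cells of a rim hook in order from its head `(r, n_r - 1)`. -/
def rimPath (n l : NPartition) (r : ℕ) : ℕ → ℕ × ℕ
  | 0 => (r, n.parts r - 1)
  | j + 1 =>
    let d := rimPath n l r j
    if d.2 = l.parts d.1 then (d.1 + 1, n.parts (d.1 + 1) - 1) else (d.1, d.2 - 1)

/-- The number of cells of the rim hook that `rimPath` visits before the cell `(t, x)`. -/
def pathIndex (n l : NPartition) (r t x : ℕ) : ℕ :=
  ∑ i ∈ Ico r t, (n.parts i - l.parts i) + (n.parts t - 1 - x)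

theorem rimPath_succ_of_eq {j t x : ℕ} (hj : rimPath n l r j = (t, x)) (hx : x = l.parts t) :
    rimPath n l r (j + 1) = (t + 1, n.parts (t + 1) - 1) := by
  simp [rimPath, hj, hx]

theorem rimPath_succ_of_ne {j t x : ℕ} (hj : rimPath n l r j = (t, x)) (hx : x ≠ l.parts t) :
    rimPath n l r (j + 1) = (t, x - 1) := by
  simp [rimPath, hj, hx]

namespace IsRimHookOn

theorem rimPath_spec (h : IsRimHookOn e r s n l) {j : ℕ} (hj : j < e) :
    r ≤ (rimPath n l r j).1 ∧ (rimPath n l r j).1 ≤ s ∧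
      rimPath n l r j ∈ cells n \ cells l ∧
      pathIndex n l r (rimPath n l r j).1 (rimPath n l r j).2 = j := by
  induction j with
  | zero =>
    have := h.parts_lt r le_rfl h.le
    have := h.le
    simp only [rimPath, mem_cells_diff, pathIndex, Ico_self, sum_empty]
    omega
  | succ j ih =>
    generalize hd : rimPath n l r j = d at ih
    obtain ⟨t, x⟩ := d
    obtain ⟨hr, hs, hmem, hidx⟩ := ih (by omega)
    simp only [mem_cells_diff, pathIndex] at hr hs hmem hidx
    by_cases hx : x = l.parts t
    · have hts : t < s := by
        by_contra hts
        have hsum := h.sum_eq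
        rw [← Ico_add_one_right_eq_Icc, sum_Ico_succ_top h.le, show s = t by omega] at hsum
        omega
      have := h.parts_lt (t + 1) (by omega) hts
      rw [rimPath_succ_of_eq hd hx]
      simp only [mem_cells_diff, pathIndex, sum_Ico_succ_top hr]
      omega
    · rw [rimPath_succ_of_ne hd hx]
      simp only [mem_cells_diff, pathIndex]
      omega

theorem isRibbonC_rimPath (h : IsRimHookOn e r s n l) :
    IsRibbonC e (rimPath n l r) (cells n \ cells l) := by
  have hinj : Set.InjOn (rimPath n l r) (Set.Iio e) := fun a ha b hb hab => by
    rw [← (h.rimPath_spec ha).2.2.2, ← (h.rimPath_spec hb).2.2.2, hab]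
  have himage : (range e).image (rimPath n l r) = skewCells n l r s := by
    refine eq_of_subset_of_card_le (fun d hd => ?_) ?_
    · obtain ⟨j, hj, rfl⟩ := mem_image.1 hd
      rw [← mem_coe, ← h.cells_diff_eq_skewCells]
      exact (h.rimPath_spec (mem_range.1 hj)).2.2.1
    · rw [card_skewCells, h.sum_eq, card_image_of_injOn (by rw [coe_range]; exact hinj),
        card_range]
  refine ⟨by rw [h.cells_diff_eq_skewCells, ← himage, coe_image, coe_range], hinj,
    fun j hj => ?_⟩
  have hs' := (h.rimPath_spec hj).2.1
  obtain ⟨hr, -, hmem, -⟩ := h.rimPath_spec (j := j) (by omega)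
  generalize hd : rimPath n l r j = d at hs' hr hmem ⊢
  obtain ⟨t, x⟩ := d
  rw [mem_cells_diff] at hmem
  dsimp only at hr hmem ⊢
  by_cases hx : x = l.parts t
  · rw [rimPath_succ_of_eq hd hx] at hs' ⊢
    have := h.parts_succ t hr hs'
    left
    congr 2
    omega
  · rw [rimPath_succ_of_ne hd hx]
    right
    exact ⟨by omega, rfl⟩

theorem image_fst_eq_Icc (h : IsRimHookOn e r s n l)
    (hc : IsRibbonC e c (cells n \ cells l)) :
    (range e).image (fun i => (c i).1) = Icc r s := by
  ext t
  simp only [mem_image, mem_range, mem_Icc, ← h.parts_lt_iff]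
  constructor
  · rintro ⟨i, hi, rfl⟩
    have := mem_cells_diff.1 (hc.mem hi)
    omega
  · intro ht
    obtain ⟨i, hi, hci⟩ := hc.exists_eq (mk_mem_cells_diff le_rfl ht)
    exact ⟨i, hi, by rw [hci]⟩

end IsRimHookOn

end NPartition

open NPartition

/-- removing an `e`-rim-hook from `ν` giving `λ` corresponds to
moving a bead from an occupied position `p ≥ e` to the empty position `p - e`;
and the leg length (rows occupied minus one) equals the number of beads strictly
between `p - e` and `p`. -/
theorem remove_ribbon_iff_bead_move (e k : ℕ) (he : 2 ≤ e)
    (n l : NPartition) (hn : n.length ≤ k) (hl : l.length ≤ k) :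
    (RemoveRibbon e n l ↔
      ∃ p ∈ n.betaSet k, e ≤ p ∧ (p - e) ∉ n.betaSet k ∧
        l.betaSet k = insert (p - e) ((n.betaSet k).erase p)) ∧
    (∀ (c : ℕ → ℕ × ℕ) (p : ℕ), IsRibbonC e c (cells n \ cells l) →
      p ∈ n.betaSet k → e ≤ p → (p - e) ∉ n.betaSet k →
      l.betaSet k = insert (p - e) ((n.betaSet k).erase p) →
      ((Finset.range e).image fun i => (c i).1).card - 1 =
        ((n.betaSet k).filter fun q => p - e < q ∧ q < p).card) := by
  refine ⟨⟨fun ⟨hsub, c, hc⟩ => ?_, fun ⟨p, hp, hep, hpe, hmove⟩ => ?_⟩,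
    fun c p hc hp hep hpe hmove => ?_⟩
  · exact (isRimHookOn_of_ribbon (by omega) hsub hc).exists_bead_move hn
  · obtain ⟨r, s, h, -⟩ := exists_isRimHookOn_of_bead_move hn hl hp hep hpe hmove
    exact ⟨h.cells_subset, _, h.isRibbonC_rimPath⟩
  · obtain ⟨r, s, h, hcount⟩ := exists_isRimHookOn_of_bead_move hn hl hp hep hpe hmove
    rw [h.image_fst_eq_Icc hc, Nat.card_Icc, hcount]
    omega
end

section
/- Fix e ≥ 2, k, and 0 ≤ α ≤ e. Let λ, ν be partitions of length at most k. Then ν/λ is a disjoint union of m e-ribbons, each of whose heads is either in the first row of ν or lies directly below a cell of λ (i.e., λ →_{m:e} ν), if and only if λ⁺ →_{m:e+1} ν⁺. Moreover, in that case spin_e(ν/λ) = spin_{e+1}(ν⁺/λ⁺). -/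
open Finset

/-- A partition: a weakly decreasing, eventually-zero sequence of naturals.
`parts i` is the `(i+1)`-st part (0-indexed). -/
structure Partition' where
  parts : ℕ → ℕ
  antitone : ∀ ⦃i j : ℕ⦄, i ≤ j → parts j ≤ parts i
  eventually_zero : ∃ N, ∀ i, N ≤ i → parts i = 0

namespace Partition'

/-- The length of a partition: the number of nonzero parts. -/
noncomputable def length (l : Partition') : ℕ :=
  sInf {N | ∀ i, N ≤ i → l.parts i = 0}

/-- The size `|λ|` of a partition: the sum of its parts. -/
noncomputable def size (l : Partition') : ℕ :=
  ∑ i ∈ Finset.range l.length, l.parts i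

/-- The beta-numbers of `l` with respect to `k` beads: `λ_i + k - i` for `i = 1, …, k`
(here 0-indexed: bead for row `i+1` sits at `parts i + (k - 1 - i)`). -/
def betaSet (l : Partition') (k : ℕ) : Finset ℕ :=
  (Finset.range k).image fun i => l.parts i + (k - 1 - i)

/-- Dominance order: `l ⊵ m`. -/
def Dominates (l m : Partition') : Prop :=
  ∀ j, ∑ i ∈ Finset.range j, m.parts i ≤ ∑ i ∈ Finset.range j, l.parts i

/-- Inserting an empty runner before runner `α` into an `e`-abacus: a bead at
position `m*e + r` moves to `m*(e+1) + r` if `r < α` and to `m*(e+1) + r + 1` otherwise. -/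
def insRunner (e α p : ℕ) : ℕ :=
  (p / e) * (e + 1) + p % e + (if p % e < α then 0 else 1)

/-- `lp` is the partition `λ⁺` obtained from `l` by inserting an empty runner at
position `α` into its `e`-abacus with `k` beads. -/
def IsPlus (e α k : ℕ) (l lp : Partition') : Prop :=
  lp.length ≤ k ∧ lp.betaSet k = (l.betaSet k).image (insRunner e α)

/-- A partition is `d`-regular if no `d` of its nonzero parts are equal. -/
def Regular (d : ℕ) (l : Partition') : Prop :=
  ¬ ∃ i, l.parts i ≠ 0 ∧ l.parts (i + (d - 1)) = l.parts i

/-- The Young diagram of a partition, as a set of (row, column) cells, 0-indexed. -/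
def cells (l : Partition') : Set (ℕ × ℕ) := {x | x.2 < l.parts x.1}

/-- `c 0, c 1, …, c (e-1)` are the successive cells of a ribbon: each next cell is
directly below, or directly to the left of, the previous cell. -/
def RibbonSteps (e : ℕ) (c : ℕ → ℕ × ℕ) : Prop :=
  ∀ i, i + 1 < e →
    (c (i + 1) = ((c i).1 + 1, (c i).2)) ∨
    ((c i).2 = (c (i + 1)).2 + 1 ∧ (c (i + 1)).1 = (c i).1)

/-- `R` is an `e`-ribbon with cell enumeration `c` (head `c 0`). -/
def IsRibbonC (e : ℕ) (c : ℕ → ℕ × ℕ) (R : Set (ℕ × ℕ)) : Prop :=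
  R = c '' (Set.Iio e) ∧ Set.InjOn c (Set.Iio e) ∧ RibbonSteps e c

/-- The spin of an `e`-ribbon: the number of vertical steps. -/
def spinOf (e : ℕ) (c : ℕ → ℕ × ℕ) : ℕ :=
  ((Finset.range (e - 1)).filter fun i => (c (i + 1)).1 = (c i).1 + 1).card

/-- The head of the ribbon lies in row 1 or directly below a cell of `l`. -/
def HeadOK (l : Partition') (c : ℕ → ℕ × ℕ) : Prop :=
  (c 0).1 = 0 ∨ ((c 0).1 - 1, (c 0).2) ∈ cells l

/-- `l` is obtained from `n` by removing a single rim hook (ribbon) of length `e`. -/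
def RemoveRibbon (e : ℕ) (n l : Partition') : Prop :=
  cells l ⊆ cells n ∧ ∃ c, IsRibbonC e c (cells n \ cells l)

/-- `κ` is the `e`-core of `l`: obtained by repeatedly removing `e`-rim-hooks,
and no further `e`-rim-hook can be removed. -/
def IsECoreOf (e : ℕ) (κ l : Partition') : Prop :=
  Relation.ReflTransGen (RemoveRibbon e) l κ ∧ ¬ ∃ m, RemoveRibbon e κ m

/-- `l` has `e`-weight `w`: `|l| = |e-core of l| + w * e`. -/
def EWeight (e : ℕ) (l : Partition') (w : ℕ) : Prop :=
  ∃ κ, IsECoreOf e κ l ∧ l.size = κ.size + w * e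

/-- `λ →_{m:e} ν` with total spin `s`: `[ν] \ [λ]` is a disjoint union of `m`
`e`-ribbons, each of whose heads lies in row 1 or directly below a cell of `λ`,
the sum of whose spins is `s`. -/
def HAddSpin (e m s : ℕ) (l n : Partition') : Prop :=
  cells l ⊆ cells n ∧
  ∃ (R : Fin m → Set (ℕ × ℕ)) (c : Fin m → ℕ → ℕ × ℕ),
    ((cells n \ cells l) = ⋃ i, R i) ∧
    (Pairwise fun i j => Disjoint (R i) (R j)) ∧
    (∀ i, IsRibbonC e (c i) (R i) ∧ HeadOK l (c i)) ∧
    s = ∑ i, spinOf e (c i)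

/-- `λ →_{m:e} ν`. -/
def HAdd (e m : ℕ) (l n : Partition') : Prop := ∃ s, HAddSpin e m s l n

/-- `x` is an addable node of `l`. -/
def Addable (l : Partition') (x : ℕ × ℕ) : Prop :=
  x ∉ cells l ∧ ∃ n : Partition', cells n = insert x (cells l)

/-- `x` is a removable node of `l`. -/
def Removable (l : Partition') (x : ℕ × ℕ) : Prop :=
  x ∈ cells l ∧ ∃ n : Partition', cells n = cells l \ {x}

/-- The `e`-residue of a node `(c,d)`: `d - c mod e`. -/
def res (e : ℕ) (x : ℕ × ℕ) : ZMod e := (x.2 : ZMod e) - (x.1 : ZMod e)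

/-- `N_i(λ,ν) = #{addable i-nodes of λ above x} - #{removable i-nodes of λ above x}`,
where `i = res e x` and `y` is above `x` iff `y.1 < x.1`. -/
noncomputable def Nnum (e : ℕ) (l : Partition') (x : ℕ × ℕ) : ℤ :=
  ({y | Addable l y ∧ res e y = res e x ∧ y.1 < x.1}.ncard : ℤ) -
  ({y | Removable l y ∧ res e y = res e x ∧ y.1 < x.1}.ncard : ℤ)

end Partition'

/-!
On a `k`-bead abacus, adding to `λ` one `e`-ribbon whose head satisfies the head condition is
the same as moving a single bead from `b` to the empty position `b + e`, subject to an
inequality between the numbers of beads beyond `b + e`; the spin of the ribbon is the number of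
beads strictly between `b` and `b + e`. A decomposition of `ν/λ` into `m` such ribbons can be
peeled one ribbon at a time (the ribbon whose head is on the highest diagonal leaves a
partition when removed), so `λ →_{m:e} ν` with spin `s` amounts to a sequence of `m` such bead
moves of total spin `s`. Inserting an empty runner is a strictly increasing map `f` of positions
with `f (x + e) = f x + (e + 1)`: it preserves all the bead counts involved and turns moves by `e`
into moves by `e + 1`, and every move by `e + 1` of an image set comes from a move by `e`.
-/

namespace Partition'

lemma parts_eq_zero_of_length_le (l : Partition') {i : ℕ} (h : l.length ≤ i) : l.parts i = 0 :=
  Nat.sInf_mem l.eventually_zero i h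

lemma length_le_of_forall {l : Partition'} {N : ℕ} (h : ∀ i, N ≤ i → l.parts i = 0) :
    l.length ≤ N :=
  Nat.sInf_le h

lemma fst_lt_length_of_mem_cells {l : Partition'} {x : ℕ × ℕ} (hx : x ∈ cells l) :
    x.1 < l.length := by
  by_contra h
  have h0 := parts_eq_zero_of_length_le l (not_lt.1 h)
  have hx' : x.2 < l.parts x.1 := hx
  omega

lemma cells_subset_cells_iff {l n : Partition'} :
    cells l ⊆ cells n ↔ ∀ i, l.parts i ≤ n.parts i := by
  refine ⟨fun h i => ?_, fun h x hx => lt_of_lt_of_le hx (h x.1)⟩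
  by_contra hi
  exact lt_irrefl (n.parts i) (h (show (i, n.parts i) ∈ cells l from not_le.1 hi))

lemma length_le_length_of_cells_subset {l n : Partition'} (h : cells l ⊆ cells n) :
    l.length ≤ n.length :=
  length_le_of_forall fun i hi => by
    have := cells_subset_cells_iff.1 h i
    have := parts_eq_zero_of_length_le n hi
    omega

lemma parts_eq_of_cells_eq {l n : Partition'} (h : cells l = cells n) (i : ℕ) :
    l.parts i = n.parts i :=
  le_antisymm (cells_subset_cells_iff.1 h.le i) (cells_subset_cells_iff.1 h.ge i)

lemma isLowerSet_cells (l : Partition') : IsLowerSet (cells l) :=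
  fun _ _ hle hx => lt_of_le_of_lt hle.2 (lt_of_lt_of_le hx (l.antitone hle.1))

lemma cells_finite (l : Partition') : (cells l).Finite :=
  ((Set.finite_Iio l.length).prod (Set.finite_Iio (l.parts 0))).subset fun _ hx =>
    ⟨fst_lt_length_of_mem_cells hx, lt_of_lt_of_le hx (l.antitone (Nat.zero_le _))⟩

def ofYoungDiagram (μ : YoungDiagram) : Partition' where
  parts := μ.rowLen
  antitone := fun i j h => μ.rowLen_anti i j h
  eventually_zero := ⟨μ.colLen 0, fun i hi => by
    by_contra h
    have hmem : (i, 0) ∈ μ := YoungDiagram.mem_iff_lt_rowLen.2 (Nat.pos_of_ne_zero h)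
    exact absurd (YoungDiagram.mem_iff_lt_colLen.1 hmem) (not_lt.2 hi)⟩

lemma exists_cells_eq {X : Set (ℕ × ℕ)} (hfin : X.Finite) (hlow : IsLowerSet X) :
    ∃ u : Partition', cells u = X := by
  refine ⟨ofYoungDiagram ⟨hfin.toFinset, by simpa using hlow⟩, Set.ext fun x => ?_⟩
  exact (YoungDiagram.mem_iff_lt_rowLen (i := x.1) (j := x.2)).symm.trans (by simp)

lemma isLowerSet_of_forall_succ {X : Set (ℕ × ℕ)}
    (hleft : ∀ i j, (i, j + 1) ∈ X → (i, j) ∈ X) (hup : ∀ i j, (i + 1, j) ∈ X → (i, j) ∈ X) :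
    IsLowerSet X := by
  have hleft' : ∀ i j d, (i, j + d) ∈ X → (i, j) ∈ X := fun i j d => by
    induction d with
    | zero => exact id
    | succ d ih => exact fun h => ih (hleft _ _ h)
  have hup' : ∀ i j d, (i + d, j) ∈ X → (i, j) ∈ X := fun i j d => by
    induction d with
    | zero => exact id
    | succ d ih => exact fun h => ih (hup _ _ (by rwa [← Nat.add_assoc] at h))
  rintro ⟨a, b⟩ ⟨c, d⟩ ⟨hca, hdb⟩ hx
  simp only at hca hdb
  refine hup' c d (a - c) ?_
  rw [Nat.add_sub_cancel' hca]
  exact hleft' a d (b - d) (by rwa [Nat.add_sub_cancel' hdb])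

end Partition'

namespace Abacus

def numAbove (B : Finset ℕ) (p : ℕ) : ℕ := #{x ∈ B | p < x}

lemma numAbove_le_card (B : Finset ℕ) (p : ℕ) : numAbove B p ≤ B.card :=
  card_filter_le _ _

lemma ite_mem_add_numAbove (B : Finset ℕ) (p : ℕ) :
    (if p ∈ B then 1 else 0) + numAbove B p =
      if p = 0 then B.card else numAbove B (p - 1) := by
  have hsplit : #{x ∈ B | p ≤ x} = #{x ∈ B | x = p} + numAbove B p := by
    rw [numAbove, ← card_union_of_disjoint (disjoint_filter.2 fun x _ h => by omega),
      ← filter_or]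
    exact congrArg card (filter_congr fun x _ => by omega)
  have hp : #{x ∈ B | x = p} = if p ∈ B then 1 else 0 := by
    rw [filter_eq']; split_ifs <;> simp
  rw [← hp, ← hsplit]
  split_ifs with h0
  · subst h0; simp
  · exact congrArg card (filter_congr fun x _ => by omega)

lemma numAbove_sub_one (B : Finset ℕ) {p : ℕ} (hp : p ≠ 0) :
    numAbove B (p - 1) = numAbove B p + if p ∈ B then 1 else 0 := by
  have := ite_mem_add_numAbove B p
  rw [if_neg hp] at this
  omega

lemma eq_of_numAbove_eq {B C : Finset ℕ} (hcard : B.card = C.card)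
    (h : ∀ p, numAbove B p = numAbove C p) : B = C := by
  ext x
  have hB := ite_mem_add_numAbove B x
  have hC := ite_mem_add_numAbove C x
  rw [← h x, ← hcard, ← h (x - 1)] at hC
  split_ifs at hB hC <;> simp_all

lemma card_eq_numAbove_add (B : Finset ℕ) (p : ℕ) :
    B.card = numAbove B p + #{x ∈ B | x ≤ p} := by
  simpa only [numAbove, not_lt] using
    (card_filter_add_card_filter_not (s := B) (fun x => p < x)).symm

lemma card_le_numAbove_add_succ (B : Finset ℕ) (p : ℕ) : B.card ≤ numAbove B p + (p + 1) := by
  have : #{x ∈ B | x ≤ p} ≤ #(range (p + 1)) :=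
    card_le_card fun x hx => mem_range.2 (Nat.lt_succ_of_le (mem_filter.1 hx).2)
  rw [card_range] at this
  have := card_eq_numAbove_add B p
  omega

lemma card_le_numAbove_add {B : Finset ℕ} {y p : ℕ} (hy : y ∉ B) (hyp : y ≤ p) :
    B.card ≤ numAbove B p + p := by
  have : #{x ∈ B | x ≤ p} ≤ #((range (p + 1)).erase y) :=
    card_le_card fun x hx => by
      simp only [mem_filter] at hx
      simp only [mem_erase, mem_range]
      exact ⟨fun h => hy (h ▸ hx.1), by omega⟩
  rw [card_erase_of_mem (mem_range.2 (Nat.lt_succ_of_le hyp)), card_range] at this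
  have := card_eq_numAbove_add B p
  omega

lemma numAbove_image {f : ℕ → ℕ} (hf : StrictMono f) (B : Finset ℕ) (p : ℕ) :
    numAbove (B.image f) (f p) = numAbove B p := by
  rw [numAbove, filter_image, card_image_of_injective _ hf.injective, numAbove]
  simp only [hf.lt_iff_lt]

def moveBead (e b : ℕ) (B : Finset ℕ) : Finset ℕ := insert (b + e) (B.erase b)

def IsBeadMove (e b : ℕ) (B C : Finset ℕ) : Prop :=
  b ∈ B ∧ b + e ∉ B ∧ C = moveBead e b B

namespace IsBeadMove

variable {e b : ℕ} {B C : Finset ℕ}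

lemma card_eq (h : IsBeadMove e b B C) : C.card = B.card := by
  obtain ⟨hb, hbe, rfl⟩ := h
  rw [moveBead, card_insert_of_notMem (by simp [hbe]), card_erase_add_one hb]

lemma numAbove_eq (h : IsBeadMove e b B C) (p : ℕ) :
    numAbove C p = numAbove B p + if b ≤ p ∧ p < b + e then 1 else 0 := by
  obtain ⟨hb, hbe, rfl⟩ := h
  have hins : numAbove (moveBead e b B) p =
      numAbove (B.erase b) p + if p < b + e then 1 else 0 := by
    rw [moveBead, numAbove, filter_insert]
    split_ifs <;> simp_all [card_insert_of_notMem, numAbove]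
  have hera : numAbove B p = numAbove (B.erase b) p + if p < b then 1 else 0 := by
    rw [numAbove, numAbove, filter_erase]
    split_ifs with h
    · rw [card_erase_add_one (mem_filter.2 ⟨hb, h⟩)]
    · rw [erase_eq_of_notMem (by simp [h]), add_zero]
  split_ifs at * <;> omega

lemma ne_zero (h : IsBeadMove e b B C) : e ≠ 0 := by
  rintro rfl
  exact h.2.1 h.1

lemma notMem_and_add_mem (h : IsBeadMove e b B C) : b ∉ C ∧ b + e ∈ C := by
  have he := h.ne_zero
  obtain ⟨hb, hbe, rfl⟩ := h
  simp [moveBead, he]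

end IsBeadMove

lemma isBeadMove_of_numAbove_eq {e b : ℕ} {B C : Finset ℕ} (he : 1 ≤ e)
    (hcard : B.card = C.card)
    (h : ∀ p, numAbove C p = numAbove B p + if b ≤ p ∧ p < b + e then 1 else 0) :
    IsBeadMove e b B C := by
  have hb : b ∈ B := by
    have h1 := ite_mem_add_numAbove B b
    have h2 := ite_mem_add_numAbove C b
    rw [h b] at h2
    have h3 := h (b - 1)
    split_ifs at h1 h2 h3 <;> omega
  have hbe : b + e ∉ B := by
    have h1 := ite_mem_add_numAbove B (b + e)
    have h2 := ite_mem_add_numAbove C (b + e)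
    rw [h (b + e), h (b + e - 1)] at h2
    split_ifs at h1 h2 <;> omega
  have hmove : IsBeadMove e b B (moveBead e b B) := ⟨hb, hbe, rfl⟩
  refine ⟨hb, hbe, (eq_of_numAbove_eq (by rw [hmove.card_eq, hcard]) fun p => ?_).symm⟩
  rw [h, hmove.numAbove_eq]

/-- The inequality is the head condition of the added ribbon relative to the partition with
bead set `B₀`. -/
def BeadStep (e : ℕ) (B₀ C C' : Finset ℕ) (s : ℕ) : Prop :=
  ∃ b, IsBeadMove e b C C' ∧ numAbove C (b + e) ≤ numAbove B₀ (b + e) ∧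
    s = #{x ∈ C | b < x ∧ x < b + e}

def BeadMoves (e : ℕ) (B₀ : Finset ℕ) : ℕ → Finset ℕ → ℕ → Prop
  | 0, C, s => C = B₀ ∧ s = 0
  | m + 1, C', s =>
    ∃ C s₁ s₂, BeadMoves e B₀ m C s₁ ∧ BeadStep e B₀ C C' s₂ ∧ s = s₁ + s₂

lemma BeadMoves.card_eq {e : ℕ} {B₀ : Finset ℕ} :
    ∀ {m C s}, BeadMoves e B₀ m C s → C.card = B₀.card
  | 0, _, _, ⟨rfl, _⟩ => rfl
  | _ + 1, _, _, ⟨_, _, _, h, ⟨_, hmove, _⟩, _⟩ => hmove.card_eq.trans h.card_eq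

section Image

variable {e b : ℕ} {f : ℕ → ℕ}

lemma image_moveBead (hf : f.Injective) (hshift : ∀ x, f (x + e) = f x + (e + 1))
    (C : Finset ℕ) : (moveBead e b C).image f = moveBead (e + 1) (f b) (C.image f) := by
  rw [moveBead, moveBead, image_insert, image_erase hf, hshift]

lemma beadStep_image_iff (hf : StrictMono f) (hshift : ∀ x, f (x + e) = f x + (e + 1))
    {B₀ C D : Finset ℕ} {s : ℕ} :
    BeadStep (e + 1) (B₀.image f) (C.image f) D s ↔
      ∃ C', D = C'.image f ∧ BeadStep e B₀ C C' s := by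
  have hint : ∀ b, #{x ∈ C.image f | f b < x ∧ x < f b + (e + 1)} =
      #{x ∈ C | b < x ∧ x < b + e} := fun b => by
    rw [filter_image, card_image_of_injective _ hf.injective, ← hshift]
    simp only [hf.lt_iff_lt]
  have hmem : ∀ b, f b + (e + 1) ∈ C.image f ↔ b + e ∈ C := fun b => by
    rw [← hshift, hf.injective.mem_finset_image]
  have hhead : ∀ b, numAbove (C.image f) (f b + (e + 1)) ≤
      numAbove (B₀.image f) (f b + (e + 1)) ↔ numAbove C (b + e) ≤ numAbove B₀ (b + e) :=
    fun b => by
    rw [← hshift, numAbove_image hf, numAbove_image hf]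
  constructor
  · rintro ⟨b', ⟨hb', hbe', rfl⟩, hhead', rfl⟩
    obtain ⟨b, hb, rfl⟩ := mem_image.1 hb'
    exact ⟨moveBead e b C, (image_moveBead hf.injective hshift C).symm,
      b, ⟨hb, fun h => hbe' ((hmem b).2 h), rfl⟩, (hhead b).1 hhead', hint b⟩
  · rintro ⟨C', rfl, b, ⟨hb, hbe, rfl⟩, hhead', rfl⟩
    exact ⟨f b, ⟨mem_image_of_mem f hb, fun h => hbe ((hmem b).1 h),
      image_moveBead hf.injective hshift C⟩, (hhead b).2 hhead', (hint b).symm⟩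

lemma beadMoves_image_iff (hf : StrictMono f) (hshift : ∀ x, f (x + e) = f x + (e + 1))
    {B₀ : Finset ℕ} :
    ∀ {m D s}, BeadMoves (e + 1) (B₀.image f) m D s ↔
      ∃ C, D = C.image f ∧ BeadMoves e B₀ m C s
  | 0, D, s => by simp [BeadMoves]
  | m + 1, D, s => by
    simp only [BeadMoves]
    constructor
    · rintro ⟨D₁, s₁, s₂, h₁, h₂, rfl⟩
      obtain ⟨C, rfl, hC⟩ := beadMoves_image_iff hf hshift |>.1 h₁
      obtain ⟨C', rfl, hC'⟩ := (beadStep_image_iff hf hshift).1 h₂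
      exact ⟨C', rfl, C, s₁, s₂, hC, hC', rfl⟩
    · rintro ⟨C', rfl, C, s₁, s₂, hC, hC', rfl⟩
      exact ⟨C.image f, s₁, s₂, beadMoves_image_iff hf hshift |>.2 ⟨C, rfl, hC⟩,
        (beadStep_image_iff hf hshift).2 ⟨C', rfl, hC'⟩, rfl⟩

end Image

end Abacus

lemma Fin.add_le_of_strictMono {k : ℕ} {f : Fin k → ℕ} (hf : StrictMono f) :
    ∀ (d : ℕ) (a : Fin k) (h : a + d < k), f a + d ≤ f ⟨a + d, h⟩
  | 0, _, _ => le_rfl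
  | d + 1, a, h =>
    Nat.succ_le_of_lt ((Fin.add_le_of_strictMono hf d a (by omega)).trans_lt
      (hf (Fin.mk_lt_mk.2 (Nat.lt_succ_self _))))

namespace Partition'

open Abacus

section BetaSet

variable {k : ℕ}

lemma strictAntiOn_beta (l : Partition') (k : ℕ) :
    StrictAntiOn (fun i => l.parts i + (k - 1 - i)) (Set.Iio k) := fun i _ j hj hij => by
  have := l.antitone hij.le
  simp only
  rw [Set.mem_Iio] at hj
  omega

lemma card_betaSet (l : Partition') (k : ℕ) : (betaSet l k).card = k := by
  rw [betaSet, card_image_of_injOn (by simpa using (strictAntiOn_beta l k).injOn), card_range]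

lemma numAbove_betaSet (l : Partition') (k p : ℕ) :
    numAbove (betaSet l k) p = #{i ∈ range k | p < l.parts i + (k - 1 - i)} := by
  rw [numAbove, betaSet, filter_image, card_image_of_injOn]
  exact (strictAntiOn_beta l k).injOn.mono fun i hi => by
    simp only [coe_filter, mem_range, Set.mem_ofPred_eq] at hi
    exact hi.1

/-- The beads are `β₀ > β₁ > ⋯ > β_{k-1}`, so more than `i` of them lie beyond `p`
exactly when `β_i` does. -/
lemma lt_numAbove_betaSet_iff (l : Partition') {i p : ℕ} (hi : i < k) :
    i < numAbove (betaSet l k) p ↔ p < l.parts i + (k - 1 - i) := by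
  rw [numAbove_betaSet]
  constructor
  · intro h
    by_contra hp
    have hsub : {t ∈ range k | p < l.parts t + (k - 1 - t)} ⊆ range i := fun t ht => by
      simp only [mem_filter, mem_range] at ht ⊢
      by_contra hti
      have := l.antitone (not_lt.1 hti)
      omega
    exact absurd (card_le_card hsub) (by rw [card_range]; omega)
  · intro h
    have hsub : range (i + 1) ⊆ {t ∈ range k | p < l.parts t + (k - 1 - t)} := fun t ht => by
      simp only [mem_filter, mem_range] at ht ⊢
      have := l.antitone (Nat.le_of_lt_succ ht)
      omega
    simpa using card_le_card hsub

def diag (k : ℕ) (x : ℕ × ℕ) : ℕ := x.2 + (k - 1 - x.1)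

lemma mem_cells_iff_lt_numAbove {l : Partition'} {x : ℕ × ℕ} (hx : x.1 < k) :
    x ∈ cells l ↔ x.1 < numAbove (betaSet l k) (diag k x) := by
  rw [lt_numAbove_betaSet_iff l hx, diag]
  exact ⟨fun h => by simp only [cells, Set.mem_ofPred_eq] at h; omega,
    fun h => show x.2 < l.parts x.1 by omega⟩

lemma numAbove_betaSet_le (l : Partition') (k p : ℕ) : numAbove (betaSet l k) p ≤ k :=
  (numAbove_le_card _ _).trans (card_betaSet l k).le

lemma cells_eq_iff_betaSet_eq {l n : Partition'} (hl : l.length ≤ k) (hn : n.length ≤ k) :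
    cells l = cells n ↔ betaSet l k = betaSet n k := by
  constructor
  · intro h
    simp only [betaSet, parts_eq_of_cells_eq h]
  · intro h
    ext x
    by_cases hx : x.1 < k
    · rw [mem_cells_iff_lt_numAbove hx, mem_cells_iff_lt_numAbove hx, h]
    · show x.2 < l.parts x.1 ↔ x.2 < n.parts x.1
      rw [parts_eq_zero_of_length_le l (by omega), parts_eq_zero_of_length_le n (by omega)]

lemma numAbove_betaSet_mono {l n : Partition'} (h : cells l ⊆ cells n) (p : ℕ) :
    numAbove (betaSet l k) p ≤ numAbove (betaSet n k) p := by
  rw [numAbove_betaSet, numAbove_betaSet]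
  exact card_le_card (monotone_filter_right _ fun i hi => by
    have := cells_subset_cells_iff.1 h i
    omega)

lemma exists_betaSet_eq {B : Finset ℕ} (hB : B.card = k) :
    ∃ u : Partition', u.length ≤ k ∧ betaSet u k = B := by
  set f := B.orderEmbOfFin hB
  have hgap := Fin.add_le_of_strictMono f.strictMono
  let u : Partition' :=
    { parts := fun i => if hi : i < k then f ⟨k - 1 - i, by omega⟩ - (k - 1 - i) else 0
      antitone := fun i j hij => by
        by_cases hj : j < k
        · have := hgap (j - i) ⟨k - 1 - j, by omega⟩ (by simp only; omega)
          simp only [dif_pos hj, dif_pos (show i < k by omega)]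
          simp only [show k - 1 - j + (j - i) = k - 1 - i by omega] at this
          omega
        · simp [dif_neg hj]
      eventually_zero := ⟨k, fun i hi => dif_neg (by omega)⟩ }
  refine ⟨u, length_le_of_forall fun i hi => dif_neg (by omega), ?_⟩
  refine eq_of_subset_of_card_le (fun x hx => ?_) (by rw [hB, card_betaSet])
  obtain ⟨i, hi, rfl⟩ := mem_image.1 hx
  rw [mem_range] at hi
  have := hgap (k - 1 - i) ⟨0, by omega⟩ (by simp only; omega)
  simp only [Nat.zero_add] at this
  simp only [u, dif_pos hi]
  rw [Nat.sub_add_cancel (by omega)]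
  exact B.orderEmbOfFin_mem hB _

end BetaSet

section SingleRibbon

variable {e k b s : ℕ} {l u n : Partition'}

lemma mem_cells_diff_iff (hn : n.length ≤ k) {x : ℕ × ℕ} :
    x ∈ cells n \ cells u ↔ x.1 < k ∧ numAbove (betaSet u k) (diag k x) ≤ x.1 ∧
      x.1 < numAbove (betaSet n k) (diag k x) := by
  constructor
  · rintro ⟨hxn, hxu⟩
    have hx : x.1 < k := (fst_lt_length_of_mem_cells hxn).trans_le hn
    rw [mem_cells_iff_lt_numAbove hx] at hxn hxu
    exact ⟨hx, not_lt.1 hxu, hxn⟩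
  · rintro ⟨hx, hxu, hxn⟩
    rw [Set.mem_sdiff, mem_cells_iff_lt_numAbove hx, mem_cells_iff_lt_numAbove hx]
    exact ⟨hxn, not_lt.2 hxu⟩

lemma cells_subset_of_isBeadMove (hu : u.length ≤ k)
    (hmove : IsBeadMove e b (betaSet u k) (betaSet n k)) : cells u ⊆ cells n := fun x hx => by
  have hxk : x.1 < k := (fst_lt_length_of_mem_cells hx).trans_le hu
  rw [mem_cells_iff_lt_numAbove hxk] at hx ⊢
  rw [hmove.numAbove_eq]
  omega

/-- When a bead moves from `b` to `b + e = t + 1`, giving the bead set `B`, the added ribbon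
has one cell on each diagonal `p ∈ [b, b + e)`, in row `numAbove B p - 1`; `j` counts from the
head. -/
def moveRibbon (B : Finset ℕ) (k t j : ℕ) : ℕ × ℕ :=
  (numAbove B (t - j) - 1, t - j + numAbove B (t - j) - k)

lemma numAbove_bounds_of_isBeadMove (hmove : IsBeadMove e b (betaSet u k) (betaSet n k))
    {p : ℕ} (hp1 : b ≤ p) (hp2 : p < b + e) :
    1 ≤ numAbove (betaSet n k) p ∧ numAbove (betaSet n k) p ≤ k ∧
      k ≤ numAbove (betaSet n k) p + p := by
  obtain ⟨hb, hbe⟩ := hmove.notMem_and_add_mem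
  refine ⟨card_pos.2 ⟨b + e, mem_filter.2 ⟨hbe, hp2⟩⟩, numAbove_betaSet_le n k p, ?_⟩
  simpa [card_betaSet] using card_le_numAbove_add hb hp1

lemma mem_cells_diff_iff_of_isBeadMove (hn : n.length ≤ k)
    (hmove : IsBeadMove e b (betaSet u k) (betaSet n k)) {x : ℕ × ℕ} :
    x ∈ cells n \ cells u ↔ ∃ j < e, moveRibbon (betaSet n k) k (b + e - 1) j = x := by
  rw [mem_cells_diff_iff hn]
  constructor
  · rintro ⟨hxk, hxu, hxn⟩
    have hχ := hmove.numAbove_eq (diag k x)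
    have hrange : b ≤ diag k x ∧ diag k x < b + e := by
      by_contra h
      rw [if_neg h] at hχ
      omega
    rw [if_pos hrange] at hχ
    refine ⟨b + e - 1 - diag k x, by omega, ?_⟩
    rw [moveRibbon, show b + e - 1 - (b + e - 1 - diag k x) = diag k x by omega]
    have hd : diag k x = x.2 + (k - 1 - x.1) := rfl
    ext <;> simp only <;> omega
  · rintro ⟨j, hj, rfl⟩
    have := numAbove_bounds_of_isBeadMove hmove (p := b + e - 1 - j) (by omega) (by omega)
    have hχ := hmove.numAbove_eq (b + e - 1 - j)
    rw [if_pos (by omega)] at hχ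
    simp only [moveRibbon, diag]
    rw [show b + e - 1 - j + numAbove (betaSet n k) (b + e - 1 - j) - k +
      (k - 1 - (numAbove (betaSet n k) (b + e - 1 - j) - 1)) = b + e - 1 - j by omega]
    omega

lemma isRibbonC_moveRibbon (hn : n.length ≤ k)
    (hmove : IsBeadMove e b (betaSet u k) (betaSet n k)) :
    IsRibbonC e (moveRibbon (betaSet n k) k (b + e - 1)) (cells n \ cells u) := by
  refine ⟨Set.ext fun x => ?_, fun i hi j hj hij => ?_, fun i hi => ?_⟩
  · rw [mem_cells_diff_iff_of_isBeadMove hn hmove]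
    simp only [Set.mem_image, Set.mem_Iio]
  · simp only [Set.mem_Iio] at hi hj
    have h1 := numAbove_bounds_of_isBeadMove hmove (p := b + e - 1 - i) (by omega) (by omega)
    have h2 := numAbove_bounds_of_isBeadMove hmove (p := b + e - 1 - j) (by omega) (by omega)
    simp only [moveRibbon, Prod.mk.injEq] at hij
    omega
  · have h1 := numAbove_bounds_of_isBeadMove hmove (p := b + e - 1 - i) (by omega) (by omega)
    have h2 := numAbove_bounds_of_isBeadMove hmove (p := b + e - 1 - (i + 1)) (by omega) (by omega)
    have hstep := numAbove_sub_one (betaSet n k) (p := b + e - 1 - i) (by omega)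
    rw [show b + e - 1 - i - 1 = b + e - 1 - (i + 1) by omega] at hstep
    simp only [moveRibbon, Prod.mk.injEq]
    split_ifs at hstep
    · left; omega
    · right; omega

lemma spinOf_moveRibbon (hmove : IsBeadMove e b (betaSet u k) (betaSet n k)) :
    spinOf e (moveRibbon (betaSet n k) k (b + e - 1)) =
      #{x ∈ betaSet u k | b < x ∧ x < b + e} := by
  have hvert : ∀ i < e - 1, (moveRibbon (betaSet n k) k (b + e - 1) (i + 1)).1 =
      (moveRibbon (betaSet n k) k (b + e - 1) i).1 + 1 ↔ b + e - 1 - i ∈ betaSet u k := by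
    intro i hi
    have h1 := numAbove_bounds_of_isBeadMove hmove (p := b + e - 1 - i) (by omega) (by omega)
    have hstep := numAbove_sub_one (betaSet n k) (p := b + e - 1 - i) (by omega)
    rw [show b + e - 1 - i - 1 = b + e - 1 - (i + 1) by omega] at hstep
    have hmem : b + e - 1 - i ∈ betaSet n k ↔ b + e - 1 - i ∈ betaSet u k := by
      rw [hmove.2.2, moveBead, mem_insert, mem_erase]
      exact ⟨fun h => h.elim (fun h => by omega) And.right, fun h => Or.inr ⟨by omega, h⟩⟩
    simp only [moveRibbon, ← hmem]
    by_cases hm : b + e - 1 - i ∈ betaSet n k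
    · simp only [hm, if_true, iff_true] at hstep ⊢; omega
    · simp only [hm, if_false, iff_false] at hstep ⊢; omega
  rw [spinOf]
  apply card_nbij' (fun i => b + e - 1 - i) (fun x => b + e - 1 - x)
  · intro i hi
    simp only [coe_filter, mem_range, Set.mem_ofPred_eq] at hi ⊢
    exact ⟨(hvert i hi.1).1 hi.2, by omega, by omega⟩
  · intro x hx
    simp only [coe_filter, mem_range, Set.mem_ofPred_eq] at hx ⊢
    refine ⟨by omega, (hvert _ (by omega)).2 ?_⟩
    rw [show b + e - 1 - (b + e - 1 - x) = x by omega]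
    exact hx.1
  · intro i hi
    simp only [coe_filter, mem_range, Set.mem_ofPred_eq] at hi
    show b + e - 1 - (b + e - 1 - i) = i
    omega
  · intro x hx
    simp only [coe_filter, Set.mem_ofPred_eq] at hx
    show b + e - 1 - (b + e - 1 - x) = x
    omega

/-- The head of the ribbon lies in row `numAbove (betaSet u k) (b + e)` and the cell above it
on diagonal `b + e`. -/
lemma headOK_moveRibbon_iff (hmove : IsBeadMove e b (betaSet u k) (betaSet n k)) :
    HeadOK l (moveRibbon (betaSet n k) k (b + e - 1)) ↔
      numAbove (betaSet u k) (b + e) ≤ numAbove (betaSet l k) (b + e) := by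
  have he := hmove.ne_zero
  have h1 := numAbove_bounds_of_isBeadMove hmove (p := b + e - 1) (by omega) (by omega)
  have htop := numAbove_sub_one (betaSet n k) (p := b + e) (by omega)
  rw [if_pos hmove.notMem_and_add_mem.2, hmove.numAbove_eq (b + e),
    if_neg (by omega), add_zero] at htop
  rw [HeadOK]
  simp only [moveRibbon, Nat.sub_zero]
  by_cases h0 : numAbove (betaSet u k) (b + e) = 0
  · simp only [h0, zero_le, iff_true]
    left; omega
  · rw [mem_cells_iff_lt_numAbove (k := k) (by simp only; omega), diag]
    simp only
    rw [show b + e - 1 + numAbove (betaSet n k) (b + e - 1) - k +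
      (k - 1 - (numAbove (betaSet n k) (b + e - 1) - 1 - 1)) = b + e by omega]
    omega

def content (x : ℕ × ℕ) : ℤ := (x.2 : ℤ) - x.1

lemma RibbonSteps.content_add {e : ℕ} {c : ℕ → ℕ × ℕ} (hc : RibbonSteps e c) :
    ∀ j < e, content (c j) + j = content (c 0)
  | 0, _ => by simp
  | j + 1, hj => by
    have ih := hc.content_add j (by omega)
    rcases hc j hj with h | ⟨h1, h2⟩
    · rw [h]; simp only [content] at ih ⊢; push_cast; omega
    · simp only [content] at ih ⊢; push_cast; omega

lemma mem_cells_diff_of_numAbove_le (hn : n.length ≤ k) {p i : ℕ}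
    (hui : numAbove (betaSet u k) p ≤ i) (hin : i < numAbove (betaSet n k) p) :
    (i, p - (k - 1 - i)) ∈ cells n \ cells u ∧ diag k (i, p - (k - 1 - i)) = p := by
  have h1 := card_le_numAbove_add_succ (betaSet u k) p
  have h2 := numAbove_betaSet_le n k p
  rw [card_betaSet] at h1
  have hdiag : diag k (i, p - (k - 1 - i)) = p := by simp only [diag]; omega
  refine ⟨(mem_cells_diff_iff hn).2 ?_, hdiag⟩
  rw [hdiag]
  exact ⟨by simp only; omega, hui, hin⟩

/-- The cells of `[n] ∖ [u]` on diagonal `p` are those in rows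
`numAbove (betaSet u k) p ≤ i < numAbove (betaSet n k) p`. -/
lemma numAbove_eq_of_forall_diag (hn : n.length ≤ k) (hsub : cells u ⊆ cells n) {q : ℕ}
    (huniq : ∀ x ∈ cells n \ cells u, ∀ y ∈ cells n \ cells u, diag k x = diag k y → x = y)
    (hrange : ∀ p, (∃ x ∈ cells n \ cells u, diag k x = p) ↔ q ≤ p ∧ p < q + e) (p : ℕ) :
    numAbove (betaSet n k) p = numAbove (betaSet u k) p + if q ≤ p ∧ p < q + e then 1 else 0 := by
  have hmono := numAbove_betaSet_mono (k := k) hsub p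
  have hle : numAbove (betaSet n k) p ≤ numAbove (betaSet u k) p + 1 := by
    by_contra h
    obtain ⟨hx₁, hd₁⟩ :=
      mem_cells_diff_of_numAbove_le (u := u) (p := p) hn le_rfl (show _ < _ by omega)
    obtain ⟨hx₂, hd₂⟩ :=
      mem_cells_diff_of_numAbove_le (u := u) (p := p) hn (Nat.le_succ _) (show _ < _ by omega)
    have := congrArg Prod.fst (huniq _ hx₁ _ hx₂ (hd₁.trans hd₂.symm))
    simp at this
  split_ifs with hp
  · obtain ⟨x, hx, rfl⟩ := (hrange p).2 hp
    have := (mem_cells_diff_iff hn).1 hx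
    omega
  · by_contra hne
    obtain ⟨hx, hdx⟩ :=
      mem_cells_diff_of_numAbove_le (u := u) (p := p) hn le_rfl (show _ < _ by omega)
    exact hp ((hrange p).1 ⟨_, hx, hdx⟩)

/-- A ribbon has one cell on each of `e` consecutive diagonals, so it can only be the region
swept by moving one bead `e` steps. -/
lemma exists_isBeadMove_of_isRibbonC (he : 1 ≤ e) (hn : n.length ≤ k)
    (hsub : cells u ⊆ cells n) {c : ℕ → ℕ × ℕ} (hc : IsRibbonC e c (cells n \ cells u)) :
    ∃ b, IsBeadMove e b (betaSet u k) (betaSet n k) ∧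
      ∀ j < e, c j = moveRibbon (betaSet n k) k (b + e - 1) j := by
  obtain ⟨himg, -, hsteps⟩ := hc
  have hmem : ∀ j < e, c j ∈ cells n \ cells u := fun j hj => himg ▸ ⟨j, hj, rfl⟩
  have hrow : ∀ j < e, (c j).1 < k := fun j hj =>
    (fst_lt_length_of_mem_cells (hmem j hj).1).trans_le hn
  have hdiag : ∀ j < e, diag k (c j) + j = diag k (c 0) := fun j hj => by
    have := hsteps.content_add j hj
    have := hrow j hj
    have := hrow 0 (by omega)
    simp only [content] at *
    simp only [diag]
    omega
  set d := diag k (c 0)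
  have hd : e - 1 ≤ d := by have := hdiag (e - 1) (by omega); omega
  have hχ := numAbove_eq_of_forall_diag (e := e) (q := d + 1 - e) hn hsub
    (fun x hx y hy hxy => by
      rw [himg] at hx hy
      obtain ⟨i, hi, rfl⟩ := hx
      obtain ⟨j, hj, rfl⟩ := hy
      have := hdiag i hi
      have := hdiag j hj
      rw [show i = j by omega])
    (fun p => ⟨fun ⟨x, hx, hxp⟩ => by
      rw [himg] at hx
      obtain ⟨j, hj, rfl⟩ := hx
      have := hdiag j hj
      have : j < e := hj
      omega, fun hp => ⟨c (d - p), hmem _ (by omega), by have := hdiag (d - p) (by omega); omega⟩⟩)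
  have hmove := isBeadMove_of_numAbove_eq he (by rw [card_betaSet, card_betaSet]) hχ
  refine ⟨d + 1 - e, hmove, fun j hj => ?_⟩
  have hcj := (mem_cells_diff_iff hn).1 (hmem j hj)
  have hdj : diag k (c j) = d + 1 - e + e - 1 - j := by have := hdiag j hj; omega
  have hχj := hχ (d + 1 - e + e - 1 - j)
  rw [if_pos (by omega)] at hχj
  rw [hdj] at hcj
  have hc2 : (c j).2 + (k - 1 - (c j).1) = d + 1 - e + e - 1 - j := hdj
  simp only [moveRibbon]
  ext <;> simp only <;> omega

def AddsRibbon (e s : ℕ) (l u n : Partition') : Prop :=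
  cells u ⊆ cells n ∧ ∃ c, IsRibbonC e c (cells n \ cells u) ∧ HeadOK l c ∧ spinOf e c = s

lemma spinOf_congr {c c' : ℕ → ℕ × ℕ} (h : ∀ j < e, c j = c' j) :
    spinOf e c = spinOf e c' := by
  refine congrArg card (filter_congr fun j hj => ?_)
  rw [mem_range] at hj
  rw [h j (by omega), h (j + 1) (by omega)]

lemma addsRibbon_iff_beadStep (he : 1 ≤ e) (hu : u.length ≤ k) (hn : n.length ≤ k) :
    AddsRibbon e s l u n ↔ BeadStep e (betaSet l k) (betaSet u k) (betaSet n k) s := by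
  constructor
  · rintro ⟨hsub, c, hc, hhead, rfl⟩
    obtain ⟨b, hmove, hcb⟩ := exists_isBeadMove_of_isRibbonC he hn hsub hc
    refine ⟨b, hmove, ?_, by rw [spinOf_congr hcb, spinOf_moveRibbon hmove]⟩
    rw [← headOK_moveRibbon_iff hmove, HeadOK, ← hcb 0 (by omega)]
    exact hhead
  · rintro ⟨b, hmove, hhead, rfl⟩
    exact ⟨cells_subset_of_isBeadMove hu hmove, _, isRibbonC_moveRibbon hn hmove,
      (headOK_moveRibbon_iff hmove).2 hhead, spinOf_moveRibbon hmove⟩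

end SingleRibbon

section RibbonDecomp

variable {e m s : ℕ} {l n : Partition'}

lemma eq_of_fst_eq_of_content_eq {x y : ℕ × ℕ} (h1 : x.1 = y.1) (h2 : content x = content y) :
    x = y :=
  Prod.ext h1 (by simp only [content] at h2; omega)

lemma RibbonSteps.content_succ {c : ℕ → ℕ × ℕ} (hc : RibbonSteps e c) {j : ℕ}
    (hj : j + 1 < e) :
    content (c (j + 1)) + 1 = content (c j) := by
  have h1 := hc.content_add j (by omega)
  have h2 := hc.content_add (j + 1) hj
  push_cast at h2
  omega

lemma RibbonSteps.fst_succ {c : ℕ → ℕ × ℕ} (hc : RibbonSteps e c) {j : ℕ}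
    (hj : j + 1 < e) :
    (c j).1 ≤ (c (j + 1)).1 ∧ (c (j + 1)).1 ≤ (c j).1 + 1 := by
  rcases hc j hj with h | ⟨-, h⟩ <;> rw [h] <;> omega

/-- Followed back towards their heads, the rows of two ribbons change by at most one per step,
and their cells on a common diagonal never coincide, so neither can overtake the other. -/
lemma RibbonSteps.fst_lt_of_content_eq {c c' : ℕ → ℕ × ℕ} (hc : RibbonSteps e c)
    (hc' : RibbonSteps e c') (hne : ∀ i < e, ∀ j < e, c i ≠ c' j) :
    ∀ a b, a ≤ b → b < e → content (c b) = content (c' a) → (c b).1 < (c' a).1 →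
      (c (b - a)).1 < (c' 0).1
  | 0, _, _, _, _, hlt => hlt
  | a + 1, b, hab, hb, hcont, hlt => by
    have hs := hc.fst_succ (j := b - 1) (by omega)
    have hs' := hc'.fst_succ (j := a) (by omega)
    have hcs := hc.content_succ (j := b - 1) (by omega)
    have hcs' := hc'.content_succ (j := a) (by omega)
    rw [Nat.sub_add_cancel (by omega : 1 ≤ b)] at hs hcs
    have hcont' : content (c (b - 1)) = content (c' a) := by omega
    have hlt' : (c (b - 1)).1 < (c' a).1 := by
      refine lt_of_le_of_ne (by omega) fun h => ?_
      exact hne (b - 1) (by omega) a (by omega) (eq_of_fst_eq_of_content_eq h hcont')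
    have := RibbonSteps.fst_lt_of_content_eq hc hc' hne a (b - 1) (by omega) (by omega) hcont' hlt'
    rwa [show b - 1 - a = b - (a + 1) by omega] at this

lemma HeadOK.fst_le_of_content_eq {c : ℕ → ℕ × ℕ} (h : HeadOK l c) {x : ℕ × ℕ}
    (hx : x ∉ cells l) (hcont : content x = content (c 0)) : (c 0).1 ≤ x.1 := by
  by_contra hlt
  rcases h with h0 | hmem
  · omega
  · refine hx (isLowerSet_cells l ⟨?_, ?_⟩ hmem) <;> simp only [content] at hcont <;> omega

def IsRibbonDecomp (e : ℕ) (l n : Partition') (R : Fin m → Set (ℕ × ℕ))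
    (c : Fin m → ℕ → ℕ × ℕ) : Prop :=
  (cells n \ cells l = ⋃ i, R i) ∧ (Pairwise fun i j => Disjoint (R i) (R j)) ∧
    ∀ i, IsRibbonC e (c i) (R i) ∧ HeadOK l (c i)

namespace IsRibbonDecomp

variable {R : Fin m → Set (ℕ × ℕ)} {c : Fin m → ℕ → ℕ × ℕ} {i₀ : Fin m}

lemma subset (hD : IsRibbonDecomp e l n R c) (i : Fin m) : R i ⊆ cells n \ cells l :=
  hD.1 ▸ Set.subset_iUnion R i

lemma exists_mem (hD : IsRibbonDecomp e l n R c) {x : ℕ × ℕ} (hx : x ∈ cells n \ cells l) :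
    ∃ i, x ∈ R i :=
  Set.mem_iUnion.1 (hD.1 ▸ hx)

lemma mem_iff (hD : IsRibbonDecomp e l n R c) (i : Fin m) {x : ℕ × ℕ} :
    x ∈ R i ↔ ∃ j < e, c i j = x := by
  rw [(hD.2.2 i).1.1]
  rfl

lemma steps (hD : IsRibbonDecomp e l n R c) (i : Fin m) : RibbonSteps e (c i) :=
  (hD.2.2 i).1.2.2

/-- The heart of the peeling argument: a ribbon whose head is on the highest diagonal has no
cell of another ribbon strictly below it on the same diagonal; otherwise, following both
ribbons back, the other ribbon's head would lie strictly below a cell of `[n] ∖ [l]`, against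
its head condition. -/
lemma fst_le_of_content_eq (hD : IsRibbonDecomp e l n R c) {i₀ i₁ : Fin m} (hne : i₀ ≠ i₁)
    (hmax : content (c i₁ 0) ≤ content (c i₀ 0)) {x y : ℕ × ℕ} (hx : x ∈ R i₀)
    (hy : y ∈ R i₁) (hcont : content x = content y) : y.1 ≤ x.1 := by
  obtain ⟨b, hb, rfl⟩ := (hD.mem_iff i₀).1 hx
  obtain ⟨a, ha, rfl⟩ := (hD.mem_iff i₁).1 hy
  have hb₀ := (hD.steps i₀).content_add b hb
  have ha₁ := (hD.steps i₁).content_add a ha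
  have hdisj : ∀ i < e, ∀ j < e, c i₀ i ≠ c i₁ j := fun i hi j hj h =>
    Set.disjoint_left.1 (hD.2.1 hne) ((hD.mem_iff i₀).2 ⟨i, hi, rfl⟩)
      ((hD.mem_iff i₁).2 ⟨j, hj, h.symm⟩)
  by_contra hlt
  have hwalk := (hD.steps i₀).fst_lt_of_content_eq (hD.steps i₁) hdisj a b (by omega) hb hcont
    (by omega)
  have hz := (hD.subset i₀ ((hD.mem_iff i₀).2 ⟨b - a, by omega, rfl⟩)).2
  have hza := (hD.steps i₀).content_add (b - a) (by omega)
  have := (hD.2.2 i₁).2.fst_le_of_content_eq hz (by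
    push_cast [Nat.cast_sub (show a ≤ b by omega)] at hza
    omega)
  omega

lemma right_mem (hD : IsRibbonDecomp e l n R c)
    (hmax : ∀ i, content (c i 0) ≤ content (c i₀ 0)) {x : ℕ × ℕ} (hx : x ∈ R i₀)
    (hy : (x.1, x.2 + 1) ∈ cells n) : (x.1, x.2 + 1) ∈ R i₀ := by
  by_contra hyR
  have hyl : (x.1, x.2 + 1) ∉ cells l := fun h =>
    (hD.subset i₀ hx).2
      (isLowerSet_cells l (show x ≤ (x.1, x.2 + 1) from ⟨le_rfl, Nat.le_succ _⟩) h)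
  obtain ⟨i₁, hy₁⟩ := hD.exists_mem ⟨hy, hyl⟩
  have hne : i₀ ≠ i₁ := by rintro rfl; exact hyR hy₁
  obtain ⟨j, hj, rfl⟩ := (hD.mem_iff i₀).1 hx
  cases j with
  | zero =>
    obtain ⟨j₁, hj₁, hcy⟩ := (hD.mem_iff i₁).1 hy₁
    have h₁ := (hD.steps i₁).content_add j₁ hj₁
    have h₂ := hmax i₁
    rw [hcy] at h₁
    simp only [content] at h₁ h₂
    push_cast at h₁
    omega
  | succ j =>
    rcases hD.steps i₀ j hj with h | ⟨h1, h2⟩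
    · have := hD.fst_le_of_content_eq hne (hmax i₁) ((hD.mem_iff i₀).2 ⟨j, by omega, rfl⟩) hy₁
        (by rw [h]; simp only [content]; push_cast; ring)
      rw [h] at this
      simp at this
    · exact hyR ((hD.mem_iff i₀).2 ⟨j, by omega, Prod.ext h2.symm h1⟩)

lemma below_mem (hD : IsRibbonDecomp e l n R c)
    (hmax : ∀ i, content (c i 0) ≤ content (c i₀ 0)) {x : ℕ × ℕ} (hx : x ∈ R i₀)
    (hy : (x.1 + 1, x.2) ∈ cells n) : (x.1 + 1, x.2) ∈ R i₀ := by
  by_contra hyR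
  have hyl : (x.1 + 1, x.2) ∉ cells l := fun h =>
    (hD.subset i₀ hx).2
      (isLowerSet_cells l (show x ≤ (x.1 + 1, x.2) from ⟨Nat.le_succ _, le_rfl⟩) h)
  obtain ⟨i₁, hy₁⟩ := hD.exists_mem ⟨hy, hyl⟩
  have hne : i₀ ≠ i₁ := by rintro rfl; exact hyR hy₁
  obtain ⟨j, hj, rfl⟩ := (hD.mem_iff i₀).1 hx
  by_cases hj' : j + 1 < e
  · rcases hD.steps i₀ j hj' with h | ⟨h1, h2⟩
    · exact hyR ((hD.mem_iff i₀).2 ⟨j + 1, hj', h⟩)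
    · have := hD.fst_le_of_content_eq hne (hmax i₁) ((hD.mem_iff i₀).2 ⟨j + 1, hj', rfl⟩) hy₁
        (by simp only [content]; push_cast; omega)
      simp only at this
      omega
  · obtain ⟨j₁, hj₁, hcy⟩ := (hD.mem_iff i₁).1 hy₁
    cases j₁ with
    | zero =>
      rcases (hD.2.2 i₁).2 with h0 | hmem
      · rw [hcy] at h0
        simp at h0
      · rw [hcy] at hmem
        exact (hD.subset i₀ hx).2 (by simpa using hmem)
    | succ j₁ =>
      rcases hD.steps i₁ j₁ hj₁ with h | ⟨h1, h2⟩
      · rw [hcy, Prod.mk.injEq] at h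
        refine Set.disjoint_left.1 (hD.2.1 hne) hx ((hD.mem_iff i₁).2 ⟨j₁, by omega, ?_⟩)
        exact Prod.ext (by omega) h.2.symm
      · rw [hcy] at h1 h2
        have := hD.fst_le_of_content_eq hne (hmax i₁) hx ((hD.mem_iff i₁).2 ⟨j₁, by omega, rfl⟩)
          (by simp only [content] at h1 h2 ⊢; push_cast [h1, ← h2]; ring)
        simp only at h2
        omega

lemma isLowerSet_diff (hD : IsRibbonDecomp e l n R c)
    (hmax : ∀ i, content (c i 0) ≤ content (c i₀ 0)) : IsLowerSet (cells n \ R i₀) := by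
  refine isLowerSet_of_forall_succ (fun i j hx => ⟨?_, fun h => hx.2 ?_⟩)
    (fun i j hx => ⟨?_, fun h => hx.2 ?_⟩)
  · exact isLowerSet_cells n (show (i, j) ≤ (i, j + 1) from ⟨le_rfl, Nat.le_succ _⟩) hx.1
  · exact hD.right_mem hmax h hx.1
  · exact isLowerSet_cells n (show (i, j) ≤ (i + 1, j) from ⟨Nat.le_succ _, le_rfl⟩) hx.1
  · exact hD.below_mem hmax h hx.1

end IsRibbonDecomp

lemma hAddSpin_zero_iff : HAddSpin e 0 s l n ↔ cells l = cells n ∧ s = 0 := by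
  constructor
  · rintro ⟨hsub, R, c, hU, -, -, rfl⟩
    refine ⟨hsub.antisymm fun x hx => by_contra fun hxl => ?_, by simp⟩
    have : x ∈ ⋃ i : Fin 0, R i := hU ▸ ⟨hx, hxl⟩
    simp at this
  · rintro ⟨h, rfl⟩
    exact ⟨h.le, Fin.elim0, Fin.elim0, by simp [h], fun i => i.elim0, fun i => i.elim0, by simp⟩

/-- The ribbon whose head lies on the highest diagonal can be removed first. -/
lemma HAddSpin.exists_addsRibbon (h : HAddSpin e (m + 1) s l n) :
    ∃ u s₁ s₂, HAddSpin e m s₁ l u ∧ AddsRibbon e s₂ l u n ∧ s = s₁ + s₂ := by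
  obtain ⟨hsub, R, c, hU, hdisj, hrib, rfl⟩ := h
  have hD : IsRibbonDecomp e l n R c := ⟨hU, hdisj, hrib⟩
  obtain ⟨i₀, -, hmax⟩ := exists_max_image univ (fun i => content (c i 0)) univ_nonempty
  obtain ⟨u, hu⟩ := exists_cells_eq ((cells_finite n).subset Set.sdiff_subset)
    (hD.isLowerSet_diff fun i => hmax i (mem_univ i))
  have hR : R i₀ ⊆ cells n := fun x hx => (hD.subset i₀ hx).1
  refine ⟨u, _, _, ⟨fun x hx => ?_, fun j => R (i₀.succAbove j), fun j => c (i₀.succAbove j),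
    ?_, fun i j hij => hdisj (Fin.succAbove_right_injective.ne hij), fun j => hrib _, rfl⟩,
    ⟨hu ▸ Set.sdiff_subset, c i₀, ?_, (hrib i₀).2, rfl⟩,
    by rw [Fin.sum_univ_succAbove _ i₀, add_comm]⟩
  · rw [hu]
    exact ⟨hsub hx, fun h => (hD.subset i₀ h).2 hx⟩
  · rw [hu, Set.sdiff_sdiff_comm, hU]
    ext x
    simp only [Set.mem_sdiff, Set.mem_iUnion]
    constructor
    · rintro ⟨⟨i, hi⟩, hx0⟩
      obtain ⟨j, rfl⟩ := Fin.exists_succAbove_eq (show i ≠ i₀ by rintro rfl; exact hx0 hi)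
      exact ⟨j, hi⟩
    · rintro ⟨j, hj⟩
      exact ⟨⟨_, hj⟩, Set.disjoint_left.1 (hdisj (Fin.succAbove_ne i₀ j)) hj⟩
  · rw [hu, Set.sdiff_sdiff_cancel_left hR]
    exact (hrib i₀).1

lemma HAddSpin.succ_of_addsRibbon {u : Partition'} {s₁ s₂ : ℕ} (h₁ : HAddSpin e m s₁ l u)
    (h₂ : AddsRibbon e s₂ l u n) : HAddSpin e (m + 1) (s₁ + s₂) l n := by
  obtain ⟨hlu, R, c, hU, hdisj, hrib, rfl⟩ := h₁
  obtain ⟨hun, c₀, hc₀, hhead, rfl⟩ := h₂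
  have hnew : ∀ j, Disjoint (cells n \ cells u) (R j) := fun j =>
    Set.disjoint_left.2 fun x hx hxR => hx.2 ((hU ▸ Set.mem_iUnion.2 ⟨j, hxR⟩ :
      x ∈ cells u \ cells l).1)
  refine ⟨hlu.trans hun, Fin.cons (cells n \ cells u) R, Fin.cons c₀ c, ?_, ?_, ?_, ?_⟩
  · rw [← Set.sdiff_union_sdiff_cancel hun hlu, hU]
    ext x
    simp
  · intro i j hij
    cases i using Fin.cases <;> cases j using Fin.cases
    · exact absurd rfl hij
    · exact hnew _
    · exact (hnew _).symm
    · exact hdisj fun h => hij (congrArg Fin.succ h)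
  · intro i
    cases i using Fin.cases
    · exact ⟨hc₀, hhead⟩
    · exact hrib _
  · rw [Fin.sum_univ_succ, add_comm]
    simp

lemma hAddSpin_succ_iff : HAddSpin e (m + 1) s l n ↔
    ∃ u s₁ s₂, HAddSpin e m s₁ l u ∧ AddsRibbon e s₂ l u n ∧ s = s₁ + s₂ :=
  ⟨HAddSpin.exists_addsRibbon, fun ⟨_, _, _, h₁, h₂, hs⟩ => hs ▸ h₁.succ_of_addsRibbon h₂⟩

end RibbonDecomp

lemma hAddSpin_iff_beadMoves {e k : ℕ} (he : 1 ≤ e) {l : Partition'} (hl : l.length ≤ k) :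
    ∀ {m s n}, n.length ≤ k →
      (HAddSpin e m s l n ↔ BeadMoves e (betaSet l k) m (betaSet n k) s)
  | 0, s, n, hn => by
    rw [hAddSpin_zero_iff, BeadMoves, cells_eq_iff_betaSet_eq hl hn, eq_comm]
  | m + 1, s, n, hn => by
    rw [hAddSpin_succ_iff, BeadMoves]
    constructor
    · rintro ⟨u, s₁, s₂, h₁, h₂, rfl⟩
      have hu := (length_le_length_of_cells_subset h₂.1).trans hn
      exact ⟨_, s₁, s₂, (hAddSpin_iff_beadMoves he hl hu).1 h₁,
        (addsRibbon_iff_beadStep he hu hn).1 h₂, rfl⟩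
    · rintro ⟨C, s₁, s₂, h₁, h₂, rfl⟩
      obtain ⟨u, hu, rfl⟩ := exists_betaSet_eq (h₁.card_eq.trans (card_betaSet l k))
      exact ⟨u, s₁, s₂, (hAddSpin_iff_beadMoves he hl hu).2 h₁,
        (addsRibbon_iff_beadStep he hu hn).2 h₂, rfl⟩

lemma insRunner_strictMono {e : ℕ} (he : 1 ≤ e) (α : ℕ) : StrictMono (insRunner e α) := by
  intro p q hpq
  have hp := Nat.mod_lt p (show 0 < e by omega)
  have hq := Nat.mod_lt q (show 0 < e by omega)
  have h1 := Nat.div_add_mod p e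
  have h2 := Nat.div_add_mod q e
  have hdiv : p / e ≤ q / e := Nat.div_le_div_right hpq.le
  rw [insRunner, insRunner]
  rcases hdiv.lt_or_eq with hlt | heq
  · have := Nat.mul_le_mul_right (e + 1) (Nat.succ_le_of_lt hlt)
    rw [Nat.succ_mul] at this
    split_ifs <;> omega
  · rw [heq] at h1 ⊢
    split_ifs <;> nlinarith

lemma insRunner_add_self {e : ℕ} (he : 1 ≤ e) (α p : ℕ) :
    insRunner e α (p + e) = insRunner e α p + (e + 1) := by
  rw [insRunner, insRunner, Nat.add_div_right _ (by omega), Nat.add_mod_right, Nat.succ_mul]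
  omega

end Partition'

open Abacus

open Partition'

theorem hadd_iff_plus_hadd_general (e α k m : ℕ) (he : 2 ≤ e)
    (l n lp np : Partition') (hl : l.length ≤ k) (hn : n.length ≤ k)
    (hlp : IsPlus e α k l lp) (hnp : IsPlus e α k n np) :
    (HAdd e m l n ↔ HAdd (e + 1) m lp np) ∧
    (∀ s, HAddSpin e m s l n ↔ HAddSpin (e + 1) m s lp np) := by
  have he1 : 1 ≤ e := by omega
  have hf := insRunner_strictMono he1 α
  have key : ∀ s, HAddSpin e m s l n ↔ HAddSpin (e + 1) m s lp np := fun s => by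
    rw [hAddSpin_iff_beadMoves he1 hl hn, hAddSpin_iff_beadMoves (by omega) hlp.1 hnp.1,
      hlp.2, hnp.2, beadMoves_image_iff hf (insRunner_add_self he1 α)]
    constructor
    · exact fun h => ⟨_, rfl, h⟩
    · rintro ⟨C, hC, h⟩
      rwa [image_injective hf.injective hC]
  exact ⟨exists_congr key, key⟩

/-- `λ →_{m:e} ν` iff `λ⁺ →_{m:e+1} ν⁺`, and the total spins agree. -/
theorem hadd_iff_plus_hadd (e α k m : ℕ) (he : 2 ≤ e) (hα : α ≤ e)
    (l n lp np : Partition') (hl : l.length ≤ k) (hn : n.length ≤ k)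
    (hlp : IsPlus e α k l lp) (hnp : IsPlus e α k n np) :
    (HAdd e m l n ↔ HAdd (e + 1) m lp np) ∧
    (∀ s, HAddSpin e m s l n ↔ HAddSpin (e + 1) m s lp np) :=
  hadd_iff_plus_hadd_general e α k m he l n lp np hl hn hlp hnp
end
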